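/- arXiv:2507.15374 — 7 statements merged into one kernel-verified Lean document; each statement's English description precedes it below -/
import Mathlib

section
/- For every symmetric real n×n matrix S, there exists a unique diagonal matrix D such that exp(D+S) is a full-rank correlation matrix (i.e., exp(D+S) is symmetric positive definite with all diagonal entries equal to 1). -/
open Matrix BigOperators

/-- Matrix exponential. -/
noncomputable def mexp {n : ℕ} (A : Matrix (Fin n) (Fin n) ℝ) : Matrix (Fin n) (Fin n) ℝ :=
  NormedSpace.exp A

/-- Full-rank correlation matrices: SPD with unit diagonal. -/
def IsCorr {n : ℕ} (C : Matrix (Fin n) (Fin n) ℝ) : Prop :=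
  C.PosDef ∧ ∀ i, C i i = 1

/-- Hollow symmetric matrices: symmetric with zero diagonal. -/
def IsHollow {n : ℕ} (X : Matrix (Fin n) (Fin n) ℝ) : Prop :=
  X.IsSymm ∧ ∀ i, X i i = 0

/-- Symmetric matrices with zero row sums. -/
def IsRow0 {n : ℕ} (Y : Matrix (Fin n) (Fin n) ℝ) : Prop :=
  Y.IsSymm ∧ ∀ i, ∑ j, Y i j = 0

open Classical in
/-- Principal matrix logarithm of a real SPD matrix: the unique symmetric matrix whose
matrix exponential is the given matrix (junk value `0` when no such matrix exists). -/
noncomputable def mlog {n : ℕ} (A : Matrix (Fin n) (Fin n) ℝ) : Matrix (Fin n) (Fin n) ℝ :=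
  if h : ∃ S : Matrix (Fin n) (Fin n) ℝ, S.IsSymm ∧ mexp S = A then h.choose else 0

/-- Zero out the diagonal of a matrix. -/
def off {n : ℕ} (S : Matrix (Fin n) (Fin n) ℝ) : Matrix (Fin n) (Fin n) ℝ :=
  Matrix.of fun i j => if i = j then 0 else S i j

namespace AH

open NormedSpace

variable {n : ℕ}

/-- Spectral decomposition packaged for real symmetric matrices. -/
lemma spec (X : Matrix (Fin n) (Fin n) ℝ) (hX : X.IsSymm) :
    ∃ (U : Matrix (Fin n) (Fin n) ℝ) (lam : Fin n → ℝ),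
      U * Uᵀ = 1 ∧ Uᵀ * U = 1 ∧ X = U * Matrix.diagonal lam * Uᵀ ∧
      mexp X = U * Matrix.diagonal (fun i => Real.exp (lam i)) * Uᵀ := by
  have hX' : X.IsHermitian := by
    rw [Matrix.IsHermitian, Matrix.conjTranspose_eq_transpose_of_trivial]; exact hX
  set U : Matrix (Fin n) (Fin n) ℝ := (hX'.eigenvectorUnitary : Matrix (Fin n) (Fin n) ℝ) with hU
  have hstar : star U = Uᵀ := by
    rw [Matrix.star_eq_conjTranspose, Matrix.conjTranspose_eq_transpose_of_trivial]
  have hmem := (hX'.eigenvectorUnitary).2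
  rw [Unitary.mem_iff] at hmem
  have h2 : Uᵀ * U = 1 := by rw [← hstar]; exact hmem.1
  have h1 : U * Uᵀ = 1 := by rw [← hstar]; exact hmem.2
  have h3 : X = U * Matrix.diagonal hX'.eigenvalues * Uᵀ := by
    have := hX'.spectral_theorem
    rw [Unitary.conjStarAlgAut_apply, ← hU, hstar] at this
    simpa using this
  refine ⟨U, hX'.eigenvalues, h1, h2, h3, ?_⟩
  have hinv : U⁻¹ = Uᵀ := Matrix.inv_eq_right_inv h1
  have hunit : IsUnit U := ⟨⟨U, Uᵀ, h1, h2⟩, rfl⟩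
  rw [mexp]
  conv_lhs => rw [h3, ← hinv]
  rw [Matrix.exp_conj U _ hunit, Matrix.exp_diagonal, hinv]
  have he : NormedSpace.exp hX'.eigenvalues = fun i => Real.exp (hX'.eigenvalues i) := by
    funext i
    rw [Real.exp_eq_exp_ℝ]
    exact Pi.coe_exp _ i
  rw [he]

/-- quadratic trace formula -/
lemma trace_quad (W : Matrix (Fin n) (Fin n) ℝ) (a b : Fin n → ℝ) :
    Matrix.trace (Matrix.diagonal a * W * Matrix.diagonal b * Wᵀ)
      = ∑ p, ∑ q, a p * b q * (W p q)^2 := by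
  have hentry : ∀ p q, (Matrix.diagonal a * W * Matrix.diagonal b) p q = a p * W p q * b q := by
    intro p q
    rw [Matrix.mul_diagonal, Matrix.diagonal_mul]
  have hdiag : ∀ p, (Matrix.diagonal a * W * Matrix.diagonal b * Wᵀ) p p
      = ∑ q, a p * b q * (W p q)^2 := by
    intro p
    rw [Matrix.mul_apply]
    refine Finset.sum_congr rfl fun q _ => ?_
    rw [hentry p q, Matrix.transpose_apply]
    ring
  simp only [Matrix.trace, Matrix.diag]
  exact Finset.sum_congr rfl fun p _ => hdiag p

lemma trace_conj_quad (U V W : Matrix (Fin n) (Fin n) ℝ) (a b : Fin n → ℝ)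
    (hW : W = Uᵀ * V) (hV : V * Vᵀ = 1) :
    Matrix.trace ((U * Matrix.diagonal a * Uᵀ) * (V * Matrix.diagonal b * Vᵀ))
      = ∑ p, ∑ q, a p * b q * (W p q)^2 := by
  have h1 : (U * Matrix.diagonal a * Uᵀ) * (V * Matrix.diagonal b * Vᵀ)
      = U * (Matrix.diagonal a * Uᵀ * (V * Matrix.diagonal b * Vᵀ)) := by
    simp only [mul_assoc]
  rw [h1, Matrix.trace_mul_comm]
  have h2 : Matrix.diagonal a * Uᵀ * (V * Matrix.diagonal b * Vᵀ) * U
      = Matrix.diagonal a * W * Matrix.diagonal b * Wᵀ := by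
    subst hW
    rw [Matrix.transpose_mul, Matrix.transpose_transpose]
    simp only [mul_assoc]
  rw [h2, trace_quad]

/-- Strict monotonicity of the matrix exponential wrt the trace inner product. -/
lemma key_mono {X Y : Matrix (Fin n) (Fin n) ℝ} (hX : X.IsSymm) (hY : Y.IsSymm)
    (hXY : X ≠ Y) :
    0 < Matrix.trace ((mexp X - mexp Y) * (X - Y)) := by
  obtain ⟨U, lam, hU1, hU2, hXd, hXe⟩ := spec X hX
  obtain ⟨V, mu, hV1, hV2, hYd, hYe⟩ := spec Y hY
  set W := Uᵀ * V with hW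
  have hWt : Vᵀ * U = Wᵀ := by rw [hW, Matrix.transpose_mul, Matrix.transpose_transpose]
  have hWWt : W * Wᵀ = 1 := by
    rw [hW, Matrix.transpose_mul, Matrix.transpose_transpose, mul_assoc,
      ← mul_assoc V Vᵀ U, hV1, one_mul, hU2]
  have hWtW : Wᵀ * W = 1 := by
    rw [hW, Matrix.transpose_mul, Matrix.transpose_transpose, mul_assoc,
      ← mul_assoc U Uᵀ V, hU1, one_mul, hV2]
  have hrow : ∀ p, ∑ q, (W p q)^2 = 1 := by
    intro p
    have h := Matrix.ext_iff.mpr hWWt p p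
    rw [Matrix.mul_apply] at h
    simpa [Matrix.transpose_apply, Matrix.one_apply_eq, sq] using h
  have hcol : ∀ q, ∑ p, (W p q)^2 = 1 := by
    intro q
    have h := Matrix.ext_iff.mpr hWtW q q
    rw [Matrix.mul_apply] at h
    simpa [Matrix.transpose_apply, Matrix.one_apply_eq, sq, mul_comm] using h
  have collapse : ∀ c d : Fin n → ℝ,
      (∑ p, ∑ q, c p * d q * ((1 : Matrix (Fin n) (Fin n) ℝ) p q)^2) = ∑ p, c p * d p := by
    intro c d
    refine Finset.sum_congr rfl fun p _ => ?_
    rw [Finset.sum_eq_single p (fun q _ hq => by simp [Matrix.one_apply_ne' hq])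
      (fun h => absurd (Finset.mem_univ p) h)]
    simp [Matrix.one_apply_eq]
  have expand_row : ∀ c : Fin n → ℝ, (∑ p, c p) = ∑ p, ∑ q, (W p q)^2 * c p := by
    intro c
    refine Finset.sum_congr rfl fun p _ => ?_
    rw [← Finset.sum_mul, hrow p, one_mul]
  have expand_col : ∀ c : Fin n → ℝ, (∑ q, c q) = ∑ p, ∑ q, (W p q)^2 * c q := by
    intro c
    rw [Finset.sum_comm]
    refine Finset.sum_congr rfl fun q _ => ?_
    rw [← Finset.sum_mul, hcol q, one_mul]
  -- the four trace terms
  have T1 : Matrix.trace (mexp X * X) = ∑ p, Real.exp (lam p) * lam p := by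
    conv_lhs => rw [hXe]
    conv_lhs => rw [hXd]
    rw [trace_conj_quad U U (Uᵀ * U) _ _ rfl hU1, hU2, collapse]
  have T4 : Matrix.trace (mexp Y * Y) = ∑ p, Real.exp (mu p) * mu p := by
    conv_lhs => rw [hYe]
    conv_lhs => rw [hYd]
    rw [trace_conj_quad V V (Vᵀ * V) _ _ rfl hV1, hV2, collapse]
  have T2 : Matrix.trace (mexp X * Y) = ∑ p, ∑ q, (W p q)^2 * (Real.exp (lam p) * mu q) := by
    conv_lhs => rw [hXe, hYd]
    rw [trace_conj_quad U V W _ _ hW hV1]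
    exact Finset.sum_congr rfl fun p _ => Finset.sum_congr rfl fun q _ => by ring
  have T3 : Matrix.trace (mexp Y * X) = ∑ p, ∑ q, (W p q)^2 * (Real.exp (mu q) * lam p) := by
    conv_lhs => rw [hYe, hXd]
    rw [trace_conj_quad V U Wᵀ _ _ hWt.symm hU1]
    rw [Finset.sum_comm]
    exact Finset.sum_congr rfl fun p _ => Finset.sum_congr rfl fun q _ => by
      rw [Matrix.transpose_apply]; ring
  have comb : ∀ f g : Fin n → Fin n → ℝ,
      ((∑ p, ∑ q, f p q) - ∑ p, ∑ q, g p q) = ∑ p, ∑ q, (f p q - g p q) := by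
    intro f g
    rw [← Finset.sum_sub_distrib]
    exact Finset.sum_congr rfl fun p _ => (Finset.sum_sub_distrib _ _).symm
  have key : Matrix.trace ((mexp X - mexp Y) * (X - Y))
      = ∑ p, ∑ q, (W p q)^2 * ((Real.exp (lam p) - Real.exp (mu q)) * (lam p - mu q)) := by
    rw [Matrix.sub_mul, Matrix.mul_sub, Matrix.mul_sub, Matrix.trace_sub, Matrix.trace_sub,
      Matrix.trace_sub, T1, T2, T3, T4]
    rw [expand_row (fun p => Real.exp (lam p) * lam p),
      expand_col (fun q => Real.exp (mu q) * mu q), comb, comb, comb]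
    exact Finset.sum_congr rfl fun p _ => Finset.sum_congr rfl fun q _ => by ring
  have hFnn : ∀ p q, 0 ≤ (W p q)^2 * ((Real.exp (lam p) - Real.exp (mu q)) * (lam p - mu q)) := by
    intro p q
    refine mul_nonneg (sq_nonneg _) ?_
    rcases le_total (lam p) (mu q) with h | h
    · have := Real.exp_le_exp.mpr h
      nlinarith
    · have := Real.exp_le_exp.mpr h
      nlinarith
  rw [key]
  have hnn : 0 ≤ ∑ p, ∑ q, (W p q)^2 * ((Real.exp (lam p) - Real.exp (mu q)) * (lam p - mu q)) :=
    Finset.sum_nonneg fun p _ => Finset.sum_nonneg fun q _ => hFnn p q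
  rcases hnn.lt_or_eq with h | h
  · exact h
  exfalso
  -- all terms vanish
  have hz : ∀ p, ∀ q, (W p q)^2 * ((Real.exp (lam p) - Real.exp (mu q)) * (lam p - mu q)) = 0 := by
    have h1 := (Finset.sum_eq_zero_iff_of_nonneg
      (fun p _ => Finset.sum_nonneg fun q _ => hFnn p q)).mp h.symm
    intro p q
    have h2 := (Finset.sum_eq_zero_iff_of_nonneg (fun q _ => hFnn p q)).mp
      (h1 p (Finset.mem_univ p))
    exact h2 q (Finset.mem_univ q)
  have hzero : ∀ p q, (lam p - mu q) * W p q = 0 := by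
    intro p q
    rcases mul_eq_zero.mp (hz p q) with h' | h'
    · rw [pow_eq_zero_iff (two_ne_zero)] at h'
      rw [h', mul_zero]
    · rcases mul_eq_zero.mp h' with h'' | h''
      · have : lam p = mu q := Real.exp_eq_exp.mp (by linarith)
        rw [this, sub_self, zero_mul]
      · rw [sub_eq_zero.mp h'', sub_self, zero_mul]
  have hDW : Matrix.diagonal lam * W = W * Matrix.diagonal mu := by
    ext p q
    rw [Matrix.diagonal_mul, Matrix.mul_diagonal]
    linear_combination hzero p q
  apply hXY
  have hXV : X * V = Y * V := by
    rw [hXd, hYd]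
    calc U * Matrix.diagonal lam * Uᵀ * V = U * (Matrix.diagonal lam * W) := by
          rw [hW]; simp only [mul_assoc]
      _ = U * (W * Matrix.diagonal mu) := by rw [hDW]
      _ = U * Uᵀ * V * Matrix.diagonal mu := by rw [hW]; simp only [mul_assoc]
      _ = V * Matrix.diagonal mu := by rw [hU1, one_mul]
      _ = V * Matrix.diagonal mu * (Vᵀ * V) := by rw [hV2, mul_one]
      _ = V * Matrix.diagonal mu * Vᵀ * V := by simp only [mul_assoc]
  calc X = X * (V * Vᵀ) := by rw [hV1, mul_one]
    _ = X * V * Vᵀ := by rw [mul_assoc]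
    _ = Y * V * Vᵀ := by rw [hXV]
    _ = Y * (V * Vᵀ) := by rw [mul_assoc]
    _ = Y := by rw [hV1, mul_one]

/-- `mexp` of a symmetric matrix is positive definite. -/
lemma posDef_mexp {X : Matrix (Fin n) (Fin n) ℝ} (hX : X.IsSymm) : (mexp X).PosDef := by
  obtain ⟨U, lam, hU1, hU2, _, hXe⟩ := spec X hX
  refine Matrix.posDef_iff_dotProduct_mulVec.mpr ⟨?_, ?_⟩
  · rw [Matrix.IsHermitian, Matrix.conjTranspose_eq_transpose_of_trivial]
    exact Matrix.IsSymm.exp hX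
  · intro x hx
    set y := Uᵀ *ᵥ x with hy
    have hy0 : y ≠ 0 := by
      intro h
      apply hx
      have hxy : U *ᵥ y = x := by
        rw [hy, Matrix.mulVec_mulVec, hU1, Matrix.one_mulVec]
      rw [← hxy, h, Matrix.mulVec_zero]
    have hsx : star x = x := star_trivial x
    have hquad : star x ⬝ᵥ ((U * Matrix.diagonal (fun i => Real.exp (lam i)) * Uᵀ) *ᵥ x)
        = ∑ i, Real.exp (lam i) * (y i)^2 := by
      rw [hsx]
      rw [show (U * Matrix.diagonal (fun i => Real.exp (lam i)) * Uᵀ) *ᵥ x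
          = U *ᵥ (Matrix.diagonal (fun i => Real.exp (lam i)) *ᵥ y) by
        rw [hy, Matrix.mulVec_mulVec, Matrix.mulVec_mulVec]]
      rw [dotProduct_mulVec]
      have hvm : x ᵥ* U = y := by
        rw [hy, ← Matrix.vecMul_transpose, Matrix.transpose_transpose]
      rw [hvm]
      simp only [dotProduct, Matrix.mulVec_diagonal]
      exact Finset.sum_congr rfl fun i _ => by ring
    rw [hXe, hquad]
    obtain ⟨i, hi⟩ := Function.ne_iff.mp hy0
    refine Finset.sum_pos' (fun i _ => by positivity) ⟨i, Finset.mem_univ i, ?_⟩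
    exact mul_pos (Real.exp_pos _) (pow_two_pos_of_ne_zero hi)

/-- Diagonal entries of `mexp X` dominate `exp` of diagonal entries (Jensen). -/
lemma diag_mexp_ge {X : Matrix (Fin n) (Fin n) ℝ} (hX : X.IsSymm) (i : Fin n) :
    Real.exp (X i i) ≤ mexp X i i := by
  obtain ⟨U, lam, hU1, hU2, hXd, hXe⟩ := spec X hX
  have hrow : ∑ p, (U i p)^2 = 1 := by
    have h := Matrix.ext_iff.mpr hU1 i i
    rw [Matrix.mul_apply] at h
    simpa [Matrix.transpose_apply, Matrix.one_apply_eq, sq] using h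
  have hXii : X i i = ∑ p, (U i p)^2 • lam p := by
    conv_lhs => rw [hXd]
    rw [Matrix.mul_apply]
    refine Finset.sum_congr rfl fun p _ => ?_
    rw [Matrix.mul_diagonal, Matrix.transpose_apply, smul_eq_mul]
    ring
  have hEii : mexp X i i = ∑ p, (U i p)^2 • Real.exp (lam p) := by
    conv_lhs => rw [hXe]
    rw [Matrix.mul_apply]
    refine Finset.sum_congr rfl fun p _ => ?_
    rw [Matrix.mul_diagonal, Matrix.transpose_apply, smul_eq_mul]
    ring
  rw [hXii, hEii]
  exact convexOn_exp.map_sum_le (fun p _ => sq_nonneg _) hrow (fun p _ => Set.mem_univ _)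

section Deriv

attribute [local instance] Matrix.linftyOpNormedRing Matrix.linftyOpNormedAlgebra

/-- trace as a continuous linear map -/
noncomputable def trCLM (n : ℕ) : Matrix (Fin n) (Fin n) ℝ →L[ℝ] ℝ :=
  LinearMap.toContinuousLinearMap (Matrix.traceLinearMap (Fin n) ℝ ℝ)

@[simp] lemma trCLM_apply (M : Matrix (Fin n) (Fin n) ℝ) : trCLM n M = Matrix.trace M := rfl

/-- trace of `· * B` as a continuous linear map -/
noncomputable def trBCLM (B : Matrix (Fin n) (Fin n) ℝ) : Matrix (Fin n) (Fin n) ℝ →L[ℝ] ℝ :=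
  LinearMap.toContinuousLinearMap
    ((Matrix.traceLinearMap (Fin n) ℝ ℝ).comp (LinearMap.mulRight ℝ B))

@[simp] lemma trBCLM_apply (B M : Matrix (Fin n) (Fin n) ℝ) :
    trBCLM B M = Matrix.trace (M * B) := rfl

lemma hasDerivAt_matpow (A B : Matrix (Fin n) (Fin n) ℝ) (k : ℕ) (t : ℝ) :
    HasDerivAt (fun s : ℝ => (A + s • B)^k)
      (∑ j ∈ Finset.range k, (A + t • B)^j * B * (A + t • B)^(k-1-j)) t := by
  induction k with
  | zero =>
    simp only [pow_zero, Finset.range_zero, Finset.sum_empty]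
    exact hasDerivAt_const t (1 : Matrix (Fin n) (Fin n) ℝ)
  | succ k ih =>
    have hf : HasDerivAt (fun s : ℝ => A + s • B) B t := by
      have h0 := ((hasDerivAt_id t).smul_const B).const_add A
      simp only [id_eq, one_smul] at h0
      exact h0
    have h := ih.mul hf
    have heq : ((fun s : ℝ => (A + s • B)^k) * fun s => A + s • B) = fun s => (A + s • B)^(k+1) := by
      funext s; rw [Pi.mul_apply, ← pow_succ]
    rw [heq] at h
    refine h.congr_deriv (Eq.symm ?_)
    rw [Finset.sum_range_succ]
    congr 1
    · rw [Finset.sum_mul]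
      refine Finset.sum_congr rfl fun j hj => ?_
      have hj' : k - 1 - j + 1 = k - j := by
        have := Finset.mem_range.mp hj; omega
      have hj'' : k + 1 - 1 - j = k - j := by omega
      rw [hj'']
      conv_rhs => rw [mul_assoc, ← pow_succ, hj']
    · simp

lemma hasDerivAt_trace_pow (A B : Matrix (Fin n) (Fin n) ℝ) (k : ℕ) (t : ℝ) :
    HasDerivAt (fun s : ℝ => Matrix.trace ((A + s • B)^k))
      ((k : ℝ) * Matrix.trace ((A + t • B)^(k-1) * B)) t := by
  have h := (trCLM n).hasFDerivAt.comp_hasDerivAt t (hasDerivAt_matpow A B k t)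
  have hval : trCLM n (∑ j ∈ Finset.range k, (A + t • B)^j * B * (A + t • B)^(k-1-j))
      = (k : ℝ) * Matrix.trace ((A + t • B)^(k-1) * B) := by
    rw [map_sum]
    have hterm : ∀ j ∈ Finset.range k,
        trCLM n ((A + t • B)^j * B * (A + t • B)^(k-1-j))
          = Matrix.trace ((A + t • B)^(k-1) * B) := by
      intro j hj
      have hjk : k - 1 - j + j = k - 1 := by
        have := Finset.mem_range.mp hj; omega
      rw [trCLM_apply, Matrix.trace_mul_cycle, ← pow_add, hjk]
    rw [Finset.sum_congr rfl hterm, Finset.sum_const, Finset.card_range, nsmul_eq_mul]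
  replace h := h.congr_deriv hval
  exact h

/-- derivative of `t ↦ trace (mexp (A + t • B))`. -/
lemma hasDerivAt_trace_mexp (A B : Matrix (Fin n) (Fin n) ℝ) (t : ℝ) :
    HasDerivAt (fun s : ℝ => Matrix.trace (mexp (A + s • B)))
      (Matrix.trace (mexp (A + t • B) * B)) t := by
  set g : ℕ → ℝ → ℝ := fun k s => ((k.factorial : ℝ))⁻¹ * Matrix.trace ((A + s • B)^k) with hg
  set g' : ℕ → ℝ → ℝ := fun k s =>
    ((k.factorial : ℝ))⁻¹ * ((k : ℝ) * Matrix.trace ((A + s • B)^(k-1) * B)) with hg'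
  have hsum_exp : ∀ s : ℝ, Summable fun k : ℕ => ((k.factorial : ℝ))⁻¹ • (A + s • B)^k :=
    fun s => NormedSpace.expSeries_summable' (𝕂 := ℝ) (A + s • B)
  have htsum : ∀ s : ℝ, Matrix.trace (mexp (A + s • B)) = ∑' k, g k s := by
    intro s
    rw [mexp, NormedSpace.exp_eq_tsum ℝ, ← trCLM_apply, (trCLM n).map_tsum (hsum_exp s)]
    exact tsum_congr fun k => by rw [_root_.map_smul, trCLM_apply, smul_eq_mul]
  -- bounds
  set r : ℝ := ‖A‖ + (|t| + 1) * ‖B‖ with hr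
  have hr0 : 0 ≤ r := by positivity
  obtain ⟨C, hCpos, hCb⟩ :=
    SemilinearMapClass.bound_of_continuous (trCLM n).toLinearMap (trCLM n).continuous
  have hC0 : 0 ≤ C := hCpos.le
  set u : ℕ → ℝ := fun k => ((k.factorial : ℝ))⁻¹ * ((k : ℝ) * (C * (r^(k-1) * ‖B‖))) with hu_def
  have hu : Summable u := by
    have hs : Summable (fun k : ℕ => C * ‖B‖ * ((2*(r+1))^k / k.factorial)) :=
      (Real.summable_pow_div_factorial _).mul_left _
    refine Summable.of_nonneg_of_le (fun k => by positivity) (fun k => ?_) hs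
    have h1 : (k : ℝ) ≤ 2^k := by exact_mod_cast (Nat.lt_two_pow_self (n := k)).le
    have h2 : r^(k-1) ≤ (r+1)^k :=
      le_trans (pow_le_pow_left₀ hr0 (by linarith) _)
        (pow_le_pow_right₀ (by linarith) (Nat.sub_le k 1))
    have key : (k : ℝ) * r^(k-1) ≤ (2*(r+1))^k := by
      calc (k : ℝ) * r^(k-1) ≤ 2^k * (r+1)^k :=
            mul_le_mul h1 h2 (by positivity) (by positivity)
        _ = (2*(r+1))^k := (mul_pow _ _ _).symm
    have hkfac : (0 : ℝ) < k.factorial := by exact_mod_cast k.factorial_pos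
    rw [hu_def]
    calc ((k.factorial : ℝ))⁻¹ * ((k : ℝ) * (C * (r^(k-1) * ‖B‖)))
        = (C * ‖B‖) * (((k : ℝ) * r^(k-1)) / k.factorial) := by ring
      _ ≤ (C * ‖B‖) * ((2*(r+1))^k / k.factorial) := by
          apply mul_le_mul_of_nonneg_left _ (by positivity)
          simp only [div_eq_mul_inv]
          exact mul_le_mul_of_nonneg_right key (by positivity)
  have hgd : ∀ k : ℕ, ∀ s : ℝ, s ∈ Metric.ball t 1 → HasDerivAt (g k) (g' k s) s :=
    fun k s _ => (hasDerivAt_trace_pow A B k s).const_mul _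
  have hg'le : ∀ k : ℕ, ∀ s : ℝ, s ∈ Metric.ball t 1 → ‖g' k s‖ ≤ u k := by
    intro k s hs
    have hsb : |s| ≤ |t| + 1 := by
      have h1 : |s - t| < 1 := by
        have := Metric.mem_ball.mp hs
        rwa [Real.dist_eq] at this
      calc |s| = |t + (s - t)| := by ring_nf
        _ ≤ |t| + |s - t| := abs_add_le _ _
        _ ≤ |t| + 1 := by linarith
    have hM : ‖A + s • B‖ ≤ r := by
      calc ‖A + s • B‖ ≤ ‖A‖ + ‖s • B‖ := norm_add_le _ _
        _ = ‖A‖ + |s| * ‖B‖ := by rw [norm_smul, Real.norm_eq_abs]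
        _ ≤ r := by
            have := mul_le_mul_of_nonneg_right hsb (norm_nonneg B)
            rw [hr]; linarith
    have hMk : ‖(A + s • B)^(k-1) * B‖ ≤ r^(k-1) * ‖B‖ := by
      rcases Nat.eq_zero_or_pos (k-1) with h0 | hpos
      · rw [h0, pow_zero, pow_zero, one_mul, one_mul]
      · calc ‖(A + s • B)^(k-1) * B‖ ≤ ‖(A + s • B)^(k-1)‖ * ‖B‖ := norm_mul_le _ _
          _ ≤ ‖A + s • B‖^(k-1) * ‖B‖ :=
              mul_le_mul_of_nonneg_right (norm_pow_le' _ hpos) (norm_nonneg _)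
          _ ≤ r^(k-1) * ‖B‖ :=
              mul_le_mul_of_nonneg_right (pow_le_pow_left₀ (norm_nonneg _) hM _) (norm_nonneg _)
    have htr : |Matrix.trace ((A + s • B)^(k-1) * B)| ≤ C * (r^(k-1) * ‖B‖) := by
      calc |Matrix.trace ((A + s • B)^(k-1) * B)| = ‖trCLM n ((A + s • B)^(k-1) * B)‖ := by
            rw [trCLM_apply, Real.norm_eq_abs]
        _ ≤ C * ‖(A + s • B)^(k-1) * B‖ := hCb _
        _ ≤ C * (r^(k-1) * ‖B‖) := mul_le_mul_of_nonneg_left hMk hC0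
    rw [hg', hu_def]
    rw [Real.norm_eq_abs, abs_mul, abs_mul]
    have hkfac : |((k.factorial : ℝ))⁻¹| = ((k.factorial : ℝ))⁻¹ := by
      rw [abs_of_nonneg]; positivity
    have hk : |(k : ℝ)| = (k : ℝ) := by rw [abs_of_nonneg]; positivity
    rw [hkfac, hk]
    apply mul_le_mul_of_nonneg_left _ (by positivity)
    exact mul_le_mul_of_nonneg_left htr (by positivity)
  have hg0 : Summable fun k => g k t := by
    have h1 : Summable fun k : ℕ => trCLM n (((k.factorial : ℝ))⁻¹ • (A + t • B)^k) :=
      ((hsum_exp t).map (trCLM n).toLinearMap.toAddMonoidHom (trCLM n).continuous)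
    refine h1.congr fun k => ?_

    rw [_root_.map_smul, trCLM_apply, smul_eq_mul]
  have main := hasDerivAt_tsum_of_isPreconnected hu Metric.isOpen_ball
    (convex_ball t 1).isPreconnected hgd hg'le (Metric.mem_ball_self one_pos) hg0
    (Metric.mem_ball_self one_pos)
  have hsummg' : Summable fun k => g' k t :=
    Summable.of_norm_bounded hu (fun k => hg'le k t (Metric.mem_ball_self one_pos))
  have hval : (∑' k, g' k t) = Matrix.trace (mexp (A + t • B) * B) := by
    rw [hsummg'.tsum_eq_zero_add]
    have h0 : g' 0 t = 0 := by simp [hg']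
    rw [h0, zero_add]
    have hshift : (fun k : ℕ => g' (k+1) t)
        = fun k : ℕ => trBCLM B (((k.factorial : ℝ))⁻¹ • (A + t • B)^k) := by
      funext k
      rw [_root_.map_smul, trBCLM_apply, hg']
      have hfac : ((k+1).factorial : ℝ) = ((k:ℝ)+1) * k.factorial := by
        rw [Nat.factorial_succ]; push_cast; ring
      have hk1 : ((k:ℝ)+1) ≠ 0 := by positivity
      have hkf : ((k.factorial : ℝ)) ≠ 0 := by
        exact_mod_cast k.factorial_ne_zero
      simp only [Nat.add_sub_cancel, smul_eq_mul]
      rw [hfac]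
      push_cast
      field_simp
    rw [hshift, ← (trBCLM B).map_tsum (hsum_exp t)]
    rw [trBCLM_apply, mexp, NormedSpace.exp_eq_tsum ℝ]
  have hfun : (fun s : ℝ => Matrix.trace (mexp (A + s • B))) = fun s => ∑' k, g k s :=
    funext htsum
  rw [hfun, ← hval]
  exact main

end Deriv

lemma trace_mul_diagonal (C : Matrix (Fin n) (Fin n) ℝ) (v : Fin n → ℝ) :
    Matrix.trace (C * Matrix.diagonal v) = ∑ p, C p p * v p := by
  simp only [Matrix.trace, Matrix.diag]
  exact Finset.sum_congr rfl fun p _ => Matrix.mul_diagonal _ _ _ _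

/-- Uniqueness part. -/
lemma corr_unique {S D₁ D₂ : Matrix (Fin n) (Fin n) ℝ} (hS : S.IsSymm)
    (hD₁ : D₁.IsDiag) (hD₂ : D₂.IsDiag)
    (h₁ : IsCorr (mexp (D₁ + S))) (h₂ : IsCorr (mexp (D₂ + S))) : D₁ = D₂ := by
  by_contra hne
  have hX : (D₁ + S).IsSymm := by
    rw [Matrix.IsSymm, Matrix.transpose_add, hS, hD₁.isSymm]
  have hY : (D₂ + S).IsSymm := by
    rw [Matrix.IsSymm, Matrix.transpose_add, hS, hD₂.isSymm]
  have hXY : D₁ + S ≠ D₂ + S := fun h => hne (add_right_cancel h)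
  have hpos := key_mono hX hY hXY
  have hsub : D₁ + S - (D₂ + S) = D₁ - D₂ := by abel
  have hdiagsub : (D₁ - D₂).IsDiag := hD₁.sub hD₂
  have hdd : D₁ - D₂ = Matrix.diagonal (D₁ - D₂).diag := hdiagsub.diagonal_diag.symm
  have htr : ∀ C : Matrix (Fin n) (Fin n) ℝ, (∀ i, C i i = 1) →
      Matrix.trace (C * (D₁ - D₂)) = ∑ p, (D₁ - D₂).diag p := by
    intro C hC
    conv_lhs => rw [hdd]
    rw [trace_mul_diagonal]
    exact Finset.sum_congr rfl fun p _ => by rw [hC p, one_mul]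
  rw [hsub, Matrix.sub_mul, Matrix.trace_sub, htr _ h₁.2, htr _ h₂.2, sub_self] at hpos
  exact lt_irrefl 0 hpos

end AH

/-- Archakov–Hansen: for every symmetric `S` there is a unique diagonal `D` with
`exp (D + S)` a full-rank correlation matrix. -/
theorem stmt0 (n : ℕ) (S : Matrix (Fin n) (Fin n) ℝ) (hS : S.IsSymm) :
    ∃! D : Matrix (Fin n) (Fin n) ℝ, D.IsDiag ∧ IsCorr (mexp (D + S)) := by
  rcases Nat.eq_zero_or_pos n with hn | hn
  · -- trivial case n = 0
    subst hn
    refine ⟨0, ⟨Matrix.isDiag_zero, ?_, fun i => i.elim0⟩, fun y _ => Subsingleton.elim y 0⟩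
    constructor
    · exact Subsingleton.elim _ _
    · intro x hx
      exact absurd (Subsingleton.elim x 0) hx
  haveI : Nonempty (Fin n) := ⟨⟨0, hn⟩⟩
  -- the objective function
  set f : (Fin n → ℝ) → ℝ :=
    fun d => Matrix.trace (mexp (Matrix.diagonal d + S)) - ∑ i, d i with hf
  have hsymm : ∀ d : Fin n → ℝ, (Matrix.diagonal d + S).IsSymm := by
    intro d
    rw [Matrix.IsSymm, Matrix.transpose_add, Matrix.diagonal_transpose, hS]
  have hcont : Continuous f := by
    have h1 : Continuous fun d : Fin n → ℝ => Matrix.diagonal d + S :=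
      (continuous_id.matrix_diagonal).add continuous_const
    have h2 : Continuous fun M : Matrix (Fin n) (Fin n) ℝ => mexp M := by
      letI := Matrix.linftyOpNormedRing (α := ℝ) (n := Fin n)
      letI := Matrix.linftyOpNormedAlgebra (α := ℝ) (n := Fin n) (R := ℝ)
      haveI : CompleteSpace (Matrix (Fin n) (Fin n) ℝ) := FiniteDimensional.complete ℝ _
      letI := Matrix.linftyOpNormedAlgebra (α := ℝ) (n := Fin n) (R := ℚ)
      exact NormedSpace.exp_continuous
    exact ((h2.comp h1).matrix_trace).sub
      (continuous_finset_sum _ fun i _ => continuous_apply i)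
  -- lower bound via Jensen
  have hlow : ∀ d : Fin n → ℝ, (∑ i, (Real.exp (d i + S i i) - d i)) ≤ f d := by
    intro d
    have h1 : ∀ i, Real.exp (d i + S i i) ≤ mexp (Matrix.diagonal d + S) i i := by
      intro i
      have h := AH.diag_mexp_ge (hsymm d) i
      simpa [Matrix.add_apply, Matrix.diagonal_apply_eq] using h
    have h2 : Matrix.trace (mexp (Matrix.diagonal d + S))
        = ∑ i, mexp (Matrix.diagonal d + S) i i := rfl
    rw [hf]
    simp only [h2]
    rw [Finset.sum_sub_distrib]
    exact sub_le_sub_right (Finset.sum_le_sum fun i _ => h1 i) _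
  -- coercivity constants
  set K : ℝ := 1 + ∑ i, |S i i| with hK
  have hK1 : 1 ≤ K := by
    have : 0 ≤ ∑ i, |S i i| := Finset.sum_nonneg fun i _ => abs_nonneg _
    linarith
  have hKS : ∀ i, |S i i| ≤ K - 1 := by
    intro i
    have := Finset.single_le_sum (f := fun i => |S i i|)
      (fun j _ => abs_nonneg _) (Finset.mem_univ i)
    linarith
  set T : ℝ := f 0 - ((n : ℝ) - 1) * (1 - K) with hT
  set a : ℝ := |T| + K + 1 with ha
  have ha1 : 1 ≤ a := by
    have := abs_nonneg T; linarith
  set R : ℝ := 3 * a with hR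
  -- eventual bound
  have hclaim : ∀ d : Fin n → ℝ, R < ‖d‖ → f 0 ≤ f d := by
    intro d hd
    obtain ⟨j, hj⟩ : ∃ j, ∀ i, |d i| ≤ |d j| := by
      obtain ⟨j, -, hj⟩ := Finset.exists_max_image Finset.univ (fun i => |d i|)
        ⟨Classical.arbitrary (Fin n), Finset.mem_univ _⟩
      exact ⟨j, fun i => hj i (Finset.mem_univ i)⟩
    have hdj : R < |d j| := by
      have : ‖d‖ ≤ |d j| := by
        apply pi_norm_le_iff_of_nonneg (abs_nonneg _) |>.mpr
        intro i
        rw [Real.norm_eq_abs]; exact hj i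
      linarith
    -- lower bound for each summand
    have hterm : ∀ i, 1 - K ≤ Real.exp (d i + S i i) - d i := by
      intro i
      have h1 := Real.add_one_le_exp (d i + S i i)
      have h2 := hKS i
      have h3 := neg_abs_le (S i i)
      linarith
    -- bound for the max term
    have htermj : T ≤ Real.exp (d j + S j j) - d j := by
      rcases le_total (d j) 0 with hsgn | hsgn
      · have h1 := (Real.exp_pos (d j + S j j)).le
        have h2 : R < -(d j) := by rwa [abs_of_nonpos hsgn] at hdj
        have h3 : |T| ≥ T := le_abs_self T
        rw [hR] at h2
        nlinarith
      · have h2 : R < d j := by rwa [abs_of_nonneg hsgn] at hdj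
        set y : ℝ := d j - K with hy
        have hKa : K ≤ a := by
          rw [ha]; have := abs_nonneg T; linarith
        have hy0 : 2 * a ≤ y := by rw [hy]; linarith
        have e2 : y/2 + 1 ≤ Real.exp (y/2) := Real.add_one_le_exp (y/2)
        have e3 : Real.exp (y/2) * Real.exp (y/2) = Real.exp y := by
          rw [← Real.exp_add]; ring_nf
        have e5 : (y/2+1) * (y/2+1) ≤ Real.exp y := by
          rw [← e3]
          exact mul_le_mul e2 e2 (by linarith) (Real.exp_pos _).le
        have e4 : Real.exp y ≤ Real.exp (d j + S j j) := by
          apply Real.exp_le_exp.mpr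
          have h3 := neg_abs_le (S j j)
          have h2 := hKS j
          rw [hy]; linarith
        have h3 : |T| ≥ T := le_abs_self T
        nlinarith
    -- combine
    have hsum : T + ((n:ℝ) - 1) * (1 - K) ≤ ∑ i, (Real.exp (d i + S i i) - d i) := by
      rw [← Finset.sum_erase_add Finset.univ _ (Finset.mem_univ j)]
      have hcard : ((Finset.univ.erase j).card : ℝ) = (n : ℝ) - 1 := by
        rw [Finset.card_erase_of_mem (Finset.mem_univ j), Finset.card_univ, Fintype.card_fin]
        have : (1:ℕ) ≤ n := hn
        push_cast [Nat.cast_sub this]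
        ring
      have h1 : ((Finset.univ.erase j).card : ℝ) * (1 - K)
          ≤ ∑ i ∈ Finset.univ.erase j, (Real.exp (d i + S i i) - d i) := by
        rw [← nsmul_eq_mul]
        exact Finset.card_nsmul_le_sum _ _ _ fun i _ => hterm i
      rw [hcard] at h1
      linarith
    have := hlow d
    rw [hT] at hsum
    linarith
  -- existence of a global minimiser
  obtain ⟨dbar, hdbar⟩ := hcont.exists_forall_le' 0 (by
    rw [Filter.eventually_iff, Filter.mem_cocompact]
    refine ⟨Metric.closedBall 0 R, isCompact_closedBall _ _, fun x hx => ?_⟩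
    simp only [Set.mem_compl_iff, Metric.mem_closedBall, dist_zero_right, not_le] at hx
    exact hclaim x hx)
  -- first-order conditions
  set M : Matrix (Fin n) (Fin n) ℝ := Matrix.diagonal dbar + S with hM
  have hMsymm : M.IsSymm := hsymm dbar
  have hdiag1 : ∀ i, mexp M i i = 1 := by
    intro i
    set e : Fin n → ℝ := Pi.single i 1 with he
    set Bi : Matrix (Fin n) (Fin n) ℝ := Matrix.diagonal e with hBi
    have hline : ∀ t : ℝ, f (dbar + t • e)
        = Matrix.trace (mexp (M + t • Bi)) - (∑ k, dbar k) - t := by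
      intro t
      simp only [hf]
      have h1 : Matrix.diagonal (dbar + t • e) + S = M + t • Bi := by
        ext p q
        by_cases hpq : p = q
        · subst hpq
          simp only [hM, hBi, Matrix.add_apply, Matrix.smul_apply, Pi.add_apply,
            Pi.smul_apply, Matrix.diagonal_apply_eq, smul_eq_mul]
          ring
        · simp [hM, hBi, Matrix.add_apply, Matrix.diagonal_apply_ne _ hpq]
      have h2 : ∑ k, (dbar + t • e) k = (∑ k, dbar k) + t := by
        simp only [Pi.add_apply, Pi.smul_apply, smul_eq_mul]
        rw [Finset.sum_add_distrib, ← Finset.mul_sum, he]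
        rw [Finset.sum_pi_single']
        simp
      rw [h1, h2]
      ring
    have hDer : HasDerivAt (fun t : ℝ => f (dbar + t • e))
        (Matrix.trace (mexp (M + (0:ℝ) • Bi) * Bi) - 1) 0 := by
      have h := ((AH.hasDerivAt_trace_mexp M Bi 0).sub_const (∑ k, dbar k)).sub
        (hasDerivAt_id (0:ℝ))
      have hfun : (fun t : ℝ => Matrix.trace (mexp (M + t • Bi)) - (∑ k, dbar k) - t)
          = fun t : ℝ => f (dbar + t • e) := by
        funext t; rw [hline t]
      rw [← hfun]
      exact h
    have hloc : IsLocalMin (fun t : ℝ => f (dbar + t • e)) 0 := by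
      apply Filter.Eventually.of_forall
      intro t
      have h0 : dbar + (0:ℝ) • e = dbar := by simp
      simp only [h0]
      exact hdbar _
    have hz := hloc.hasDerivAt_eq_zero hDer
    have hz' : Matrix.trace (mexp M * Bi) = 1 := by
      have h0 : M + (0:ℝ) • Bi = M := by simp
      rw [h0] at hz
      linarith
    rw [hBi, AH.trace_mul_diagonal] at hz'
    rw [he] at hz'
    have : (∑ p, mexp M p p * (Pi.single i 1 : Fin n → ℝ) p) = mexp M i i := by
      rw [Finset.sum_eq_single i]
      · simp
      · intro p _ hp
        simp [Pi.single_apply, hp]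
      · intro h; exact absurd (Finset.mem_univ i) h
    rw [this] at hz'
    exact hz'
  -- conclusion
  refine ⟨Matrix.diagonal dbar, ⟨Matrix.isDiag_diagonal dbar,
    AH.posDef_mexp hMsymm, hdiag1⟩, ?_⟩
  intro D' hD'
  exact AH.corr_unique hS hD'.1 (Matrix.isDiag_diagonal dbar) hD'.2
    ⟨AH.posDef_mexp hMsymm, hdiag1⟩
end

section
/- For every symmetric positive definite n×n matrix Σ, there exists a unique positive diagonal matrix Δ such that log(ΔΣΔ) is a symmetric matrix with all row sums equal to zero. -/
open Matrix BigOperators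

lemma quad_lb {n : ℕ} {Sg : Matrix (Fin n) (Fin n) ℝ} (hSg : Sg.PosDef) :
    ∃ c > 0, ∀ x : Fin n → ℝ, c * ∑ i, (x i)^2 ≤ x ⬝ᵥ (Sg *ᵥ x) := by
  rcases Nat.eq_zero_or_pos n with hn | hn
  · subst hn
    exact ⟨1, one_pos, fun x => by simp [dotProduct]⟩
  have hcontQ : Continuous fun x : Fin n → ℝ => x ⬝ᵥ (Sg *ᵥ x) := by
    unfold dotProduct mulVec
    exact continuous_finset_sum _ fun i _ =>
      ((continuous_apply i).mul (continuous_finset_sum _ fun j _ =>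
        (continuous_const.mul (continuous_apply j))))
  have hcontN : Continuous fun x : Fin n → ℝ => ∑ i, (x i)^2 :=
    continuous_finset_sum _ fun i _ => (continuous_apply i).pow 2
  set K : Set (Fin n → ℝ) := {x | ∑ i, (x i)^2 = 1} with hK
  have hKc : IsCompact K := by
    apply Metric.isCompact_of_isClosed_isBounded
    · exact isClosed_eq hcontN continuous_const
    · rw [Metric.isBounded_iff_subset_closedBall 0]
      refine ⟨1, fun x hx => ?_⟩
      simp only [Metric.mem_closedBall, dist_zero_right]
      rw [pi_norm_le_iff_of_nonneg zero_le_one]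
      intro i
      have h1 : (x i)^2 ≤ 1 := by
        rw [← hx]
        exact Finset.single_le_sum (f := fun j => (x j)^2)
          (fun j _ => sq_nonneg _) (Finset.mem_univ i)
      rw [Real.norm_eq_abs]
      exact (sq_le_one_iff_abs_le_one (x i)).mp h1
  have hne : K.Nonempty := by
    refine ⟨Pi.single ⟨0, hn⟩ 1, ?_⟩
    simp [hK, Pi.single_apply]
  obtain ⟨x₀, hx₀K, hx₀min⟩ := hKc.exists_isMinOn hne hcontQ.continuousOn
  have hx₀ne : x₀ ≠ 0 := by
    intro h
    rw [h] at hx₀K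
    simp [hK] at hx₀K
  have hc : 0 < x₀ ⬝ᵥ (Sg *ᵥ x₀) := by
    have := hSg.dotProduct_mulVec_pos hx₀ne
    simpa using this
  refine ⟨x₀ ⬝ᵥ (Sg *ᵥ x₀), hc, fun x => ?_⟩
  rcases eq_or_ne x 0 with rfl | hx
  · simp [dotProduct]
  · have hs : 0 < ∑ i, (x i)^2 := by
      have : ∃ i, x i ≠ 0 := by
        by_contra h
        push_neg at h
        exact hx (funext h)
      obtain ⟨i, hi⟩ := this
      exact Finset.sum_pos' (fun j _ => sq_nonneg _)
        ⟨i, Finset.mem_univ i, by positivity⟩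
    set r : ℝ := Real.sqrt (∑ i, (x i)^2) with hr
    have hrpos : 0 < r := Real.sqrt_pos.mpr hs
    have hr2 : r^2 = ∑ i, (x i)^2 := Real.sq_sqrt hs.le
    have hy : (r⁻¹ • x) ∈ K := by
      simp only [hK, Set.mem_setOf_eq, Pi.smul_apply, smul_eq_mul, mul_pow]
      rw [← Finset.mul_sum, ← hr2]
      field_simp
    have hQ : (r⁻¹ • x) ⬝ᵥ (Sg *ᵥ (r⁻¹ • x)) = r⁻¹ * (r⁻¹ * (x ⬝ᵥ (Sg *ᵥ x))) := by
      rw [mulVec_smul, dotProduct_smul, smul_dotProduct]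
      simp [smul_eq_mul]
    have hmin := hx₀min hy
    simp only [IsMinOn, IsMinFilter] at hmin
    have this2 : x₀ ⬝ᵥ (Sg *ᵥ x₀) ≤ r⁻¹ * (r⁻¹ * (x ⬝ᵥ (Sg *ᵥ x))) := by
      have := hx₀min hy
      rw [isMinOn_iff] at hx₀min
      have := hx₀min _ hy
      rwa [hQ] at this
    have h2 : (x₀ ⬝ᵥ (Sg *ᵥ x₀)) * r^2 ≤ x ⬝ᵥ (Sg *ᵥ x) := by
      have hr2pos : (0:ℝ) < r^2 := by positivity
      have := mul_le_mul_of_nonneg_right this2 hr2pos.le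
      calc (x₀ ⬝ᵥ (Sg *ᵥ x₀)) * r^2 ≤ r⁻¹ * (r⁻¹ * (x ⬝ᵥ (Sg *ᵥ x))) * r^2 := this
        _ = x ⬝ᵥ (Sg *ᵥ x) := by
            have hrne : r ≠ 0 := hrpos.ne'
            rw [sq]
            field_simp
    rw [← hr2]
    linarith

lemma scaling_unique {n : ℕ} {Sg : Matrix (Fin n) (Fin n) ℝ} (hSg : Sg.PosDef)
    {d e : Fin n → ℝ} (hd : ∀ i, 0 < d i) (he : ∀ i, 0 < e i)
    (hd1 : ∀ i, d i * (Sg *ᵥ d) i = 1) (he1 : ∀ i, e i * (Sg *ᵥ e) i = 1) : d = e := by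
  have hSd : ∀ i, (Sg *ᵥ d) i = 1 / d i := fun i => by
    rw [eq_div_iff (hd i).ne', mul_comm]; exact hd1 i
  have hSe : ∀ i, (Sg *ᵥ e) i = 1 / e i := fun i => by
    rw [eq_div_iff (he i).ne', mul_comm]; exact he1 i
  set t : Fin n → ℝ := fun i => (d i - e i)^2 / (d i * e i) with ht
  have htnn : ∀ i, 0 ≤ t i := fun i =>
    div_nonneg (sq_nonneg _) (mul_pos (hd i) (he i)).le
  have key : (d - e) ⬝ᵥ (Sg *ᵥ (d - e)) = -∑ i, t i := by
    rw [mulVec_sub]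
    unfold dotProduct
    rw [← Finset.sum_neg_distrib]
    refine Finset.sum_congr rfl fun i _ => ?_
    have h1 : (Sg *ᵥ d - Sg *ᵥ e) i = 1 / d i - 1 / e i := by
      simp [hSd i, hSe i]
    rw [Pi.sub_apply d e, h1, ht]
    have hdi := (hd i).ne'
    have hei := (he i).ne'
    field_simp
    ring
  have hnn : 0 ≤ (d - e) ⬝ᵥ (Sg *ᵥ (d - e)) := by
    have := hSg.posSemidef.dotProduct_mulVec_nonneg (d - e)
    simpa using this
  have hsum0 : ∑ i, t i = 0 := by
    have h1 : ∑ i, t i ≤ 0 := by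
      rw [key] at hnn; linarith
    exact le_antisymm h1 (Finset.sum_nonneg fun i _ => htnn i)
  have hti : ∀ i, t i = 0 := by
    intro i
    have := (Finset.sum_eq_zero_iff_of_nonneg (fun j _ => htnn j)).mp hsum0 i (Finset.mem_univ i)
    exact this
  funext i
  have h0 := hti i
  rw [ht] at h0
  have := (div_eq_zero_iff.mp h0).resolve_right (mul_pos (hd i) (he i)).ne'
  have := pow_eq_zero_iff (n := 2) (by norm_num) |>.mp this
  linarith

lemma scaling_exists {n : ℕ} {Sg : Matrix (Fin n) (Fin n) ℝ} (hSg : Sg.PosDef) :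
    ∃ d : Fin n → ℝ, (∀ i, 0 < d i) ∧ ∀ i, d i * (Sg *ᵥ d) i = 1 := by
  classical
  obtain ⟨c, hc, hlb⟩ := quad_lb hSg
  have hsymm : ∀ j k, Sg j k = Sg k j := by
    intro j k
    have := hSg.1
    conv_lhs => rw [← this]
    simp [conjTranspose_apply]
  obtain ⟨g, hg⟩ : ∃ g : (Fin n → ℝ) → ℝ, ∀ u,
      g u = (∑ j, Real.exp (u j) * ∑ k, Sg j k * Real.exp (u k)) / 2 - ∑ j, u j :=
    ⟨_, fun _ => rfl⟩
  -- quadratic sum equals dot product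
  have hQeq : ∀ u : Fin n → ℝ, (∑ j, Real.exp (u j) * ∑ k, Sg j k * Real.exp (u k))
      = (fun k => Real.exp (u k)) ⬝ᵥ (Sg *ᵥ fun k => Real.exp (u k)) := by
    intro u
    simp [dotProduct, mulVec]
  -- pointwise coercivity bound
  have hpt : ∀ t : ℝ, |t| - 2/c ≤ c/2 * (Real.exp t * Real.exp t) - t := by
    intro t
    rcases le_or_gt t 0 with ht | ht
    · have h1 : 0 < Real.exp t * Real.exp t := by positivity
      have h2 : 0 < 2/c := by positivity
      rw [abs_of_nonpos ht]
      nlinarith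
    · rw [abs_of_pos ht]
      have he : 1 + t ≤ Real.exp t := by
        have := Real.add_one_le_exp t
        linarith
      have hexppos : (0:ℝ) < 1 + t := by linarith
      have h3 : (1+t)*(1+t) ≤ Real.exp t * Real.exp t :=
        mul_le_mul he he hexppos.le (Real.exp_pos t).le
      have key : 0 ≤ c/2 * ((1+t)*(1+t)) + 2/c - 2*t := by
        have h4 : 0 ≤ (c*t - 2)^2 := sq_nonneg _
        have h5 : c/2 * ((1+t)*(1+t)) + 2/c - 2*t
            = ((c*t-2)^2 + c^2 + 2*c^2*t) / (2*c) := by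
          field_simp
          ring
        rw [h5]
        positivity
      nlinarith
  -- coercivity of g
  have hcoer : ∀ u : Fin n → ℝ, (∑ j, |u j|) - n * (2/c) ≤ g u := by
    intro u
    have h1 : c * ∑ j, (Real.exp (u j))^2
        ≤ ∑ j, Real.exp (u j) * ∑ k, Sg j k * Real.exp (u k) := by
      rw [hQeq u]
      exact hlb _
    have h2 : ∑ j, (|u j| - 2/c) ≤ ∑ j, (c/2 * (Real.exp (u j) * Real.exp (u j)) - u j) :=
      Finset.sum_le_sum fun j _ => hpt (u j)
    have h3 : ∑ j, (|u j| - 2/c) = (∑ j, |u j|) - n * (2/c) := by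
      rw [Finset.sum_sub_distrib, Finset.sum_const, Finset.card_univ, Fintype.card_fin,
        nsmul_eq_mul]
    have h4 : ∑ j, (c/2 * (Real.exp (u j) * Real.exp (u j)) - u j)
        = c/2 * (∑ j, (Real.exp (u j))^2) - ∑ j, u j := by
      rw [Finset.sum_sub_distrib, ← Finset.mul_sum]
      congr 1
      congr 1
      refine Finset.sum_congr rfl fun j _ => ?_
      ring
    rw [h3, h4] at h2
    have : c/2 * (∑ j, (Real.exp (u j))^2) - ∑ j, u j ≤ g u := by
      rw [hg u]
      linarith
    linarith
  -- continuity of g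
  have hgcont : Continuous g := by
    have : g = fun u => (∑ j, Real.exp (u j) * ∑ k, Sg j k * Real.exp (u k)) / 2 - ∑ j, u j :=
      funext hg
    rw [this]
    apply Continuous.sub
    · apply Continuous.div_const
      exact continuous_finset_sum _ fun j _ =>
        ((Real.continuous_exp.comp (continuous_apply j)).mul
          (continuous_finset_sum _ fun k _ =>
            continuous_const.mul (Real.continuous_exp.comp (continuous_apply k))))
    · exact continuous_finset_sum _ fun j _ => continuous_apply j
  -- sublevel set compact
  set S : Set (Fin n → ℝ) := {u | g u ≤ g 0} with hS
  have hScl : IsClosed S := isClosed_le hgcont continuous_const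
  have hSb : Bornology.IsBounded S := by
    rw [Metric.isBounded_iff_subset_closedBall 0]
    refine ⟨g 0 + n * (2/c), fun u hu => ?_⟩
    simp only [Metric.mem_closedBall, dist_zero_right]
    have hub : ∀ j, |u j| ≤ g 0 + n * (2/c) := by
      intro j
      have h1 : |u j| ≤ ∑ k, |u k| :=
        Finset.single_le_sum (f := fun k => |u k|) (fun k _ => abs_nonneg _)
          (Finset.mem_univ j)
      have h2 := hcoer u
      have h3 : g u ≤ g 0 := hu
      calc |u j| ≤ ∑ k, |u k| := h1
        _ ≤ g u + n * (2/c) := by linarith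
        _ ≤ g 0 + n * (2/c) := by linarith
    have hRnn : 0 ≤ g 0 + n * (2/c) := by
      rcases Nat.eq_zero_or_pos n with hn | hn
      · subst hn
        have := hcoer 0
        simp at this
        simpa using this
      · exact le_trans (abs_nonneg _) (hub ⟨0, hn⟩)
    rw [pi_norm_le_iff_of_nonneg hRnn]
    intro j
    rw [Real.norm_eq_abs]
    exact hub j
  have hScompact : IsCompact S := Metric.isCompact_of_isClosed_isBounded hScl hSb
  have hSne : S.Nonempty := ⟨0, le_refl (g 0)⟩
  obtain ⟨u, huS, humin⟩ := hScompact.exists_isMinOn hSne hgcont.continuousOn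
  have hglobal : ∀ v, g u ≤ g v := by
    intro v
    by_cases hv : v ∈ S
    · exact isMinOn_iff.mp humin v hv
    · have : g 0 < g v := not_le.mp hv
      have : g u ≤ g 0 := huS
      linarith
  -- derivative condition at each coordinate
  refine ⟨fun i => Real.exp (u i), fun i => Real.exp_pos _, ?_⟩
  intro i
  set x : Fin n → ℝ := fun k => Real.exp (u k) with hx
  -- φ has global min at u i
  set φ : ℝ → ℝ := fun t =>
    (∑ j, Real.exp (Function.update u i t j)
      * ∑ k, Sg j k * Real.exp (Function.update u i t k)) / 2
      - ∑ j, Function.update u i t j with hφ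
  have hφg : ∀ t, φ t = g (Function.update u i t) := fun t => (hg _).symm
  have hlocmin : IsLocalMin φ (u i) := by
    apply Filter.Eventually.of_forall
    intro t
    have h5 : φ (u i) = g u := by rw [hφg]; simp [Function.update_eq_self]
    rw [h5, hφg]
    exact hglobal _
  -- derivative of φ
  have hupd : ∀ j, HasDerivAt (fun t => Function.update u i t j)
      (if j = i then 1 else 0) (u i) := by
    intro j
    simp only [Function.update_apply]
    by_cases hji : j = i
    · simp only [hji, if_true]
      exact hasDerivAt_id _
    · simp only [hji, if_false]
      exact hasDerivAt_const _ _
  have hupval : ∀ j, Function.update u i (u i) j = u j := by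
    intro j
    rw [Function.update_eq_self]
  have hexpj : ∀ j, HasDerivAt (fun t => Real.exp (Function.update u i t j))
      (Real.exp (u j) * (if j = i then 1 else 0)) (u i) := by
    intro j
    have := (hupd j).exp
    rwa [hupval j] at this
  have hsumk : ∀ j, HasDerivAt (fun t => ∑ k, Sg j k * Real.exp (Function.update u i t k))
      (∑ k, Sg j k * (Real.exp (u k) * (if k = i then 1 else 0))) (u i) := by
    intro j
    exact HasDerivAt.fun_sum fun k _ => (hexpj k).const_mul _
  have hprodj : ∀ j, HasDerivAt
      (fun t => Real.exp (Function.update u i t j)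
        * ∑ k, Sg j k * Real.exp (Function.update u i t k))
      ((Real.exp (u j) * (if j = i then 1 else 0)) * (∑ k, Sg j k * Real.exp (u k))
        + Real.exp (u j) * (∑ k, Sg j k * (Real.exp (u k) * (if k = i then 1 else 0))))
      (u i) := by
    intro j
    have := (hexpj j).mul (hsumk j)
    simpa only [hupval, Pi.mul_def] using this
  have hφderiv : HasDerivAt φ
      ((∑ j, ((Real.exp (u j) * (if j = i then 1 else 0)) * (∑ k, Sg j k * Real.exp (u k))
        + Real.exp (u j) * (∑ k, Sg j k * (Real.exp (u k) * (if k = i then 1 else 0))))) / 2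
        - ∑ j, (if j = i then (1:ℝ) else 0)) (u i) := by
    apply HasDerivAt.sub
    · exact (HasDerivAt.fun_sum fun j _ => hprodj j).div_const 2
    · exact HasDerivAt.fun_sum fun j _ => hupd j
  have hderiv0 := hlocmin.hasDerivAt_eq_zero hφderiv
  -- simplify the derivative expression
  have hB : ∀ j, ∑ k, Sg j k * (Real.exp (u k) * (if k = i then 1 else 0))
      = Sg j i * Real.exp (u i) := by
    intro j
    rw [Finset.sum_eq_single i]
    · simp
    · intro k _ hk
      simp [hk]
    · simp
  have hA : ∑ j, (Real.exp (u j) * (if j = i then 1 else 0)) * (∑ k, Sg j k * Real.exp (u k))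
      = Real.exp (u i) * ∑ k, Sg i k * Real.exp (u k) := by
    rw [Finset.sum_eq_single i]
    · simp
    · intro j _ hj
      simp [hj]
    · simp
  have hC : ∑ j, Real.exp (u j) * (Sg j i * Real.exp (u i))
      = Real.exp (u i) * ∑ k, Sg i k * Real.exp (u k) := by
    rw [Finset.mul_sum]
    refine Finset.sum_congr rfl fun j _ => ?_
    rw [hsymm j i]
    ring
  have hI : ∑ j, (if j = i then (1:ℝ) else 0) = 1 := by
    simp
  rw [Finset.sum_add_distrib, hA, hI] at hderiv0
  have hC2 : ∑ j, Real.exp (u j) * (∑ k, Sg j k * (Real.exp (u k) * (if k = i then 1 else 0)))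
      = Real.exp (u i) * ∑ k, Sg i k * Real.exp (u k) := by
    calc ∑ j, Real.exp (u j) * (∑ k, Sg j k * (Real.exp (u k) * (if k = i then 1 else 0)))
        = ∑ j, Real.exp (u j) * (Sg j i * Real.exp (u i)) := by
          refine Finset.sum_congr rfl fun j _ => ?_
          rw [hB j]
      _ = Real.exp (u i) * ∑ k, Sg i k * Real.exp (u k) := hC
  rw [hC2] at hderiv0
  have hfinal : Real.exp (u i) * (∑ k, Sg i k * Real.exp (u k)) = 1 := by
    have : (Real.exp (u i) * (∑ k, Sg i k * Real.exp (u k))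
      + Real.exp (u i) * (∑ k, Sg i k * Real.exp (u k))) / 2 - 1 = 0 := hderiv0
    linarith
  have hmv : (Sg *ᵥ x) i = ∑ k, Sg i k * Real.exp (u k) := by
    simp [mulVec, dotProduct, hx]
  rw [hmv]
  exact hfinal

section Spectral
variable {n : ℕ}

lemma ofReal_comp (f : Fin n → ℝ) : (RCLike.ofReal ∘ f : Fin n → ℝ) = f := by
  funext i
  simp [RCLike.ofReal]

lemma herm_iff_symm (M : Matrix (Fin n) (Fin n) ℝ) : M.IsHermitian ↔ M.IsSymm := by
  rw [Matrix.IsHermitian, Matrix.IsSymm, Matrix.conjTranspose_eq_transpose_of_trivial]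

lemma exp_unitary_conj_diag (V : Matrix.unitaryGroup (Fin n) ℝ) (v : Fin n → ℝ) :
    NormedSpace.exp ((V : Matrix (Fin n) (Fin n) ℝ) * Matrix.diagonal v * star (V : Matrix (Fin n) (Fin n) ℝ))
      = (V : Matrix (Fin n) (Fin n) ℝ) * Matrix.diagonal (fun i => Real.exp (v i)) * star (V : Matrix (Fin n) (Fin n) ℝ) := by
  have hstar : star (V : Matrix (Fin n) (Fin n) ℝ) * (V : Matrix (Fin n) (Fin n) ℝ) = 1 :=
    Unitary.coe_star_mul_self V
  have hinv : (V : Matrix (Fin n) (Fin n) ℝ)⁻¹ = star (V : Matrix (Fin n) (Fin n) ℝ) :=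
    Matrix.inv_eq_left_inv hstar
  have hunit : IsUnit (V : Matrix (Fin n) (Fin n) ℝ) :=
    isUnit_iff_exists.mpr ⟨star (V : Matrix (Fin n) (Fin n) ℝ),
      Unitary.coe_mul_star_self V, hstar⟩
  rw [← hinv, Matrix.exp_conj _ _ hunit, Matrix.exp_diagonal]
  have hev : NormedSpace.exp v = fun i => Real.exp (v i) := by
    funext i
    rw [Pi.coe_exp, ← Real.exp_eq_exp_ℝ]
  rw [hev]

lemma symm_exp_ones_iff {S : Matrix (Fin n) (Fin n) ℝ} (hs : S.IsSymm) :
    NormedSpace.exp S *ᵥ (fun _ => (1:ℝ)) = (fun _ => (1:ℝ)) ↔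
      S *ᵥ (fun _ => (1:ℝ)) = 0 := by
  have hH : S.IsHermitian := (herm_iff_symm S).mpr hs
  set V := hH.eigenvectorUnitary with hV
  set μ := hH.eigenvalues with hμ
  have hspec : S = (V : Matrix (Fin n) (Fin n) ℝ) * Matrix.diagonal μ * star (V : Matrix (Fin n) (Fin n) ℝ) := by
    have := hH.spectral_theorem
    rwa [ofReal_comp] at this
  have hexp : NormedSpace.exp S
      = (V : Matrix (Fin n) (Fin n) ℝ) * Matrix.diagonal (fun i => Real.exp (μ i)) * star (V : Matrix (Fin n) (Fin n) ℝ) := by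
    rw [hspec, exp_unitary_conj_diag]
  have hstarmul : star (V : Matrix (Fin n) (Fin n) ℝ) * (V : Matrix (Fin n) (Fin n) ℝ) = 1 :=
    Unitary.coe_star_mul_self V
  have hmulstar : (V : Matrix (Fin n) (Fin n) ℝ) * star (V : Matrix (Fin n) (Fin n) ℝ) = 1 :=
    Unitary.coe_mul_star_self V
  set o : Fin n → ℝ := fun _ => 1 with ho
  set w : Fin n → ℝ := star (V : Matrix (Fin n) (Fin n) ℝ) *ᵥ o with hw
  have hVinj : ∀ z z' : Fin n → ℝ,
      (V : Matrix (Fin n) (Fin n) ℝ) *ᵥ z = (V : Matrix (Fin n) (Fin n) ℝ) *ᵥ z' ↔ z = z' := by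
    intro z z'
    constructor
    · intro h
      have := congrArg (fun y => star (V : Matrix (Fin n) (Fin n) ℝ) *ᵥ y) h
      simpa [Matrix.mulVec_mulVec, hstarmul] using this
    · intro h; rw [h]
  have hoVw : (V : Matrix (Fin n) (Fin n) ℝ) *ᵥ w = o := by
    rw [hw, Matrix.mulVec_mulVec, hmulstar, Matrix.one_mulVec]
  have hSo : S *ᵥ o = (V : Matrix (Fin n) (Fin n) ℝ) *ᵥ (Matrix.diagonal μ *ᵥ w) := by
    rw [hw, Matrix.mulVec_mulVec, Matrix.mulVec_mulVec, hspec, Matrix.mul_assoc]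
  have hEo : NormedSpace.exp S *ᵥ o
      = (V : Matrix (Fin n) (Fin n) ℝ) *ᵥ (Matrix.diagonal (fun i => Real.exp (μ i)) *ᵥ w) := by
    rw [hw, Matrix.mulVec_mulVec, Matrix.mulVec_mulVec, hexp, Matrix.mul_assoc]
  have hiff1 : NormedSpace.exp S *ᵥ o = o ↔
      Matrix.diagonal (fun i => Real.exp (μ i)) *ᵥ w = w := by
    rw [hEo]
    conv_lhs => rw [← hoVw]
    exact hVinj _ _
  have hiff2 : S *ᵥ o = 0 ↔ Matrix.diagonal μ *ᵥ w = 0 := by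
    rw [hSo]
    have h0 : (0 : Fin n → ℝ) = (V : Matrix (Fin n) (Fin n) ℝ) *ᵥ 0 := (Matrix.mulVec_zero _).symm
    conv_lhs => rw [h0]
    exact hVinj _ _
  rw [hiff1, hiff2, funext_iff, funext_iff]
  apply forall_congr'
  intro i
  rw [Matrix.mulVec_diagonal, Matrix.mulVec_diagonal]
  rcases eq_or_ne (w i) 0 with hwi | hwi
  · simp [hwi]
  · constructor
    · intro h
      have h1 : Real.exp (μ i) = 1 := by
        have := mul_right_cancel₀ hwi (h.trans (one_mul (w i)).symm)
        exact this
      have h2 : μ i = 0 := Real.exp_injective (h1.trans Real.exp_zero.symm)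
      simp [h2]
    · intro h
      have h2 : μ i = 0 := by
        rcases mul_eq_zero.mp h with h' | h'
        · exact h'
        · exact absurd h' hwi
      simp [h2]

lemma posdef_log {A : Matrix (Fin n) (Fin n) ℝ} (hA : A.PosDef) :
    ∃ S : Matrix (Fin n) (Fin n) ℝ, S.IsSymm ∧ NormedSpace.exp S = A := by
  have hH : A.IsHermitian := hA.1
  set V := hH.eigenvectorUnitary with hV
  set lam := hH.eigenvalues with hlam
  have hspec : A = (V : Matrix (Fin n) (Fin n) ℝ) * Matrix.diagonal lam * star (V : Matrix (Fin n) (Fin n) ℝ) := by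
    have := hH.spectral_theorem
    rwa [ofReal_comp] at this
  refine ⟨(V : Matrix (Fin n) (Fin n) ℝ) * Matrix.diagonal (fun i => Real.log (lam i)) * star (V : Matrix (Fin n) (Fin n) ℝ), ?_, ?_⟩
  · rw [← herm_iff_symm]
    have hd : (Matrix.diagonal (fun i => Real.log (lam i))).IsHermitian := by
      rw [Matrix.IsHermitian, Matrix.diagonal_conjTranspose]
      congr 1
    rw [Matrix.star_eq_conjTranspose]
    exact Matrix.isHermitian_mul_mul_conjTranspose _ hd
  · rw [exp_unitary_conj_diag]
    have : (fun i => Real.exp (Real.log (lam i))) = lam := by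
      funext i
      exact Real.exp_log (hA.eigenvalues_pos i)
    rw [this, ← hspec]
end Spectral

section Helpers
variable {n : ℕ}

lemma scaled_mulVec_ones (Sg : Matrix (Fin n) (Fin n) ℝ) (d : Fin n → ℝ) :
    (Matrix.diagonal d * Sg * Matrix.diagonal d) *ᵥ (fun _ => (1:ℝ))
      = fun i => d i * (Sg *ᵥ d) i := by
  have h1 : Matrix.diagonal d *ᵥ (fun _ => (1:ℝ)) = d := by
    funext i
    rw [Matrix.mulVec_diagonal]
    ring
  calc (Matrix.diagonal d * Sg * Matrix.diagonal d) *ᵥ (fun _ => (1:ℝ))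
      = Matrix.diagonal d *ᵥ (Sg *ᵥ (Matrix.diagonal d *ᵥ (fun _ => (1:ℝ)))) := by
        rw [Matrix.mulVec_mulVec, Matrix.mulVec_mulVec, Matrix.mul_assoc]
    _ = Matrix.diagonal d *ᵥ (Sg *ᵥ d) := by rw [h1]
    _ = fun i => d i * (Sg *ᵥ d) i := by
        funext i
        rw [Matrix.mulVec_diagonal]

lemma scaled_posDef {Sg : Matrix (Fin n) (Fin n) ℝ} (hSg : Sg.PosDef)
    {d : Fin n → ℝ} (hd : ∀ i, 0 < d i) :
    (Matrix.diagonal d * Sg * Matrix.diagonal d).PosDef := by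
  have hdH : (Matrix.diagonal d)ᴴ = Matrix.diagonal d := by
    rw [Matrix.diagonal_conjTranspose]
    congr 1
  refine Matrix.PosDef.of_dotProduct_mulVec_pos ?_ ?_
  · have h := Matrix.isHermitian_mul_mul_conjTranspose (Matrix.diagonal d) hSg.1
    rwa [hdH] at h
  · intro x hx
    have hdec : (Matrix.diagonal d * Sg * Matrix.diagonal d) *ᵥ x
        = Matrix.diagonal d *ᵥ (Sg *ᵥ (Matrix.diagonal d *ᵥ x)) := by
      rw [Matrix.mulVec_mulVec, Matrix.mulVec_mulVec, Matrix.mul_assoc]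
    set y : Fin n → ℝ := fun i => d i * x i with hy
    have hdx : Matrix.diagonal d *ᵥ x = y := by
      funext i
      rw [Matrix.mulVec_diagonal]
    have hyne : y ≠ 0 := by
      intro h
      apply hx
      funext i
      have := congrFun h i
      simp only [hy, Pi.zero_apply] at this
      rcases mul_eq_zero.mp this with h' | h'
      · exact absurd h' (hd i).ne'
      · exact h'
    have hdot : dotProduct (star x) ((Matrix.diagonal d * Sg * Matrix.diagonal d) *ᵥ x)
        = dotProduct (star y) (Sg *ᵥ y) := by
      rw [hdec, hdx]
      unfold dotProduct
      refine Finset.sum_congr rfl fun i _ => ?_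
      rw [Matrix.mulVec_diagonal]
      simp only [Pi.star_apply, star_trivial, hy]
      ring
    rw [hdot]
    exact hSg.dotProduct_mulVec_pos hyne

end Helpers
/-- Marshall–Olkin/Johnson: for every SPD `Σ` there is a unique positive diagonal `Δ`
with `log (Δ Σ Δ)` symmetric with zero row sums. -/
theorem stmt1 (n : ℕ) (Sg : Matrix (Fin n) (Fin n) ℝ) (hSg : Sg.PosDef) :
    ∃! Δ : Matrix (Fin n) (Fin n) ℝ, Δ.IsDiag ∧ (∀ i, 0 < Δ i i) ∧
      ∃ S : Matrix (Fin n) (Fin n) ℝ, IsRow0 S ∧ mexp S = Δ * Sg * Δ := by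
  classical
  obtain ⟨d, hdpos, hd1⟩ := scaling_exists hSg
  refine ⟨Matrix.diagonal d, ⟨Matrix.isDiag_diagonal d, ?_, ?_⟩, ?_⟩
  · intro i
    rw [Matrix.diagonal_apply_eq]
    exact hdpos i
  · have hApos := scaled_posDef hSg hdpos
    obtain ⟨S, hSsymm, hSexp⟩ := posdef_log hApos
    have hA1 : (Matrix.diagonal d * Sg * Matrix.diagonal d) *ᵥ (fun _ => (1:ℝ))
        = fun _ => 1 := by
      rw [scaled_mulVec_ones]
      funext i
      exact hd1 i
    have hrow : S *ᵥ (fun _ => (1:ℝ)) = 0 := by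
      rw [← symm_exp_ones_iff hSsymm, hSexp]
      exact hA1
    refine ⟨S, ⟨hSsymm, fun i => ?_⟩, hSexp⟩
    have := congrFun hrow i
    simpa [Matrix.mulVec, dotProduct] using this
  · rintro Δ' ⟨hdiag, hpos, S', hrow0, hS'exp⟩
    obtain ⟨hS'symm, hS'row⟩ := hrow0
    have hΔ' : Matrix.diagonal Δ'.diag = Δ' := hdiag.diagonal_diag
    have hS'1 : S' *ᵥ (fun _ => (1:ℝ)) = 0 := by
      funext i
      simpa [Matrix.mulVec, dotProduct] using hS'row i
    have hexp1 : NormedSpace.exp S' *ᵥ (fun _ => (1:ℝ)) = fun _ => 1 :=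
      (symm_exp_ones_iff hS'symm).mpr hS'1
    have hA'1 : (Matrix.diagonal Δ'.diag * Sg * Matrix.diagonal Δ'.diag) *ᵥ (fun _ => (1:ℝ))
        = fun _ => 1 := by
      rw [hΔ', ← hS'exp]
      exact hexp1
    have hd'1 : ∀ i, Δ'.diag i * (Sg *ᵥ Δ'.diag) i = 1 := by
      intro i
      exact congrFun ((scaled_mulVec_ones Sg Δ'.diag).symm.trans hA'1) i
    have heq : Δ'.diag = d := scaling_unique hSg hpos hdpos hd'1 hd1
    rw [← hΔ', heq]
end

section
/- For n ≥ 4, the quadratic form q(X) = α·tr(X²) + β·𝟙ᵀX²𝟙 + γ·(𝟙ᵀX𝟙)² on the space of hollow symmetric matrices is positive definite if and only if α > 0, 2α + (n−2)β > 0, and α + (n−1)(β + nγ) > 0. -/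
open Matrix BigOperators

theorem trace_sq (n : ℕ) (X : Matrix (Fin n) (Fin n) ℝ) (h : X.IsSymm) :
    (X * X).trace = ∑ i, ∑ j, (X i j)^2 := by
  rw [Matrix.trace]
  simp only [Matrix.diag, Matrix.mul_apply]
  refine Finset.sum_congr rfl fun i _ => Finset.sum_congr rfl fun j _ => ?_
  rw [h.apply, sq]

theorem sum_mul_self (n : ℕ) (X : Matrix (Fin n) (Fin n) ℝ) (h : X.IsSymm) :
    ∑ i, ∑ j, (X * X) i j = ∑ k, (∑ j, X k j)^2 := by
  simp only [Matrix.mul_apply]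
  rw [Finset.sum_comm]
  calc ∑ j, ∑ i, ∑ k, X i k * X k j
      = ∑ j : Fin n, ∑ k, (∑ i, X i k) * X k j := by
        rw [Finset.sum_congr rfl fun j _ => Finset.sum_comm]
        simp [Finset.sum_mul]
    _ = ∑ k, (∑ j, X k j)^2 := by
        rw [Finset.sum_comm]
        refine Finset.sum_congr rfl fun k _ => ?_
        rw [← Finset.mul_sum, sq]
        congr 1
        exact Finset.sum_congr rfl fun i _ => h.apply _ _

theorem expandLem (n : ℕ) (X : Matrix (Fin n) (Fin n) ℝ) (h : X.IsSymm) (hd : ∀ i, X i i = 0)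
    (t : Fin n → ℝ) :
    ∑ i, ∑ j, (if i = j then (0:ℝ) else X i j - t i - t j)^2
      = ∑ i, ∑ j, (X i j)^2 - 4 * ∑ i, (∑ j, X i j) * t i
        + 2*((n:ℝ)-2) * ∑ i, (t i)^2 + 2*(∑ i, t i)^2 := by
  have key : ∀ i j, (if i = j then (0:ℝ) else X i j - t i - t j)^2
      = (X i j)^2 + (t i)^2 + (t j)^2 - 2*(X i j)*(t i) - 2*(X i j)*(t j)
        + 2*(t i)*(t j) - (if i = j then 4*(t i)^2 else 0) := by
    intro i j
    by_cases hij : i = j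
    · subst hij; simp [hd i]; ring
    · simp [hij]; ring
  simp only [key]
  have swap : ∑ i, ∑ j, (X i j) * t j = ∑ i, (∑ j, X i j) * t i := by
    rw [Finset.sum_comm]
    refine Finset.sum_congr rfl fun j _ => ?_
    rw [← Finset.sum_mul]
    congr 1
    exact Finset.sum_congr rfl fun i _ => h.apply _ _
  simp only [Finset.sum_add_distrib, Finset.sum_sub_distrib, Finset.sum_ite_eq,
    Finset.mem_univ, if_true, Finset.sum_const, Finset.card_univ, Fintype.card_fin,
    nsmul_eq_mul, ← Finset.sum_mul, ← Finset.mul_sum]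
  have h2 : ∑ x : Fin n, ∑ y : Fin n, 2 * X x y * t y
      = 2 * ∑ i, (∑ j, X i j) * t i := by
    rw [← swap, Finset.mul_sum]
    exact Finset.sum_congr rfl fun i _ => by
      rw [Finset.mul_sum]
      exact Finset.sum_congr rfl fun j _ => by ring
  have h3 : ∑ x : Fin n, (2 * ∑ i, X x i) * t x = 2 * ∑ i, (∑ j, X i j) * t i := by
    rw [Finset.mul_sum]
    exact Finset.sum_congr rfl fun i _ => by ring
  rw [h2, h3]
  ring

theorem rowsum_ineq (n : ℕ) (hn : 4 ≤ n) (X : Matrix (Fin n) (Fin n) ℝ) :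
    0 ≤ (n:ℝ)*(∑ k, (∑ j, X k j)^2) - (∑ i, ∑ j, X i j)^2 := by
  have hn4 : (4:ℝ) ≤ (n:ℝ) := by exact_mod_cast hn
  have hnn : (0:ℝ) < n := by linarith
  obtain ⟨s, hs⟩ : ∃ s : ℝ, s = ∑ i, ∑ j, X i j := ⟨_, rfl⟩
  obtain ⟨B, hB⟩ : ∃ B : ℝ, B = ∑ k, (∑ j, X k j)^2 := ⟨_, rfl⟩
  rw [← hs, ← hB]
  have h0 : 0 ≤ ∑ i, ((n:ℝ) * (∑ j, X i j) - s)^2 :=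
    Finset.sum_nonneg fun i _ => sq_nonneg _
  have hexp : ∑ i, ((n:ℝ) * (∑ j, X i j) - s)^2
      = (n:ℝ)^2 * B - 2*(n:ℝ)*s*s + (n:ℝ)*s^2 := by
    have hpt : ∀ i : Fin n, ((n:ℝ) * (∑ j, X i j) - s)^2
        = (n:ℝ)^2 * (∑ j, X i j)^2 - 2*(n:ℝ)*s*(∑ j, X i j) + s^2 := fun i => by ring
    rw [Finset.sum_congr rfl fun i _ => hpt i]
    rw [Finset.sum_add_distrib, Finset.sum_sub_distrib, ← Finset.mul_sum, ← Finset.mul_sum,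
      ← hB, ← hs, Finset.sum_const, Finset.card_univ, Fintype.card_fin, nsmul_eq_mul]
  rw [hexp] at h0
  nlinarith [h0, hnn]

theorem key_ineq (n : ℕ) (hn : 4 ≤ n) (X : Matrix (Fin n) (Fin n) ℝ)
    (h : X.IsSymm) (hd : ∀ i, X i i = 0) :
    0 ≤ (n:ℝ)*((n:ℝ)-1)*((n:ℝ)-2)*(∑ i, ∑ j, (X i j)^2)
        - 2*((n:ℝ)-1)*((n:ℝ)*(∑ k, (∑ j, X k j)^2) - (∑ i, ∑ j, X i j)^2)
        - ((n:ℝ)-2)*(∑ i, ∑ j, X i j)^2 := by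
  have hn4 : (4:ℝ) ≤ (n:ℝ) := by exact_mod_cast hn
  have hnn : (0:ℝ) < n := by linarith
  have hn1 : (0:ℝ) < (n:ℝ)-1 := by linarith
  have hn2 : (0:ℝ) < (n:ℝ)-2 := by linarith
  obtain ⟨s, hs⟩ : ∃ s : ℝ, s = ∑ i, ∑ j, X i j := ⟨_, rfl⟩
  obtain ⟨A, hA⟩ : ∃ A : ℝ, A = ∑ i, ∑ j, (X i j)^2 := ⟨_, rfl⟩
  obtain ⟨B, hB⟩ : ∃ B : ℝ, B = ∑ k, (∑ j, X k j)^2 := ⟨_, rfl⟩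
  obtain ⟨x, hx⟩ : ∃ x : ℝ, x = 1/((n:ℝ)-2) := ⟨_, rfl⟩
  obtain ⟨y, hy⟩ : ∃ y : ℝ, y = s/(2*(n:ℝ)*((n:ℝ)-1)) - s/((n:ℝ)*((n:ℝ)-2)) := ⟨_, rfl⟩
  obtain ⟨t, ht⟩ : ∃ t : Fin n → ℝ, t = fun i => x * (∑ j, X i j) + y := ⟨_, rfl⟩
  have htv : ∀ i, t i = x * (∑ j, X i j) + y := fun i => by rw [ht]
  have hL : 0 ≤ ∑ i, ∑ j, (if i = j then (0:ℝ) else X i j - t i - t j)^2 :=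
    Finset.sum_nonneg fun i _ => Finset.sum_nonneg fun j _ => sq_nonneg _
  rw [expandLem n X h hd t] at hL
  have hrt : ∑ i, (∑ j, X i j) * t i = x * B + y * s := by
    have hpt : ∀ i : Fin n, (∑ j, X i j) * t i
        = x * (∑ j, X i j)^2 + y * (∑ j, X i j) := fun i => by rw [htv i]; ring
    rw [Finset.sum_congr rfl fun i _ => hpt i, Finset.sum_add_distrib, ← Finset.mul_sum,
      ← Finset.mul_sum, ← hB, ← hs]
  have ht1 : ∑ i, t i = x*s + (n:ℝ)*y := by
    rw [Finset.sum_congr rfl fun i _ => htv i, Finset.sum_add_distrib, ← Finset.mul_sum,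
      ← hs, Finset.sum_const, Finset.card_univ, Fintype.card_fin, nsmul_eq_mul]
  have ht2 : ∑ i, (t i)^2 = x^2*B + 2*x*y*s + (n:ℝ)*y^2 := by
    have hpt : ∀ i : Fin n, (t i)^2
        = x^2 * (∑ j, X i j)^2 + 2*x*y*(∑ j, X i j) + y^2 := fun i => by rw [htv i]; ring
    rw [Finset.sum_congr rfl fun i _ => hpt i, Finset.sum_add_distrib, Finset.sum_add_distrib,
      ← Finset.mul_sum, ← Finset.mul_sum, ← hB, ← hs, Finset.sum_const, Finset.card_univ,
      Fintype.card_fin, nsmul_eq_mul]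
  rw [hrt, ht1, ht2, ← hA] at hL
  rw [← hs, ← hA, ← hB]
  have hiden : (n:ℝ)*((n:ℝ)-1)*((n:ℝ)-2)
      * (A - 4*(x*B + y*s) + 2*((n:ℝ)-2)*(x^2*B + 2*x*y*s + (n:ℝ)*y^2) + 2*(x*s+(n:ℝ)*y)^2)
      = (n:ℝ)*((n:ℝ)-1)*((n:ℝ)-2)*A - 2*((n:ℝ)-1)*((n:ℝ)*B - s^2) - ((n:ℝ)-2)*s^2 := by
    rw [hx, hy]
    field_simp
    ring
  have hfac := mul_nonneg (show (0:ℝ) ≤ (n:ℝ)*((n:ℝ)-1)*((n:ℝ)-2) by positivity) hL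
  calc (0:ℝ) ≤ _ := hfac
    _ = _ := by rw [← hiden]

theorem backward_core (nr A B s α β γ : ℝ) (hn : 4 ≤ nr)
    (hA : 0 < A) (hF : 0 ≤ nr*B - s^2)
    (hD : 0 ≤ nr*(nr-1)*(nr-2)*A - 2*(nr-1)*(nr*B - s^2) - (nr-2)*s^2)
    (hα : 0 < α) (h1 : 0 < 2*α + (nr-2)*β) (h2 : 0 < α + (nr-1)*(β+nr*γ)) :
    0 < α*A + β*B + γ*s^2 := by
  have hn1 : 0 < nr - 1 := by linarith
  have hn2 : 0 < nr - 2 := by linarith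
  have nn : 0 < nr := by linarith
  have hN : 0 < nr*(nr-1)*(nr-2) := by positivity
  obtain ⟨D, hDdef⟩ : ∃ D : ℝ, D = nr*(nr-1)*(nr-2)*A - 2*(nr-1)*(nr*B - s^2) - (nr-2)*s^2 :=
    ⟨_, rfl⟩
  rw [← hDdef] at hD
  have hq : nr*(nr-1)*(nr-2)*(α*A + β*B + γ*s^2)
      = α*D + (nr-1)*(2*α+(nr-2)*β)*(nr*B-s^2) + (nr-2)*(α+(nr-1)*(β+nr*γ))*s^2 := by
    rw [hDdef]; ring
  have htri : 0 < D ∨ 0 < nr*B - s^2 ∨ 0 < s^2 := by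
    by_contra hcon
    push_neg at hcon
    obtain ⟨c1, c2, c3⟩ := hcon
    have hAe : nr*(nr-1)*(nr-2)*A = D + 2*(nr-1)*(nr*B-s^2) + (nr-2)*s^2 := by
      rw [hDdef]; ring
    nlinarith [mul_pos hN hA, mul_nonneg hn1.le (neg_nonneg.2 c2),
      mul_nonneg hn2.le (neg_nonneg.2 c3)]
  have hc0 : 0 ≤ α*D := mul_nonneg hα.le hD
  have hc1 : 0 ≤ (nr-1)*(2*α+(nr-2)*β)*(nr*B-s^2) :=
    mul_nonneg (mul_nonneg hn1.le h1.le) hF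
  have hc2 : 0 ≤ (nr-2)*(α+(nr-1)*(β+nr*γ))*s^2 :=
    mul_nonneg (mul_nonneg hn2.le h2.le) (sq_nonneg s)
  have hsum : 0 < nr*(nr-1)*(nr-2)*(α*A + β*B + γ*s^2) := by
    rw [hq]
    rcases htri with hp | hp | hp
    · have : 0 < α*D := mul_pos hα hp
      linarith
    · have : 0 < (nr-1)*(2*α+(nr-2)*β)*(nr*B-s^2) := mul_pos (mul_pos hn1 h1) hp
      linarith
    · have : 0 < (nr-2)*(α+(nr-1)*(β+nr*γ))*s^2 := mul_pos (mul_pos hn2 h2) hp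
      linarith
  nlinarith [hsum, hN]

def chi {n : ℕ} (a b : Fin n) : Fin n → ℝ :=
  fun i => (if i = a then 1 else 0) - (if i = b then 1 else 0)

theorem chi_sum {n : ℕ} (a b : Fin n) : ∑ i, chi a b i = 0 := by
  simp [chi, Finset.sum_sub_distrib]

theorem chi_sq {n : ℕ} {a b : Fin n} (hab : a ≠ b) (i : Fin n) :
    (chi a b i)^2 = (if i = a then 1 else 0) + (if i = b then 1 else 0) := by
  by_cases h1 : i = a
  · subst h1; simp [chi, hab]
  · by_cases h2 : i = b <;> simp [chi, h1, h2, Ne.symm hab]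

theorem chi_sum_sq {n : ℕ} {a b : Fin n} (hab : a ≠ b) :
    ∑ i, (chi a b i)^2 = 2 := by
  simp only [chi_sq hab]
  simp [Finset.sum_add_distrib]
  norm_num

theorem chi_mul {n : ℕ} {a b c d : Fin n} (hac : a ≠ c) (had : a ≠ d)
    (hbc : b ≠ c) (hbd : b ≠ d) (i : Fin n) : chi a b i * chi c d i = 0 := by
  by_cases h1 : i = a
  · subst h1; simp [chi, hac, had]
  · by_cases h2 : i = b
    · subst h2; simp [chi, hbc, hbd]
    · simp [chi, h1, h2]

theorem chi_fst {n : ℕ} {a b : Fin n} (hab : a ≠ b) : chi a b a = 1 := by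
  simp [chi, hab]

theorem chi_other {n : ℕ} {a b c : Fin n} (hca : c ≠ a) (hcb : c ≠ b) :
    chi a b c = 0 := by simp [chi, hca, hcb]

theorem witness1 (n : ℕ) (hn : 4 ≤ n) :
    ∃ X : Matrix (Fin n) (Fin n) ℝ, IsHollow X ∧ X ≠ 0 ∧
      (∑ i, ∑ j, (X i j)^2) = 8 ∧
      (∀ i : Fin n, ∑ j, X i j = 0) := by
  have hab : (⟨0, by omega⟩ : Fin n) ≠ ⟨1, by omega⟩ := Fin.ne_of_val_ne (by norm_num)
  have hac : (⟨0, by omega⟩ : Fin n) ≠ ⟨2, by omega⟩ := Fin.ne_of_val_ne (by norm_num)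
  have had : (⟨0, by omega⟩ : Fin n) ≠ ⟨3, by omega⟩ := Fin.ne_of_val_ne (by norm_num)
  have hbc : (⟨1, by omega⟩ : Fin n) ≠ ⟨2, by omega⟩ := Fin.ne_of_val_ne (by norm_num)
  have hbd : (⟨1, by omega⟩ : Fin n) ≠ ⟨3, by omega⟩ := Fin.ne_of_val_ne (by norm_num)
  have hcd : (⟨2, by omega⟩ : Fin n) ≠ ⟨3, by omega⟩ := Fin.ne_of_val_ne (by norm_num)
  obtain ⟨u, hu⟩ : ∃ u : Fin n → ℝ, u = chi ⟨0, by omega⟩ ⟨1, by omega⟩ := ⟨_, rfl⟩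
  obtain ⟨v, hv⟩ : ∃ v : Fin n → ℝ, v = chi ⟨2, by omega⟩ ⟨3, by omega⟩ := ⟨_, rfl⟩
  have hsu : ∑ i, u i = 0 := by rw [hu]; exact chi_sum _ _
  have hsv : ∑ i, v i = 0 := by rw [hv]; exact chi_sum _ _
  have hsu2 : ∑ i, (u i)^2 = 2 := by rw [hu]; exact chi_sum_sq hab
  have hsv2 : ∑ i, (v i)^2 = 2 := by rw [hv]; exact chi_sum_sq hcd
  have huv : ∀ i, u i * v i = 0 := by
    intro i; rw [hu, hv]; exact chi_mul hac had hbc hbd i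
  refine ⟨fun i j => u i * v j + v i * u j,
    ⟨?_, fun i => show u i * v i + v i * u i = 0 by linear_combination 2 * huv i⟩,
    ?_, ?_, ?_⟩
  · ext i j
    show u j * v i + v j * u i = u i * v j + v i * u j
    ring
  · intro h0
    have h1 := congrFun (congrFun h0 ⟨0, by omega⟩) ⟨2, by omega⟩
    simp only [hu, hv, chi_fst hab, chi_fst hcd, chi_other hac had,
      chi_other hac.symm hbc.symm, Pi.zero_apply, Matrix.zero_apply] at h1
    norm_num at h1
  · have key : ∀ i j : Fin n, (u i * v j + v i * u j)^2
        = (u i)^2 * (v j)^2 + (v i)^2 * (u j)^2 := by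
      intro i j
      linear_combination (2 * u j * v j) * huv i
    simp only [key, Finset.sum_add_distrib]
    rw [← Finset.sum_mul_sum, ← Finset.sum_mul_sum, hsu2, hsv2]
    norm_num
  · intro i
    simp only [Finset.sum_add_distrib, ← Finset.mul_sum, hsu, hsv]
    ring

theorem witness2 (n : ℕ) (hn : 4 ≤ n) :
    ∃ X : Matrix (Fin n) (Fin n) ℝ, IsHollow X ∧ X ≠ 0 ∧
      (∑ i, ∑ j, (X i j)^2) = 4*(n:ℝ)-8 ∧
      (∑ k, (∑ j, X k j)^2) = 2*((n:ℝ)-2)^2 ∧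
      (∑ i, ∑ j, X i j) = 0 := by
  have hab : (⟨0, by omega⟩ : Fin n) ≠ ⟨1, by omega⟩ := Fin.ne_of_val_ne (by norm_num)
  have hac : (⟨0, by omega⟩ : Fin n) ≠ ⟨2, by omega⟩ := Fin.ne_of_val_ne (by norm_num)
  have hbc : (⟨1, by omega⟩ : Fin n) ≠ ⟨2, by omega⟩ := Fin.ne_of_val_ne (by norm_num)
  obtain ⟨u, hu⟩ : ∃ u : Fin n → ℝ, u = chi ⟨0, by omega⟩ ⟨1, by omega⟩ := ⟨_, rfl⟩
  have hsu : ∑ i, u i = 0 := by rw [hu]; exact chi_sum _ _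
  have hsu2 : ∑ i, (u i)^2 = 2 := by rw [hu]; exact chi_sum_sq hab
  refine ⟨fun i j => if i = j then 0 else u i + u j, ⟨?_, fun i => by simp⟩, ?_, ?_, ?_, ?_⟩
  · ext i j
    show (if j = i then (0:ℝ) else u j + u i) = (if i = j then 0 else u i + u j)
    by_cases h : i = j
    · subst h; rfl
    · simp only [h, Ne.symm h, if_false]; ring
  · intro h0
    have h1 := congrFun (congrFun h0 ⟨0, by omega⟩) ⟨2, by omega⟩
    simp only [hu, hac, if_neg hac, chi_fst hab, chi_other hac.symm hbc.symm,
      Pi.zero_apply, Matrix.zero_apply] at h1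
    norm_num at h1
  · have key : ∀ i j : Fin n, (if i = j then (0:ℝ) else u i + u j)^2
        = (u i)^2 + 2*(u i)*(u j) + (u j)^2 - (if i = j then 4*(u i)^2 else 0) := by
      intro i j
      by_cases h : i = j
      · subst h; rw [if_pos rfl, if_pos rfl]; ring
      · simp [h]; ring
    simp only [key]
    simp only [Finset.sum_add_distrib, Finset.sum_sub_distrib, Finset.sum_ite_eq,
      Finset.mem_univ, if_true, Finset.sum_const, Finset.card_univ, Fintype.card_fin,
      nsmul_eq_mul, ← Finset.sum_mul, ← Finset.mul_sum]
    rw [hsu2, hsu]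
    ring
  · have hr : ∀ i : Fin n, ∑ j, (if i = j then (0:ℝ) else u i + u j) = ((n:ℝ)-2) * u i := by
      intro i
      have key : ∀ j : Fin n, (if i = j then (0:ℝ) else u i + u j)
          = u i + u j - (if i = j then 2*u i else 0) := by
        intro j; by_cases h : i = j
        · subst h; rw [if_pos rfl, if_pos rfl]; ring
        · simp [h]
      simp only [key]
      simp only [Finset.sum_sub_distrib, Finset.sum_add_distrib, Finset.sum_ite_eq,
        Finset.mem_univ, if_true, Finset.sum_const, Finset.card_univ, Fintype.card_fin,
        nsmul_eq_mul, hsu]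
      ring
    simp only [hr, mul_pow, ← Finset.mul_sum, hsu2]
    ring
  · have hr : ∀ i : Fin n, ∑ j, (if i = j then (0:ℝ) else u i + u j) = ((n:ℝ)-2) * u i := by
      intro i
      have key : ∀ j : Fin n, (if i = j then (0:ℝ) else u i + u j)
          = u i + u j - (if i = j then 2*u i else 0) := by
        intro j; by_cases h : i = j
        · subst h; rw [if_pos rfl, if_pos rfl]; ring
        · simp [h]
      simp only [key]
      simp only [Finset.sum_sub_distrib, Finset.sum_add_distrib, Finset.sum_ite_eq,
        Finset.mem_univ, if_true, Finset.sum_const, Finset.card_univ, Fintype.card_fin,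
        nsmul_eq_mul, hsu]
      ring
    simp only [hr, ← Finset.mul_sum, hsu]
    ring

theorem witness3 (n : ℕ) (hn : 4 ≤ n) :
    ∃ X : Matrix (Fin n) (Fin n) ℝ, IsHollow X ∧ X ≠ 0 ∧
      (∑ i, ∑ j, (X i j)^2) = (n:ℝ)*((n:ℝ)-1) ∧
      (∑ k, (∑ j, X k j)^2) = (n:ℝ)*((n:ℝ)-1)^2 ∧
      (∑ i, ∑ j, X i j) = (n:ℝ)*((n:ℝ)-1) := by
  refine ⟨fun i j => if i = j then 0 else 1, ⟨?_, fun i => by simp⟩, ?_, ?_, ?_, ?_⟩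
  · ext i j
    show (if j = i then (0:ℝ) else 1) = (if i = j then 0 else 1)
    by_cases h : i = j
    · subst h; rfl
    · simp [h, Ne.symm h]
  · intro h0
    have := congrFun (congrFun h0 ⟨0, by omega⟩) ⟨1, by omega⟩
    simp [Fin.ext_iff] at this
  · have h1 : ∀ i : Fin n, ∑ j, (if i = j then (0:ℝ) else 1) = (n:ℝ)-1 := by
      intro i
      have : ∀ j : Fin n, (if i = j then (0:ℝ) else 1) = 1 - (if i = j then 1 else 0) := by
        intro j; by_cases h : i = j <;> simp [h]
      simp [this, Finset.sum_sub_distrib]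
    have hsq : ∀ i j : Fin n, (if i = j then (0:ℝ) else 1)^2 = (if i = j then 0 else 1) := by
      intro i j; by_cases h : i = j <;> simp [h]
    simp only [hsq, h1]
    simp [mul_comm]; ring
  · have : ∀ i : Fin n, ∑ j, (if i = j then (0:ℝ) else 1) = (n:ℝ)-1 := by
      intro i
      have : ∀ j : Fin n, (if i = j then (0:ℝ) else 1) = 1 - (if i = j then 1 else 0) := by
        intro j; by_cases h : i = j <;> simp [h]
      simp [this, Finset.sum_sub_distrib]
    simp [this, Finset.sum_const, mul_comm]
  · have : ∀ i : Fin n, ∑ j, (if i = j then (0:ℝ) else 1) = (n:ℝ)-1 := by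
      intro i
      have : ∀ j : Fin n, (if i = j then (0:ℝ) else 1) = 1 - (if i = j then 1 else 0) := by
        intro j; by_cases h : i = j <;> simp [h]
      simp [this, Finset.sum_sub_distrib]
    simp [this, Finset.sum_const, mul_comm]; ring

/-- For `n ≥ 4`, `q(X) = α tr(X²) + β 𝟙ᵀX²𝟙 + γ (𝟙ᵀX𝟙)²` is positive definite on
hollow symmetric matrices iff `α > 0`, `2α + (n−2)β > 0` and `α + (n−1)(β + nγ) > 0`. -/
theorem stmt6 (n : ℕ) (hn : 4 ≤ n) (α β γ : ℝ) :
    (∀ X : Matrix (Fin n) (Fin n) ℝ, IsHollow X → X ≠ 0 →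
        0 < α * (X * X).trace + β * (∑ i, ∑ j, (X * X) i j) +
            γ * (∑ i, ∑ j, X i j) ^ 2) ↔
      (0 < α ∧ 0 < 2 * α + ((n : ℝ) - 2) * β ∧
        0 < α + ((n : ℝ) - 1) * (β + (n : ℝ) * γ)) := by
  have hn4 : (4:ℝ) ≤ (n:ℝ) := by exact_mod_cast hn
  have hnn : (0:ℝ) < n := by linarith
  have hn1 : (0:ℝ) < (n:ℝ)-1 := by linarith
  have hn2 : (0:ℝ) < (n:ℝ)-2 := by linarith
  constructor
  · intro H
    refine ⟨?_, ?_, ?_⟩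
    · obtain ⟨X, hX, hne, hA, hr⟩ := witness1 n hn
      have hq := H X hX hne
      rw [trace_sq n X hX.1, sum_mul_self n X hX.1, hA] at hq
      have hB : ∑ k, (∑ j, X k j)^2 = 0 := by simp [hr]
      have hs : ∑ i, ∑ j, X i j = 0 := by
        rw [Finset.sum_congr rfl fun i _ => hr i]; simp
      rw [hB, hs] at hq
      nlinarith [hq]
    · obtain ⟨X, hX, hne, hA, hB, hs⟩ := witness2 n hn
      have hq := H X hX hne
      rw [trace_sq n X hX.1, sum_mul_self n X hX.1, hA, hB, hs] at hq
      by_contra hc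
      push_neg at hc
      nlinarith [hq, hn2, mul_nonneg hn2.le (neg_nonneg.2 hc)]
    · obtain ⟨X, hX, hne, hA, hB, hs⟩ := witness3 n hn
      have hq := H X hX hne
      rw [trace_sq n X hX.1, sum_mul_self n X hX.1, hA, hB, hs] at hq
      by_contra hc
      push_neg at hc
      nlinarith [hq, hnn, hn1, mul_pos hnn hn1,
        mul_nonneg (mul_pos hnn hn1).le (neg_nonneg.2 hc)]
  · rintro ⟨hα, h1, h2⟩ X ⟨hsymm, hdiag⟩ hne
    rw [trace_sq n X hsymm, sum_mul_self n X hsymm]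
    have hA : 0 < ∑ i, ∑ j, (X i j)^2 := by
      obtain ⟨i, j, hij⟩ : ∃ i j, X i j ≠ 0 := by
        by_contra hc
        push_neg at hc
        exact hne (by ext i j; simpa using hc i j)
      have ha1 : (X i j)^2 ≤ ∑ j', (X i j')^2 :=
        Finset.single_le_sum (f := fun j' => (X i j')^2)
          (fun _ _ => sq_nonneg _) (Finset.mem_univ j)
      have ha2 : ∑ j', (X i j')^2 ≤ ∑ i', ∑ j', (X i' j')^2 :=
        Finset.single_le_sum (f := fun i' => ∑ j', (X i' j')^2)
          (fun _ _ => Finset.sum_nonneg fun _ _ => sq_nonneg _) (Finset.mem_univ i)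
      have ha3 : 0 < (X i j)^2 := by positivity
      linarith
    exact backward_core (n:ℝ) _ _ _ α β γ hn4 hA (rowsum_ineq n hn X)
      (key_ineq n hn X hsymm hdiag) hα h1 h2
end

section
/- For n ≥ 4, the quadratic form q*(Y) = α·tr(Y²) + β·tr(Diag(Y)²) + γ·tr(Y)² on the space of symmetric matrices with zero row sums is positive definite if and only if α > 0, nα + (n−2)β > 0, and nα + (n−1)(β + nγ) > 0. -/
open Matrix BigOperators

section Stmt7Aux
open Finset

lemma double_expand (n : ℕ) (Y : Matrix (Fin n) (Fin n) ℝ) (u : Fin n → ℝ) :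
    ∑ i, ∑ j, (Y i j - u i - u j)^2
      = (∑ i, ∑ j, (Y i j)^2) - 2*(∑ i, (u i * ∑ j, Y i j)) - 2*(∑ j, ((∑ i, Y i j) * u j))
        + 2*(n:ℝ)*(∑ i, (u i)^2) + 2*(∑ i, u i)^2 := by
  have h : ∀ i j, (Y i j - u i - u j)^2
      = (Y i j)^2 - 2*(u i * Y i j) - 2*(Y i j * u j)
        + ((u i)^2 + 2*(u i * u j) + (u j)^2) := fun i j => by ring
  simp_rw [h, Finset.sum_add_distrib, Finset.sum_sub_distrib, ← Finset.mul_sum,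
    ← Finset.sum_mul, Finset.sum_const, Finset.card_univ, Fintype.card_fin, nsmul_eq_mul]
  rw [Finset.sum_comm (s := univ) (t := univ) (f := fun i j => Y i j * u j)]
  simp_rw [← Finset.sum_mul]
  rw [← Finset.mul_sum]
  ring

lemma sum_linear (n : ℕ) (d : Fin n → ℝ) (c1 c2 c3 : ℝ) :
    ∑ i, (c1 * (d i)^2 + c2 * d i + c3) = c1 * (∑ i, (d i)^2) + c2 * (∑ i, d i) + c3 * n := by
  simp [Finset.sum_add_distrib, ← Finset.mul_sum, Finset.card_univ, mul_comm]

lemma key (n : ℕ) (hn : 4 ≤ n) (Y : Matrix (Fin n) (Fin n) ℝ)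
    (hsymm : ∀ i j, Y i j = Y j i) (hrow : ∀ i, ∑ j, Y i j = 0) :
    2*((n:ℝ)-1)*(∑ i, (Y i i)^2)
      ≤ ((n:ℝ)-1)*((n:ℝ)-2)*((∑ i, ∑ j, (Y i j)^2) - (∑ i, (Y i i)^2))
        + (∑ i, Y i i)^2 := by
  set N : ℝ := (n:ℝ) with hN
  have hN4 : (4:ℝ) ≤ N := by rw [hN]; exact_mod_cast hn
  set t : ℝ := ∑ i, Y i i with ht
  set D : ℝ := ∑ i, (Y i i)^2 with hD
  set S : ℝ := ∑ i, ∑ j, (Y i j)^2 with hS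
  set c : ℝ := 2*(N-1)*(N-2) with hc
  set Z : Matrix (Fin n) (Fin n) ℝ := fun i j => c * Y i j with hZ
  set w : Fin n → ℝ := fun i => -2*(N-1)* Y i i + t with hw
  have hrowZ : ∀ i, ∑ j, Z i j = 0 := by
    intro i; simp only [hZ]; rw [← Finset.mul_sum, hrow i, mul_zero]
  have hcolZ : ∀ j, ∑ i, Z i j = 0 := by
    intro j; simp only [hZ]
    rw [Finset.sum_congr rfl (fun i _ => by rw [hsymm i j]), ← Finset.mul_sum, hrow j, mul_zero]
  have hfull : ∑ i, ∑ j, (Z i j - w i - w j)^2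
      = (∑ i, ∑ j, (Z i j)^2) + 2*N*(∑ i, (w i)^2) + 2*(∑ i, w i)^2 := by
    rw [double_expand]
    simp_rw [hrowZ, hcolZ, mul_zero, zero_mul, Finset.sum_const_zero]
    ring
  have hsplit : ∀ i, ∑ j ∈ univ.erase i, (Z i j - w i - w j)^2
      = (∑ j, (Z i j - w i - w j)^2) - (Z i i - 2 * w i)^2 := by
    intro i
    rw [← Finset.add_sum_erase univ _ (mem_univ i)]
    ring
  have hnonneg : 0 ≤ ∑ i, ∑ j ∈ univ.erase i, (Z i j - w i - w j)^2 := by positivity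
  have hmain : ∑ i, (Z i i - 2 * w i)^2
      ≤ (∑ i, ∑ j, (Z i j)^2) + 2*N*(∑ i, (w i)^2) + 2*(∑ i, w i)^2 := by
    rw [← hfull]
    have heq : ∑ i, ∑ j ∈ univ.erase i, (Z i j - w i - w j)^2
        = (∑ i, ∑ j, (Z i j - w i - w j)^2) - ∑ i, (Z i i - 2 * w i)^2 := by
      rw [← Finset.sum_sub_distrib]
      exact Finset.sum_congr rfl fun i _ => hsplit i
    rw [heq] at hnonneg
    linarith
  -- compute all the sums
  have hSZ : ∑ i, ∑ j, (Z i j)^2 = c^2 * S := by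
    simp only [hZ, hS, mul_pow, ← Finset.mul_sum]
  have hwsum : ∑ i, w i = -2*(N-1)*t + t*N := by
    have h1 : ∀ i, w i = 0 * (Y i i)^2 + (-2*(N-1)) * Y i i + t := fun i => by
      simp only [hw]; ring
    rw [Finset.sum_congr rfl fun i _ => h1 i, sum_linear]; ring
  have hwsq : ∑ i, (w i)^2 = 4*(N-1)^2*D + (-4*(N-1)*t)*t + t^2*N := by
    have h1 : ∀ i, (w i)^2 = (4*(N-1)^2) * (Y i i)^2 + (-4*(N-1)*t) * Y i i + t^2 :=
      fun i => by simp only [hw]; ring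
    rw [Finset.sum_congr rfl fun i _ => h1 i, sum_linear, hD, ht]
  have hdiag : ∑ i, (Z i i - 2 * w i)^2
      = (c+4*(N-1))^2*D + (-2*(c+4*(N-1))*2*t)*t + (4*t^2)*N := by
    have h1 : ∀ i, (Z i i - 2 * w i)^2
        = ((c+4*(N-1))^2) * (Y i i)^2 + (-2*(c+4*(N-1))*2*t) * Y i i + 4*t^2 := fun i => by
      simp only [hZ, hw]; ring
    rw [Finset.sum_congr rfl fun i _ => h1 i, sum_linear, hD, ht]
  rw [hSZ, hwsum, hwsq, hdiag] at hmain
  simp only [hc] at hmain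
  have hpos : (0:ℝ) < (N-1)*(N-2) := by nlinarith
  nlinarith [hmain, hpos, mul_pos hpos hpos]


set_option maxHeartbeats 1000000 in
lemma wit1 (n : ℕ) (hn : 4 ≤ n) (α β γ : ℝ)
    (h : ∀ Y : Matrix (Fin n) (Fin n) ℝ, IsRow0 Y → Y ≠ 0 →
        0 < α * (Y * Y).trace + β * (∑ i, (Y i i) ^ 2) + γ * Y.trace ^ 2) :
    0 < α := by
  have h0 : (0:ℕ) < n := by omega
  have h1 : (1:ℕ) < n := by omega
  have h2 : (2:ℕ) < n := by omega
  have h3 : (3:ℕ) < n := by omega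
  set a : Fin n := ⟨0, h0⟩ with ha
  set b : Fin n := ⟨1, h1⟩ with hb
  set c : Fin n := ⟨2, h2⟩ with hc
  set d : Fin n := ⟨3, h3⟩ with hd
  have hab : a ≠ b := by simp [ha, hb, Fin.ext_iff]
  have hcd : c ≠ d := by simp [hc, hd, Fin.ext_iff]
  have hac : a ≠ c := by simp [ha, hc, Fin.ext_iff]
  have had : a ≠ d := by simp [ha, hd, Fin.ext_iff]
  have hca : c ≠ a := Ne.symm hac
  have hcb : c ≠ b := by simp [hc, hb, Fin.ext_iff]
  set f : Fin n → ℝ := fun i => (if i = a then 1 else 0) - (if i = b then 1 else 0) with hf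
  set g : Fin n → ℝ := fun i => (if i = c then 1 else 0) - (if i = d then 1 else 0) with hg
  set Y : Matrix (Fin n) (Fin n) ℝ := fun i j => f i * g j + g i * f j with hY
  have hfsum : ∑ i, f i = 0 := by simp [hf, Finset.sum_sub_distrib]
  have hgsum : ∑ i, g i = 0 := by simp [hg, Finset.sum_sub_distrib]
  have hfsq : ∑ i, (f i)^2 = 2 := by
    have e : ∀ i, (f i)^2 = (if i = a then 1 else 0) + (if i = b then 1 else 0) := by
      intro i
      simp only [hf]
      rcases eq_or_ne i a with hia | hia <;> rcases eq_or_ne i b with hib | hib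
      · exact absurd (hia.symm.trans hib) hab
      · subst hia; simp [hab]
      · subst hib; simp [Ne.symm hab]
      · simp [hia, hib]
    rw [Finset.sum_congr rfl fun i _ => e i]
    simp [Finset.sum_add_distrib]
    norm_num
  have hgsq : ∑ i, (g i)^2 = 2 := by
    have e : ∀ i, (g i)^2 = (if i = c then 1 else 0) + (if i = d then 1 else 0) := by
      intro i
      simp only [hg]
      rcases eq_or_ne i c with hic | hic <;> rcases eq_or_ne i d with hid | hid
      · exact absurd (hic.symm.trans hid) hcd
      · subst hic; simp [hcd]
      · subst hid; simp [Ne.symm hcd]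
      · simp [hic, hid]
    rw [Finset.sum_congr rfl fun i _ => e i]
    simp [Finset.sum_add_distrib]
    norm_num
  have hfg : ∀ i, f i * g i = 0 := by
    intro i
    simp only [hf, hg]
    rcases eq_or_ne i a with hia | hia <;> rcases eq_or_ne i b with hib | hib <;>
      first
        | (exact absurd (‹i = a›.symm.trans ‹i = b›) hab)
        | (first
            | (subst hia; simp [hac, had])
            | (subst hib; simp [show b ≠ c by simp [hb, hc, Fin.ext_iff],
                show b ≠ d by simp [hb, hd, Fin.ext_iff]])
            | simp [hia, hib])
  have hfg0 : (∑ j, f j * g j) = 0 := by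
    rw [Finset.sum_congr rfl fun j _ => hfg j]
    simp
  have hrow : ∀ i, ∑ j, Y i j = 0 := by
    intro i
    simp only [hY, Finset.sum_add_distrib, ← Finset.mul_sum, hfsum, hgsum, mul_zero, add_zero]
  have hsym : Y.IsSymm := by
    ext i j
    rw [Matrix.transpose_apply]
    simp only [Matrix.transpose_apply, hY]
    ring
  have hYac : Y a c = 1 := by
    simp only [hY, hf, hg]
    simp [hab, hcd, hac, had, hca, hcb]
  have hne : Y ≠ 0 := by
    intro h0'
    rw [h0'] at hYac
    simp at hYac
  have hq := h Y ⟨hsym, hrow⟩ hne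
  have hdiag : ∀ i, Y i i = 0 := fun i => by
    simp only [hY]
    nlinarith [hfg i]
  have htrace : Y.trace = 0 := by
    rw [Matrix.trace]
    simp only [Matrix.diag]
    rw [Finset.sum_congr rfl fun i _ => hdiag i]
    simp
  have hD : (∑ i, (Y i i)^2) = 0 := by
    rw [Finset.sum_congr rfl fun i _ => by rw [hdiag i]]
    simp
  have htr : (Y * Y).trace = 8 := by
    rw [Matrix.trace]
    simp only [Matrix.diag, Matrix.mul_apply]
    have e1 : ∀ i j, Y i j * Y j i
        = (2*(f i * g i)) * (f j * g j) + (f i)^2 * (g j)^2 + (g i)^2 * (f j)^2 := by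
      intro i j; simp only [hY]; ring
    have e2 : ∀ i, ∑ j, Y i j * Y j i = 2 * (f i)^2 + 2 * (g i)^2 := by
      intro i
      rw [Finset.sum_congr rfl fun j _ => e1 i j, Finset.sum_add_distrib,
        Finset.sum_add_distrib, ← Finset.mul_sum, ← Finset.mul_sum, ← Finset.mul_sum,
        hfg0, hgsq, hfsq]
      ring
    rw [Finset.sum_congr rfl fun i _ => e2 i, Finset.sum_add_distrib,
      ← Finset.mul_sum, ← Finset.mul_sum, hfsq, hgsq]
    norm_num
  rw [htr, htrace, hD] at hq
  nlinarith [hq]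


set_option maxHeartbeats 1000000 in
lemma wit2 (n : ℕ) (hn : 4 ≤ n) (α β γ : ℝ)
    (h : ∀ Y : Matrix (Fin n) (Fin n) ℝ, IsRow0 Y → Y ≠ 0 →
        0 < α * (Y * Y).trace + β * (∑ i, (Y i i) ^ 2) + γ * Y.trace ^ 2) :
    0 < (n:ℝ) * α + ((n:ℝ) - 2) * β := by
  set N : ℝ := (n:ℝ) with hNdef
  have hN4 : (4:ℝ) ≤ N := by rw [hNdef]; exact_mod_cast hn
  have hN2 : (0:ℝ) < N - 2 := by linarith
  have h0 : (0:ℕ) < n := by omega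
  have h1 : (1:ℕ) < n := by omega
  set a : Fin n := ⟨0, h0⟩ with ha
  set b : Fin n := ⟨1, h1⟩ with hb
  have hab : a ≠ b := by simp [ha, hb, Fin.ext_iff]
  set v : Fin n → ℝ := fun i => (if i = a then 1 else 0) - (if i = b then 1 else 0) with hv
  set Y : Matrix (Fin n) (Fin n) ℝ :=
    fun i j => if i = j then v i else -(v i + v j)/(N-2) with hY
  have hvsum : ∑ i, v i = 0 := by simp [hv, Finset.sum_sub_distrib]
  have hvsq : ∑ i, (v i)^2 = 2 := by
    have e : ∀ i, (v i)^2 = (if i = a then 1 else 0) + (if i = b then 1 else 0) := by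
      intro i
      simp only [hv]
      rcases eq_or_ne i a with hia | hia <;> rcases eq_or_ne i b with hib | hib
      · exact absurd (hia.symm.trans hib) hab
      · subst hia; simp [hab]
      · subst hib; simp [Ne.symm hab]
      · simp [hia, hib]
    rw [Finset.sum_congr rfl fun i _ => e i]
    simp [Finset.sum_add_distrib]
    norm_num
  have hcast : ((n - 1 : ℕ) : ℝ) = N - 1 := by
    rw [Nat.cast_sub (by omega)]; simp [hNdef]
  have hcard : ∀ i : Fin n, (univ.erase i).card = n - 1 := fun i => by
    rw [Finset.card_erase_of_mem (mem_univ i), Finset.card_univ, Fintype.card_fin]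
  have hsum_erase : ∀ i, ∑ j ∈ univ.erase i, (v i + v j) = (N-2) * v i := by
    intro i
    rw [Finset.sum_add_distrib, Finset.sum_const, Finset.sum_erase_eq_sub (mem_univ i),
      hvsum, hcard, nsmul_eq_mul, hcast]
    ring
  have hYdiag : ∀ i, Y i i = v i := fun i => by simp [hY]
  have hYoff : ∀ i j, i ≠ j → Y i j = -(v i + v j)/(N-2) := fun i j hij => by
    simp [hY, hij]
  have hrow : ∀ i, ∑ j, Y i j = 0 := by
    intro i
    rw [← Finset.add_sum_erase univ _ (mem_univ i)]
    have e1 : ∑ j ∈ univ.erase i, Y i j = ∑ j ∈ univ.erase i, -(v i + v j)/(N-2) :=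
      Finset.sum_congr rfl fun j hj =>
        hYoff i j (fun hij => (Finset.ne_of_mem_erase hj) hij.symm)
    rw [e1, hYdiag i]
    have e2 : ∑ j ∈ univ.erase i, -(v i + v j)/(N-2)
        = -(∑ j ∈ univ.erase i, (v i + v j))/(N-2) := by
      rw [← Finset.sum_div, ← Finset.sum_neg_distrib]
    rw [e2, hsum_erase i]
    field_simp
    ring
  have hsym : Y.IsSymm := by
    ext i j
    rw [Matrix.transpose_apply]
    simp only [Matrix.transpose_apply, hY]
    rcases eq_or_ne i j with hij | hij
    · subst hij; simp
    · rw [if_neg (Ne.symm hij), if_neg hij]; ring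
  have hsymp : ∀ i j, Y j i = Y i j := fun i j => by
    have := congrFun (congrFun hsym j) i
    simpa [Matrix.transpose_apply] using this.symm
  have hYaa : Y a a = 1 := by
    rw [hYdiag a]; simp [hv, hab]
  have hne : Y ≠ 0 := by
    intro h0'
    rw [h0'] at hYaa
    simp at hYaa
  have hq := h Y ⟨hsym, hrow⟩ hne
  have htrace : Y.trace = 0 := by
    rw [Matrix.trace]
    simp only [Matrix.diag]
    rw [Finset.sum_congr rfl fun i _ => hYdiag i]
    exact hvsum
  have hD : (∑ i, (Y i i)^2) = 2 := by
    rw [Finset.sum_congr rfl fun i _ => by rw [hYdiag i]]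
    exact hvsq
  have hsqall : ∀ i, ∑ j, (v i + v j)^2 = N * (v i)^2 + 2 := by
    intro i
    have e : ∀ j, (v i + v j)^2 = 1 * (v j)^2 + (2 * v i) * v j + (v i)^2 := fun j => by ring
    rw [Finset.sum_congr rfl fun j _ => e j, sum_linear, hvsum, hvsq, ← hNdef]
    ring
  have htr : (Y * Y).trace = 2 + 4/(N-2) := by
    rw [Matrix.trace]
    simp only [Matrix.diag, Matrix.mul_apply]
    have e1 : ∀ i, ∑ j, Y i j * Y j i = ∑ j, (Y i j)^2 := by
      intro i
      exact Finset.sum_congr rfl fun j _ => by rw [hsymp i j]; ring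
    have e2 : ∀ i, ∑ j, (Y i j)^2
        = (1 + (N-4)/(N-2)^2) * (v i)^2 + 0 * v i + 2/(N-2)^2 := by
      intro i
      rw [← Finset.add_sum_erase univ _ (mem_univ i), hYdiag i]
      have e3 : ∑ j ∈ univ.erase i, (Y i j)^2
          = (∑ j ∈ univ.erase i, (v i + v j)^2)/(N-2)^2 := by
        rw [Finset.sum_div]
        refine Finset.sum_congr rfl fun j hj => ?_
        rw [hYoff i j (fun hij => (Finset.ne_of_mem_erase hj) hij.symm)]
        rw [div_pow, neg_sq]
      have e4 : ∑ j ∈ univ.erase i, (v i + v j)^2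
          = N * (v i)^2 + 2 - (2 * v i)^2 := by
        rw [Finset.sum_erase_eq_sub (mem_univ i), hsqall i]
        ring_nf
      rw [e3, e4]
      field_simp
      ring
    rw [Finset.sum_congr rfl fun i _ => e1 i, Finset.sum_congr rfl fun i _ => e2 i,
      sum_linear, hvsq, hvsum, ← hNdef]
    field_simp
    ring
  rw [htr, htrace, hD] at hq
  have hkey : (N-2)/2 * (α * (2 + 4/(N-2)) + β * 2 + γ * 0^2) = N*α + (N-2)*β := by
    field_simp
    ring
  have := mul_pos (by linarith : (0:ℝ) < (N-2)/2) hq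
  rw [hkey] at this
  exact this


lemma wit3 (n : ℕ) (hn : 4 ≤ n) (α β γ : ℝ)
    (h : ∀ Y : Matrix (Fin n) (Fin n) ℝ, IsRow0 Y → Y ≠ 0 →
        0 < α * (Y * Y).trace + β * (∑ i, (Y i i) ^ 2) + γ * Y.trace ^ 2) :
    0 < (n : ℝ) * α + ((n : ℝ) - 1) * (β + (n : ℝ) * γ) := by
  set N : ℝ := (n:ℝ) with hNdef
  have hN4 : (4:ℝ) ≤ N := by rw [hNdef]; exact_mod_cast hn
  have hN0 : (0:ℝ) < N := by linarith
  have hN1 : (0:ℝ) < N - 1 := by linarith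
  set Y : Matrix (Fin n) (Fin n) ℝ := fun i j => (if i = j then N else 0) - 1 with hY
  have hpos : (0:ℕ) < n := by omega
  have hlt : (1:ℕ) < n := by omega
  set a : Fin n := ⟨0, hpos⟩ with ha
  set b : Fin n := ⟨1, hlt⟩ with hb
  have hab : a ≠ b := by simp [ha, hb, Fin.ext_iff]
  have hrow : ∀ i, ∑ j, Y i j = 0 := by
    intro i
    simp only [hY, Finset.sum_sub_distrib, Finset.sum_ite_eq', mem_univ, if_true,
      Finset.sum_const, Finset.card_univ, Fintype.card_fin, nsmul_eq_mul, mul_one]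
    simp [hNdef]
  have hsym : Y.IsSymm := by
    ext i j
    rw [Matrix.transpose_apply]
    simp only [Matrix.transpose_apply, hY]
    by_cases hij : i = j
    · simp [hij]
    · simp [hij, Ne.symm hij]
  have hne : Y ≠ 0 := by
    intro h0
    have := congrFun (congrFun h0 a) b
    simp only [hY, Matrix.zero_apply, if_neg hab] at this
    norm_num at this
  have hq := h Y ⟨hsym, hrow⟩ hne
  have hdiag : ∀ i, Y i i = N - 1 := fun i => by simp [hY]
  have htrace : Y.trace = N * (N - 1) := by
    rw [Matrix.trace]
    simp only [Matrix.diag]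
    rw [Finset.sum_congr rfl fun i _ => hdiag i]
    simp [hNdef, mul_comm]
    ring
  have hD : (∑ i, (Y i i)^2) = N * (N-1)^2 := by
    rw [Finset.sum_congr rfl fun i _ => by rw [hdiag i]]
    simp [hNdef, mul_comm]
  have htr : (Y * Y).trace = N^2 * (N-1) := by
    rw [Matrix.trace]
    have h1 : ∀ i, (Y * Y).diag i = ∑ j, Y i j * Y j i := fun i => by
      simp [Matrix.diag, Matrix.mul_apply]
    rw [Finset.sum_congr rfl fun i _ => h1 i]
    have h2 : ∀ i j, Y i j * Y j i = (if j = i then (N-1)^2 - 1 else 0) + 1 := by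
      intro i j
      by_cases hij : i = j
      · subst hij; simp [hY]; ring
      · simp [hY, hij, Ne.symm hij]
    have h3 : ∀ i, ∑ j, Y i j * Y j i = ((N-1)^2 - 1) + N := by
      intro i
      rw [Finset.sum_congr rfl fun j _ => h2 i j]
      simp [Finset.sum_add_distrib, hNdef]
    rw [Finset.sum_congr rfl fun i _ => h3 i]
    simp only [Finset.sum_const, Finset.card_univ, Fintype.card_fin, nsmul_eq_mul]
    rw [← hNdef]; ring
  rw [htr, hD, htrace] at hq
  nlinarith [hq, mul_pos hN0 hN1]


set_option maxHeartbeats 1000000 in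
lemma backward (n : ℕ) (hn : 4 ≤ n) (α β γ : ℝ)
    (hα : 0 < α) (h2 : 0 < (n:ℝ)*α + ((n:ℝ)-2)*β)
    (h3 : 0 < (n:ℝ)*α + ((n:ℝ)-1)*(β + (n:ℝ)*γ))
    (Y : Matrix (Fin n) (Fin n) ℝ) (hY : IsRow0 Y) (hne : Y ≠ 0) :
    0 < α * (Y * Y).trace + β * (∑ i, (Y i i) ^ 2) + γ * Y.trace ^ 2 := by
  obtain ⟨hsy, hrow⟩ := hY
  have hsymm : ∀ i j, Y i j = Y j i := fun i j => Matrix.IsSymm.apply hsy j i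
  set N : ℝ := (n:ℝ) with hNdef
  have hN4 : (4:ℝ) ≤ N := by rw [hNdef]; exact_mod_cast hn
  have hN0 : (0:ℝ) < N := by linarith
  have hN1 : (0:ℝ) < N - 1 := by linarith
  have hN2 : (0:ℝ) < N - 2 := by linarith
  set t : ℝ := ∑ i, Y i i with ht
  set D : ℝ := ∑ i, (Y i i)^2 with hD
  set S : ℝ := ∑ i, ∑ j, (Y i j)^2 with hS
  have htr : (Y * Y).trace = S := by
    rw [hS, Matrix.trace]
    refine Finset.sum_congr rfl fun i _ => ?_
    rw [Matrix.diag, Matrix.mul_apply]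
    exact Finset.sum_congr rfl fun j _ => by rw [← hsymm i j]; ring
  have htrace : Y.trace = t := by rw [ht]; rfl
  have hkey := key n hn Y hsymm hrow
  rw [← hS, ← hD, ← ht] at hkey
  have hCS : t^2 ≤ N * D := by
    have h0 : 0 ≤ ∑ i, (N * Y i i - t)^2 := Finset.sum_nonneg fun i _ => sq_nonneg _
    have h1 : ∀ i, (N * Y i i - t)^2 = N^2 * (Y i i)^2 + (-2*N*t) * Y i i + t^2 :=
      fun i => by ring
    rw [Finset.sum_congr rfl fun i _ => h1 i, sum_linear, ← hD, ← ht, ← hNdef] at h0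
    nlinarith [h0, hN0]
  have hDnn : 0 ≤ D := Finset.sum_nonneg fun i _ => sq_nonneg _
  have hSpos : 0 < S := by
    have hex : ∃ i j, Y i j ≠ 0 := by
      by_contra h
      push_neg at h
      exact hne (by ext i j; exact h i j)
    obtain ⟨i, j, hij⟩ := hex
    have h1 : (Y i j)^2 ≤ ∑ k, (Y i k)^2 :=
      Finset.single_le_sum (fun k _ => sq_nonneg (Y i k)) (mem_univ j)
    have h2' : (∑ k, (Y i k)^2) ≤ S :=
      Finset.single_le_sum (f := fun i => ∑ k, (Y i k)^2)
        (fun i _ => Finset.sum_nonneg fun k _ => sq_nonneg _) (mem_univ i)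
    have := pow_pos (abs_pos.mpr hij) 2
    nlinarith [sq_abs (Y i j)]
  rw [htr, htrace]
  have hslack : 0 ≤ (N-1)*(N-2)*(S-D) + t^2 - 2*(N-1)*D := by linarith
  have hfirst : 0 ≤ (α*N) * ((N-1)*(N-2)*(S-D) + t^2 - 2*(N-1)*D) :=
    mul_nonneg (mul_nonneg hα.le hN0.le) hslack
  have hfac : 0 < N*(N-1)*(N-2) := by positivity
  have hqscaled : 0 < N*(N-1)*(N-2)*(α*S + β*D + γ*t^2) := by
    by_cases hD0 : D = 0
    · have ht0 : t = 0 := by nlinarith [hCS, sq_nonneg t]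
      rw [ht0, hD0]
      linarith [mul_pos (mul_pos hfac hα) hSpos]
    · have hDpos : 0 < D := lt_of_le_of_ne hDnn (Ne.symm hD0)
      by_cases ht0 : t = 0
      · have hND : 0 < N*D - t^2 := by rw [ht0]; nlinarith [mul_pos hN0 hDpos]
        have hsecond : 0 < ((N-1) * (N*α + (N-2)*β)) * (N*D - t^2) :=
          mul_pos (mul_pos hN1 h2) hND
        linarith [hfirst, hsecond, mul_nonneg (mul_nonneg hN2.le h3.le) (sq_nonneg t)]
      · have ht2 : 0 < t^2 := by positivity
        have hsecond : 0 ≤ ((N-1) * (N*α + (N-2)*β)) * (N*D - t^2) :=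
          mul_nonneg (mul_nonneg hN1.le h2.le) (by linarith)
        have hthird : 0 < ((N-2) * (N*α + (N-1)*(β + N*γ))) * t^2 :=
          mul_pos (mul_pos hN2 h3) ht2
        linarith [hfirst, hsecond, hthird]
  by_contra hq
  push_neg at hq
  nlinarith [hqscaled, mul_nonneg hfac.le (neg_nonneg.mpr hq)]

end Stmt7Aux

/-- For `n ≥ 4`, `q*(Y) = α tr(Y²) + β tr(Diag(Y)²) + γ tr(Y)²` is positive definite on
symmetric zero-row-sum matrices iff `α > 0`, `nα + (n−2)β > 0` and `nα + (n−1)(β + nγ) > 0`. -/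
theorem stmt7 (n : ℕ) (hn : 4 ≤ n) (α β γ : ℝ) :
    (∀ Y : Matrix (Fin n) (Fin n) ℝ, IsRow0 Y → Y ≠ 0 →
        0 < α * (Y * Y).trace + β * (∑ i, (Y i i) ^ 2) + γ * Y.trace ^ 2) ↔
      (0 < α ∧ 0 < (n : ℝ) * α + ((n : ℝ) - 2) * β ∧
        0 < (n : ℝ) * α + ((n : ℝ) - 1) * (β + (n : ℝ) * γ)) := by
  constructor
  · intro h
    exact ⟨wit1 n hn α β γ h, wit2 n hn α β γ h, wit3 n hn α β γ h⟩
  · rintro ⟨hα, h2, h3⟩ Y hY hne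
    exact backward n hn α β γ hα h2 h3 Y hY hne
end

section
/- The map taking a full-rank correlation matrix C to Off(log C) — the matrix logarithm of C with its diagonal zeroed — is injective: if C, C' are symmetric positive definite with unit diagonal and log C and log C' agree off the diagonal, then C = C'. -/
open Matrix BigOperators

lemma conj_exp {n : ℕ} (U A : Matrix (Fin n) (Fin n) ℝ) (h1 : star U * U = 1) :
    NormedSpace.exp (U * A * star U) = U * NormedSpace.exp A * star U := by
  have hinv : U⁻¹ = star U := inv_eq_left_inv h1
  have hunit : IsUnit U :=
    (Matrix.isUnit_iff_isUnit_det U).mpr (Matrix.isUnit_det_of_left_inverse h1)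
  have h2 := Matrix.exp_conj U A hunit
  rw [hinv] at h2
  exact h2

lemma exists_spectral {n : ℕ} {A : Matrix (Fin n) (Fin n) ℝ} (hA : A.IsHermitian) :
    ∃ (U : Matrix (Fin n) (Fin n) ℝ) (a : Fin n → ℝ),
      star U * U = 1 ∧ U * star U = 1 ∧ A = U * diagonal a * star U ∧
        mexp A = U * diagonal (fun i => Real.exp (a i)) * star U := by
  refine ⟨hA.eigenvectorUnitary, hA.eigenvalues,
    mem_unitaryGroup_iff'.mp hA.eigenvectorUnitary.2,
    mem_unitaryGroup_iff.mp hA.eigenvectorUnitary.2, ?_, ?_⟩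
  · have h := hA.spectral_theorem
    rw [RCLike.ofReal_real_eq_id, Function.id_comp] at h
    exact h
  · have h1 : star (hA.eigenvectorUnitary : Matrix (Fin n) (Fin n) ℝ)
        * (hA.eigenvectorUnitary : Matrix (Fin n) (Fin n) ℝ) = 1 :=
      mem_unitaryGroup_iff'.mp hA.eigenvectorUnitary.2
    have h := hA.spectral_theorem
    rw [RCLike.ofReal_real_eq_id, Function.id_comp, Unitary.conjStarAlgAut_apply] at h
    show NormedSpace.exp A = _
    conv_lhs => rw [h]
    rw [conj_exp _ _ h1, Matrix.exp_diagonal]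
    congr 2
    funext i
    rw [Pi.exp_def, Real.exp_eq_exp_ℝ]

lemma trace_mul_eq {n : ℕ} (M N : Matrix (Fin n) (Fin n) ℝ) :
    trace (M * N) = ∑ i, ∑ j, M i j * N j i := by
  simp [Matrix.trace, Matrix.diag, Matrix.mul_apply]

lemma trace_conj_diag {n : ℕ} (U V : Matrix (Fin n) (Fin n) ℝ)
    (hU : star U * U = 1) (hU' : U * star U = 1) (a c : Fin n → ℝ) :
    trace ((U * diagonal a * star U) * (V * diagonal c * star V)) =
      ∑ i, ∑ j, ((star U * V) i j) ^ 2 * (a i * c j) := by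
  have h1 : (U * diagonal a * star U) * (V * diagonal c * star V)
      = U * ((diagonal a * (star U * V) * diagonal c * star (star U * V)) * star U) := by
    rw [StarMul.star_mul, star_star]
    simp only [Matrix.mul_assoc]
    rw [hU', Matrix.mul_one]
  rw [h1, Matrix.trace_mul_comm, Matrix.mul_assoc, hU, Matrix.mul_one, trace_mul_eq]
  apply Finset.sum_congr rfl
  intro i _
  apply Finset.sum_congr rfl
  intro j _
  simp only [Matrix.mul_apply, Matrix.diagonal_apply, Matrix.star_apply, star_trivial]
  simp only [ite_mul, zero_mul, mul_ite, mul_zero, Finset.sum_ite_eq, Finset.sum_ite_eq',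
    Finset.mem_univ, if_true]
  ring

lemma key_s9 {n : ℕ} {A B : Matrix (Fin n) (Fin n) ℝ}
    (hA : A.IsHermitian) (hB : B.IsHermitian)
    (hdiag : ∀ i, mexp A i i = mexp B i i)
    (hoff : ∀ i j, i ≠ j → A i j = B i j) : A = B := by
  obtain ⟨U, a, hU1, hU2, specA, espA⟩ := exists_spectral hA
  obtain ⟨V, b, hV1, hV2, specB, espB⟩ := exists_spectral hB
  set W : Matrix (Fin n) (Fin n) ℝ := star U * V with hWdef
  have hWstar : star W = star V * U := by rw [hWdef, StarMul.star_mul, star_star]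
  have hW1 : W * star W = 1 := by
    rw [hWstar, hWdef, Matrix.mul_assoc, ← Matrix.mul_assoc V, hV2, Matrix.one_mul, hU1]
  have hW2 : star W * W = 1 := by
    rw [hWstar, hWdef, Matrix.mul_assoc, ← Matrix.mul_assoc U, hU2, Matrix.one_mul, hV1]
  -- row and column sums of squares
  have hrow : ∀ i, ∑ j, W i j ^ 2 = 1 := by
    intro i
    have h := congrArg (fun M : Matrix (Fin n) (Fin n) ℝ => M i i) hW1
    simp only [Matrix.mul_apply, Matrix.star_apply, star_trivial, Matrix.one_apply_eq] at h
    rw [← h]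
    exact Finset.sum_congr rfl fun j _ => (sq (W i j)).symm ▸ (pow_two (W i j))
  have hcol : ∀ j, ∑ i, W i j ^ 2 = 1 := by
    intro j
    have h := congrArg (fun M : Matrix (Fin n) (Fin n) ℝ => M j j) hW2
    simp only [Matrix.mul_apply, Matrix.star_apply, star_trivial, Matrix.one_apply_eq] at h
    rw [← h]
    exact Finset.sum_congr rfl fun i _ => by rw [pow_two]
  -- the four traces
  have tAA : trace (A * mexp A) = ∑ i, a i * Real.exp (a i) := by
    rw [espA, specA, trace_conj_diag U U hU1 hU2, hU1]
    simp [Matrix.one_apply, ite_pow]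
  have tBB : trace (B * mexp B) = ∑ i, b i * Real.exp (b i) := by
    rw [espB, specB, trace_conj_diag V V hV1 hV2, hV1]
    simp [Matrix.one_apply, ite_pow]
  have tAB : trace (A * mexp B) = ∑ i, ∑ j, W i j ^ 2 * (a i * Real.exp (b j)) := by
    rw [espB, specA, trace_conj_diag U V hU1 hU2]
  have tBA : trace (B * mexp A) = ∑ i, ∑ j, W i j ^ 2 * (b j * Real.exp (a i)) := by
    rw [espA, specB, trace_conj_diag V U hV1 hV2]
    rw [← hWstar, Finset.sum_comm]
    apply Finset.sum_congr rfl; intro i _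
    apply Finset.sum_congr rfl; intro j _
    rw [Matrix.star_apply, star_trivial]
  -- T = 0
  have hT0 : trace ((A - B) * (mexp A - mexp B)) = 0 := by
    rw [trace_mul_eq]
    apply Finset.sum_eq_zero; intro i _
    apply Finset.sum_eq_zero; intro j _
    by_cases h : j = i
    · subst h
      simp only [Matrix.sub_apply]
      rw [hdiag j, sub_self, mul_zero]
    · simp only [Matrix.sub_apply]
      rw [hoff i j (fun hij => h hij.symm), sub_self, zero_mul]
  -- T as a sum of nonnegatives
  have hTsum : trace ((A - B) * (mexp A - mexp B)) =
      ∑ i, ∑ j, W i j ^ 2 * ((a i - b j) * (Real.exp (a i) - Real.exp (b j))) := by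
    rw [Matrix.sub_mul, Matrix.mul_sub, Matrix.mul_sub, Matrix.trace_sub, Matrix.trace_sub,
      Matrix.trace_sub, tAA, tAB, tBA, tBB]
    have expand : ∀ i j, W i j ^ 2 * ((a i - b j) * (Real.exp (a i) - Real.exp (b j)))
        = W i j ^ 2 * (a i * Real.exp (a i)) - W i j ^ 2 * (a i * Real.exp (b j))
          - W i j ^ 2 * (b j * Real.exp (a i)) + W i j ^ 2 * (b j * Real.exp (b j)) := by
      intro i j; ring
    simp only [expand, Finset.sum_add_distrib, Finset.sum_sub_distrib]
    have e1 : ∑ i, ∑ j, W i j ^ 2 * (a i * Real.exp (a i)) = ∑ i, a i * Real.exp (a i) := by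
      apply Finset.sum_congr rfl; intro i _
      rw [← Finset.sum_mul, hrow i, one_mul]
    have e2 : ∑ i, ∑ j, W i j ^ 2 * (b j * Real.exp (b j)) = ∑ j, b j * Real.exp (b j) := by
      rw [Finset.sum_comm]
      apply Finset.sum_congr rfl; intro j _
      rw [← Finset.sum_mul, hcol j, one_mul]
    rw [e1, e2]
    ring
  have hsum0 : ∑ i, ∑ j, W i j ^ 2 * ((a i - b j) * (Real.exp (a i) - Real.exp (b j))) = 0 := by
    rw [← hTsum, hT0]
  have hnonneg : ∀ i j, (0:ℝ) ≤ W i j ^ 2 * ((a i - b j) * (Real.exp (a i) - Real.exp (b j))) := by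
    intro i j
    apply mul_nonneg (sq_nonneg _)
    rcases le_total (a i) (b j) with h | h
    · have := Real.exp_le_exp.mpr h; nlinarith
    · have := Real.exp_le_exp.mpr h; nlinarith
  have hzero : ∀ i j, W i j ^ 2 * ((a i - b j) * (Real.exp (a i) - Real.exp (b j))) = 0 := by
    intro i j
    have houter := (Finset.sum_eq_zero_iff_of_nonneg
      (fun i _ => Finset.sum_nonneg (fun j _ => hnonneg i j))).mp hsum0 i (Finset.mem_univ i)
    exact (Finset.sum_eq_zero_iff_of_nonneg (fun j _ => hnonneg i j)).mp
      houter j (Finset.mem_univ j)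
  have hab : ∀ i j, W i j ≠ 0 → a i = b j := by
    intro i j hWij
    have h := hzero i j
    have hP : W i j ^ 2 ≠ 0 := pow_ne_zero _ hWij
    have h2 : (a i - b j) * (Real.exp (a i) - Real.exp (b j)) = 0 :=
      (mul_eq_zero.mp h).resolve_left hP
    by_contra hne
    rcases lt_or_gt_of_ne hne with hlt | hgt
    · have := Real.exp_lt_exp.mpr hlt; nlinarith
    · have := Real.exp_lt_exp.mpr hgt; nlinarith
  have hDW : diagonal a * W = W * diagonal b := by
    ext i j
    rw [Matrix.diagonal_mul, Matrix.mul_diagonal]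
    by_cases h : W i j = 0
    · rw [h]; ring
    · rw [hab i j h]; ring
  have hWV : W * star V = star U := by
    rw [hWdef, Matrix.mul_assoc, hV2, Matrix.mul_one]
  have hUW : U * W = V := by
    rw [hWdef, ← Matrix.mul_assoc, hU2, Matrix.one_mul]
  calc A = U * diagonal a * star U := specA
    _ = U * diagonal a * (W * star V) := by rw [hWV]
    _ = U * (diagonal a * W) * star V := by simp only [Matrix.mul_assoc]
    _ = U * (W * diagonal b) * star V := by rw [hDW]
    _ = (U * W) * diagonal b * star V := by simp only [Matrix.mul_assoc]
    _ = V * diagonal b * star V := by rw [hUW]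
    _ = B := specB.symm

/-- The off-log map is injective: if `C, C'` are full-rank correlation matrices whose
(principal, symmetric) logarithms `S, S'` agree off the diagonal, then `C = C'`. -/
theorem stmt9 (n : ℕ) (C C' S S' : Matrix (Fin n) (Fin n) ℝ)
    (hC : IsCorr C) (hC' : IsCorr C') (hS : S.IsSymm) (hS' : S'.IsSymm)
    (heS : mexp S = C) (heS' : mexp S' = C')
    (hoff : ∀ i j, i ≠ j → S i j = S' i j) : C = C' := by
  have hSH : S.IsHermitian := by
    rw [Matrix.IsHermitian, Matrix.conjTranspose_eq_transpose_of_trivial]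
    exact hS
  have hSH' : S'.IsHermitian := by
    rw [Matrix.IsHermitian, Matrix.conjTranspose_eq_transpose_of_trivial]
    exact hS'
  have hdiag : ∀ i, mexp S i i = mexp S' i i := by
    intro i
    rw [heS, heS', hC.2 i, hC'.2 i]
  have hSS : S = S' := key_s9 hSH hSH' hdiag hoff
  rw [← heS, ← heS', hSS]
end

section
/- The off-log map Log: Cor⁺(n) → Hol(n), C ↦ Off(log C), is a bijection, with inverse given by S ↦ exp(D(S) + S), where D(S) is the unique diagonal matrix such that exp(D(S)+S) has unit diagonal. -/
open Matrix BigOperators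

namespace AH

variable {n : ℕ}

local notation "Mat" => Matrix (Fin n) (Fin n) ℝ

lemma isHermitian_of_isSymm {A : Mat} (h : A.IsSymm) : A.IsHermitian := by
  rwa [Matrix.IsHermitian, Matrix.conjTranspose_eq_transpose_of_trivial]

lemma isSymm_of_isHermitian {A : Mat} (h : A.IsHermitian) : A.IsSymm := by
  rwa [Matrix.IsHermitian, Matrix.conjTranspose_eq_transpose_of_trivial] at h

lemma spectral' {A : Mat} (hA : A.IsHermitian) :
    A = (hA.eigenvectorUnitary : Mat) * Matrix.diagonal hA.eigenvalues *
      star (hA.eigenvectorUnitary : Mat) := by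
  have := hA.spectral_theorem
  rwa [RCLike.ofReal_real_eq_id, Function.id_comp] at this

lemma mexp_unitary_conj (U : Matrix.unitaryGroup (Fin n) ℝ) (D : Mat) :
    mexp ((U : Mat) * D * star (U : Mat)) = (U : Mat) * mexp D * star (U : Mat) := by
  have h := Matrix.exp_units_conj (Unitary.toUnits U) D
  simpa [mexp, Unitary.toUnits] using h

lemma mexp_spectral {A : Mat} (hA : A.IsHermitian) :
    mexp A = (hA.eigenvectorUnitary : Mat) * Matrix.diagonal (Real.exp ∘ hA.eigenvalues) *
      star (hA.eigenvectorUnitary : Mat) := by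
  conv_lhs => rw [spectral' hA]
  rw [mexp_unitary_conj]
  congr 2
  rw [mexp, Matrix.exp_diagonal, Pi.exp_def, ← Real.exp_eq_exp_ℝ]
  rfl

end AH

namespace AH
variable {n : ℕ}
local notation "Mat" => Matrix (Fin n) (Fin n) ℝ

lemma trace_isDiag_mul {Δ X : Mat} (hΔ : Δ.IsDiag) :
    Matrix.trace (Δ * X) = ∑ i, Δ i i * X i i := by
  unfold Matrix.trace
  refine Finset.sum_congr rfl fun i _ => ?_
  rw [Matrix.diag_apply, Matrix.mul_apply]
  refine Finset.sum_eq_single i (fun j _ hji => ?_) (by simp)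
  rw [hΔ (Ne.symm hji), zero_mul]

lemma star_apply_real {W : Mat} (i j : Fin n) : (star W) i j = W j i := by
  simp [Matrix.star_apply]

lemma row_sq_sum {W : Mat} (hW : W * star W = 1) (i : Fin n) : ∑ j, (W i j)^2 = 1 := by
  have := congrFun (congrFun hW i) i
  rw [Matrix.mul_apply] at this
  simp only [star_apply_real] at this
  simpa [sq, Matrix.one_apply] using this

lemma col_sq_sum {W : Mat} (hW : star W * W = 1) (j : Fin n) : ∑ i, (W i j)^2 = 1 := by
  have := congrFun (congrFun hW j) j
  rw [Matrix.mul_apply] at this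
  simp only [star_apply_real] at this
  simpa [sq, Matrix.one_apply] using this

lemma trace_spec (U V : Matrix.unitaryGroup (Fin n) ℝ) (a b : Fin n → ℝ) :
    Matrix.trace (((U : Mat) * Matrix.diagonal a * star (U : Mat)) *
      ((V : Mat) * Matrix.diagonal b * star (V : Mat))) =
    ∑ i, ∑ j, a i * b j * ((star (U : Mat) * (V : Mat)) i j)^2 := by
  set W : Mat := star (U : Mat) * (V : Mat) with hWdef
  have hsW : star (V : Mat) * (U : Mat) = star W := by
    rw [hWdef, StarMul.star_mul, star_star]
  calc Matrix.trace (((U : Mat) * Matrix.diagonal a * star (U : Mat)) *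
        ((V : Mat) * Matrix.diagonal b * star (V : Mat)))
      = Matrix.trace (((U : Mat) * Matrix.diagonal a) *
          (star (U : Mat) * ((V : Mat) * Matrix.diagonal b * star (V : Mat)))) := by
        noncomm_ring
    _ = Matrix.trace ((star (U : Mat) * ((V : Mat) * Matrix.diagonal b * star (V : Mat))) *
          ((U : Mat) * Matrix.diagonal a)) := Matrix.trace_mul_comm _ _
    _ = Matrix.trace ((W * Matrix.diagonal b * (star (V : Mat) * (U : Mat))) *
          Matrix.diagonal a) := by rw [hWdef]; noncomm_ring
    _ = Matrix.trace (Matrix.diagonal a * (W * Matrix.diagonal b * star W)) := by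
        rw [hsW, Matrix.trace_mul_comm]
    _ = ∑ i, a i * ((W * Matrix.diagonal b * star W) i i) := by
        rw [trace_isDiag_mul (Matrix.isDiag_diagonal a)]
        simp [Matrix.diagonal_apply_eq]
    _ = ∑ i, ∑ j, a i * b j * (W i j)^2 := by
        refine Finset.sum_congr rfl fun i _ => ?_
        rw [Matrix.mul_apply, Finset.mul_sum]
        refine Finset.sum_congr rfl fun j _ => ?_
        rw [Matrix.mul_diagonal, star_apply_real]
        ring

end AH

namespace AH
variable {n : ℕ}
local notation "Mat" => Matrix (Fin n) (Fin n) ℝ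

lemma eq_of_trace_nonpos {A B : Mat} (hA : A.IsSymm) (hB : B.IsSymm)
    (h : Matrix.trace ((A - B) * (mexp A - mexp B)) ≤ 0) : A = B := by
  classical
  have hA' := isHermitian_of_isSymm hA
  have hB' := isHermitian_of_isSymm hB
  set U := hA'.eigenvectorUnitary with hUdef
  set V := hB'.eigenvectorUnitary with hVdef
  set lam := hA'.eigenvalues with hlamdef
  set mu := hB'.eigenvalues with hmudef
  have hUU : (U : Mat) * star (U : Mat) = 1 := Matrix.mem_unitaryGroup_iff.mp U.2
  have hUU' : star (U : Mat) * (U : Mat) = 1 := Matrix.mem_unitaryGroup_iff'.mp U.2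
  have hVV : (V : Mat) * star (V : Mat) = 1 := Matrix.mem_unitaryGroup_iff.mp V.2
  have hVV' : star (V : Mat) * (V : Mat) = 1 := Matrix.mem_unitaryGroup_iff'.mp V.2
  set W : Mat := star (U : Mat) * (V : Mat) with hWdef
  have hsW : star (V : Mat) * (U : Mat) = star W := by
    rw [hWdef, StarMul.star_mul, star_star]
  have hW1 : W * star W = 1 := by
    rw [hWdef, ← hsW, mul_assoc, ← mul_assoc (V : Mat), hVV, one_mul, hUU']
  have hW2 : star W * W = 1 := by
    rw [hWdef, ← hsW, mul_assoc, ← mul_assoc (U : Mat), hUU, one_mul, hVV']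
  -- the four traces
  have hT2 : Matrix.trace (A * mexp B) = ∑ i, ∑ j, lam i * Real.exp (mu j) * (W i j)^2 := by
    have e : A * mexp B = ((U : Mat) * Matrix.diagonal lam * star (U : Mat)) *
        ((V : Mat) * Matrix.diagonal (Real.exp ∘ mu) * star (V : Mat)) := by
      rw [← spectral' hA', ← mexp_spectral hB']
    rw [e]; exact trace_spec U V lam (Real.exp ∘ mu)
  have hT3 : Matrix.trace (B * mexp A) = ∑ i, ∑ j, mu j * Real.exp (lam i) * (W i j)^2 := by
    have e : B * mexp A = ((V : Mat) * Matrix.diagonal mu * star (V : Mat)) *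
        ((U : Mat) * Matrix.diagonal (Real.exp ∘ lam) * star (U : Mat)) := by
      rw [← spectral' hB', ← mexp_spectral hA']
    rw [e, trace_spec V U mu (Real.exp ∘ lam)]
    rw [Finset.sum_comm]
    refine Finset.sum_congr rfl fun i _ => Finset.sum_congr rfl fun j _ => ?_
    rw [hsW, star_apply_real]; rfl
  have hT1 : Matrix.trace (A * mexp A) = ∑ i, lam i * Real.exp (lam i) := by
    have e : A * mexp A = ((U : Mat) * Matrix.diagonal lam * star (U : Mat)) *
        ((U : Mat) * Matrix.diagonal (Real.exp ∘ lam) * star (U : Mat)) := by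
      rw [← spectral' hA', ← mexp_spectral hA']
    rw [e, trace_spec U U lam (Real.exp ∘ lam), hUU']
    refine Finset.sum_congr rfl fun i _ => ?_
    rw [Finset.sum_eq_single i (fun j _ hji => by
      simp [Matrix.one_apply_ne' hji]) (by simp)]
    simp [Matrix.one_apply]
  have hT4 : Matrix.trace (B * mexp B) = ∑ j, mu j * Real.exp (mu j) := by
    have e : B * mexp B = ((V : Mat) * Matrix.diagonal mu * star (V : Mat)) *
        ((V : Mat) * Matrix.diagonal (Real.exp ∘ mu) * star (V : Mat)) := by
      rw [← spectral' hB', ← mexp_spectral hB']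
    rw [e, trace_spec V V mu (Real.exp ∘ mu), hVV']
    refine Finset.sum_congr rfl fun i _ => ?_
    rw [Finset.sum_eq_single i (fun j _ hji => by
      simp [Matrix.one_apply_ne' hji]) (by simp)]
    simp [Matrix.one_apply]
  -- rewrite the trace hypothesis
  have hsum : ∑ i, ∑ j, (lam i - mu j) * (Real.exp (lam i) - Real.exp (mu j)) * (W i j)^2 ≤ 0 := by
    have expand : ∀ i j : Fin n,
        (lam i - mu j) * (Real.exp (lam i) - Real.exp (mu j)) * (W i j)^2
        = lam i * Real.exp (lam i) * (W i j)^2 - lam i * Real.exp (mu j) * (W i j)^2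
          - mu j * Real.exp (lam i) * (W i j)^2 + mu j * Real.exp (mu j) * (W i j)^2 :=
      fun i j => by ring
    have e1 : ∑ i, ∑ j, lam i * Real.exp (lam i) * (W i j)^2 = ∑ i, lam i * Real.exp (lam i) := by
      refine Finset.sum_congr rfl fun i _ => ?_
      rw [← Finset.mul_sum, row_sq_sum hW1, mul_one]
    have e4 : ∑ i, ∑ j, mu j * Real.exp (mu j) * (W i j)^2 = ∑ j, mu j * Real.exp (mu j) := by
      rw [Finset.sum_comm]
      refine Finset.sum_congr rfl fun j _ => ?_
      rw [← Finset.mul_sum, col_sq_sum hW2, mul_one]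
    calc ∑ i, ∑ j, (lam i - mu j) * (Real.exp (lam i) - Real.exp (mu j)) * (W i j)^2
        = ∑ i, ∑ j, (lam i * Real.exp (lam i) * (W i j)^2
            - lam i * Real.exp (mu j) * (W i j)^2
            - mu j * Real.exp (lam i) * (W i j)^2 + mu j * Real.exp (mu j) * (W i j)^2) := by
          exact Finset.sum_congr rfl fun i _ => Finset.sum_congr rfl fun j _ => expand i j
      _ = Matrix.trace (A * mexp A) - Matrix.trace (A * mexp B) - Matrix.trace (B * mexp A)
            + Matrix.trace (B * mexp B) := by
          simp only [Finset.sum_add_distrib, Finset.sum_sub_distrib]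
          rw [e1, e4, hT1, hT2, hT3, hT4]
      _ = Matrix.trace ((A - B) * (mexp A - mexp B)) := by
          simp only [Matrix.sub_mul, Matrix.mul_sub, Matrix.trace_sub]
          ring
      _ ≤ 0 := h
  have nonneg : ∀ i ∈ Finset.univ (α := Fin n), ∀ j ∈ Finset.univ (α := Fin n),
      0 ≤ (lam i - mu j) * (Real.exp (lam i) - Real.exp (mu j)) * (W i j)^2 := by
    intro i _ j _
    have h1 : 0 ≤ (lam i - mu j) * (Real.exp (lam i) - Real.exp (mu j)) := by
      rcases le_total (lam i) (mu j) with hle | hle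
      · have := Real.exp_le_exp.2 hle; nlinarith
      · have := Real.exp_le_exp.2 hle; nlinarith
    exact mul_nonneg h1 (sq_nonneg _)
  have hzero : ∀ i j : Fin n,
      (lam i - mu j) * (Real.exp (lam i) - Real.exp (mu j)) * (W i j)^2 = 0 := by
    have htot : ∑ i, ∑ j, (lam i - mu j) * (Real.exp (lam i) - Real.exp (mu j)) * (W i j)^2
        = 0 :=
      le_antisymm hsum (Finset.sum_nonneg fun i hi => Finset.sum_nonneg (nonneg i hi))
    intro i j
    have hrow := (Finset.sum_eq_zero_iff_of_nonneg
      (fun i hi => Finset.sum_nonneg (nonneg i hi))).mp htot i (Finset.mem_univ i)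
    exact (Finset.sum_eq_zero_iff_of_nonneg (nonneg i (Finset.mem_univ i))).mp hrow j
      (Finset.mem_univ j)
  have hkey : ∀ i j : Fin n, W i j ≠ 0 → lam i = mu j := by
    intro i j hw
    have h0 : (lam i - mu j) * (Real.exp (lam i) - Real.exp (mu j)) = 0 := by
      have := hzero i j
      have hsq : (W i j)^2 ≠ 0 := pow_ne_zero _ hw
      exact (mul_eq_zero.mp this).resolve_right hsq
    by_contra hne
    rcases Ne.lt_or_gt hne with hlt | hlt
    · have := Real.exp_lt_exp.2 hlt; nlinarith
    · have := Real.exp_lt_exp.2 hlt; nlinarith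
  -- conclude A = B
  have hDW : Matrix.diagonal lam * W = W * Matrix.diagonal mu := by
    ext i j
    rw [Matrix.diagonal_mul, Matrix.mul_diagonal]
    by_cases hw : W i j = 0
    · simp [hw]
    · rw [hkey i j hw]; ring
  have hUW : (U : Mat) * W = (V : Mat) := by
    rw [hWdef, ← mul_assoc, hUU, one_mul]
  have hAV : A * (V : Mat) = (V : Mat) * Matrix.diagonal mu := by
    rw [show A * (V : Mat) = (U : Mat) * Matrix.diagonal lam * star (U : Mat) * (V : Mat) by
      rw [← spectral' hA']]
    calc (U : Mat) * Matrix.diagonal lam * star (U : Mat) * (V : Mat)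
        = (U : Mat) * (Matrix.diagonal lam * W) := by rw [hWdef]; noncomm_ring
      _ = (U : Mat) * (W * Matrix.diagonal mu) := by rw [hDW]
      _ = (V : Mat) * Matrix.diagonal mu := by rw [← mul_assoc, hUW]
  have hBV : B * (V : Mat) = (V : Mat) * Matrix.diagonal mu := by
    rw [show B * (V : Mat) = (V : Mat) * Matrix.diagonal mu * star (V : Mat) * (V : Mat) by
      rw [← spectral' hB']]
    calc (V : Mat) * Matrix.diagonal mu * star (V : Mat) * (V : Mat)
        = (V : Mat) * Matrix.diagonal mu * (star (V : Mat) * (V : Mat)) := by noncomm_ring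
      _ = (V : Mat) * Matrix.diagonal mu := by rw [hVV', mul_one]
  calc A = A * ((V : Mat) * star (V : Mat)) := by rw [hVV, mul_one]
    _ = (A * (V : Mat)) * star (V : Mat) := by rw [mul_assoc]
    _ = (B * (V : Mat)) * star (V : Mat) := by rw [hAV, hBV]
    _ = B * ((V : Mat) * star (V : Mat)) := by rw [mul_assoc]
    _ = B := by rw [hVV, mul_one]

end AH

namespace AH
variable {n : ℕ}
local notation "Mat" => Matrix (Fin n) (Fin n) ℝ

lemma mexp_diagonal (v : Fin n → ℝ) :
    mexp (Matrix.diagonal v) = Matrix.diagonal (Real.exp ∘ v) := by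
  rw [mexp, Matrix.exp_diagonal, Pi.exp_def, ← Real.exp_eq_exp_ℝ]
  rfl

lemma mexp_isSymm {A : Mat} (hA : A.IsSymm) : (mexp A).IsSymm :=
  Matrix.IsSymm.exp hA

lemma mexp_isHermitian {A : Mat} (hA : A.IsSymm) : (mexp A).IsHermitian :=
  isHermitian_of_isSymm (mexp_isSymm hA)

lemma mexp_posDef {A : Mat} (hA : A.IsSymm) : (mexp A).PosDef := by
  classical
  set B : Mat := mexp ((2⁻¹ : ℝ) • A) with hBdef
  have hAsplit : A = (2⁻¹ : ℝ) • A + (2⁻¹ : ℝ) • A := by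
    rw [← add_smul]; norm_num
  have hsplit : mexp A = B * B := by
    rw [hBdef, mexp, mexp]
    conv_lhs => rw [hAsplit]
    exact Matrix.exp_add_of_commute _ _ (Commute.refl _)
  have hBherm : B.IsHermitian := by
    refine mexp_isHermitian ?_
    unfold Matrix.IsSymm
    rw [Matrix.transpose_smul, hA]
  refine Matrix.PosDef.of_dotProduct_mulVec_pos (mexp_isHermitian hA) fun x hx => ?_
  have hBunit : IsUnit B := Matrix.isUnit_exp _
  have hBx : B *ᵥ x ≠ 0 := by
    intro h0
    have hdet : IsUnit B.det := (Matrix.isUnit_iff_isUnit_det B).mp hBunit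
    have : x = (B⁻¹ * B) *ᵥ x := by rw [Matrix.nonsing_inv_mul B hdet, Matrix.one_mulVec]
    rw [← Matrix.mulVec_mulVec, h0, Matrix.mulVec_zero] at this
    exact hx this
  have hBB : B * B = Bᴴ * B := by rw [hBherm.eq]
  rw [hsplit, hBB, ← Matrix.mulVec_mulVec, Matrix.dotProduct_mulVec,
    Matrix.vecMul_conjTranspose, star_star]
  obtain ⟨i0, hi0⟩ := Function.ne_iff.mp hBx
  refine Finset.sum_pos' (fun i _ => star_mul_self_nonneg _) ⟨i0, Finset.mem_univ i0, ?_⟩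
  have hpos : (0:ℝ) < (B *ᵥ x) i0 * (B *ᵥ x) i0 := mul_self_pos.mpr hi0
  simpa using hpos

lemma conj_diag_entry (Umat : Mat) (v : Fin n → ℝ) (i : Fin n) :
    (Umat * Matrix.diagonal v * star Umat) i i = ∑ k, v k * (Umat i k)^2 := by
  rw [Matrix.mul_apply]
  refine Finset.sum_congr rfl fun k _ => ?_
  rw [Matrix.mul_diagonal, star_apply_real]
  ring

lemma exp_diag_le {A : Mat} (hA : A.IsSymm) (i : Fin n) :
    Real.exp (A i i) ≤ (mexp A) i i := by
  have hA' := isHermitian_of_isSymm hA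
  set U := hA'.eigenvectorUnitary with hUdef
  set lam := hA'.eigenvalues with hlamdef
  have hUU : (U : Mat) * star (U : Mat) = 1 := Matrix.mem_unitaryGroup_iff.mp U.2
  have hAii : A i i = ∑ k, lam k * ((U : Mat) i k)^2 := by
    conv_lhs => rw [spectral' hA']
    exact conj_diag_entry _ _ i
  have hEii : (mexp A) i i = ∑ k, Real.exp (lam k) * ((U : Mat) i k)^2 := by
    conv_lhs => rw [mexp_spectral hA']
    exact conj_diag_entry _ _ i
  rw [hAii, hEii]
  have hw : ∑ k, ((U : Mat) i k)^2 = 1 := row_sq_sum hUU i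
  have hj := convexOn_exp.map_sum_le (t := Finset.univ)
    (w := fun k => ((U : Mat) i k)^2) (p := lam)
    (fun k _ => sq_nonneg _) hw (fun k _ => Set.mem_univ _)
  calc Real.exp (∑ k, lam k * ((U : Mat) i k)^2)
      = Real.exp (∑ k, ((U : Mat) i k)^2 • lam k) := by
        congr 1; exact Finset.sum_congr rfl fun k _ => by simp [smul_eq_mul]; ring
    _ ≤ ∑ k, ((U : Mat) i k)^2 • Real.exp (lam k) := hj
    _ = ∑ k, Real.exp (lam k) * ((U : Mat) i k)^2 := by
        exact Finset.sum_congr rfl fun k _ => by simp [smul_eq_mul]; ring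

lemma exists_symm_log {C : Mat} (hC : C.PosDef) : ∃ L : Mat, L.IsSymm ∧ mexp L = C := by
  have hC' : C.IsHermitian := hC.1
  set U := hC'.eigenvectorUnitary with hUdef
  set lam := hC'.eigenvalues with hlamdef
  have hpos : ∀ i, 0 < lam i := hC.eigenvalues_pos
  refine ⟨(U : Mat) * Matrix.diagonal (Real.log ∘ lam) * star (U : Mat), ?_, ?_⟩
  · apply isSymm_of_isHermitian
    have hD : (Matrix.diagonal (Real.log ∘ lam))ᴴ = Matrix.diagonal (Real.log ∘ lam) := by
      ext i j
      by_cases hij : i = j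
      · subst hij; simp [Matrix.conjTranspose_apply]
      · simp [Matrix.conjTranspose_apply, Matrix.diagonal_apply_ne, hij, Ne.symm hij]
    unfold Matrix.IsHermitian
    simp only [Matrix.star_eq_conjTranspose, Matrix.conjTranspose_mul,
      Matrix.conjTranspose_conjTranspose]
    rw [hD, ← Matrix.mul_assoc]
  · rw [show (U : Mat) * Matrix.diagonal (Real.log ∘ lam) * star (U : Mat)
        = (U : Mat) * Matrix.diagonal (Real.log ∘ lam) * star (U : Mat) from rfl]
    rw [mexp_unitary_conj U (Matrix.diagonal (Real.log ∘ lam)), mexp_diagonal]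
    have : Real.exp ∘ (Real.log ∘ lam) = lam := by
      funext k
      exact Real.exp_log (hpos k)
    rw [show Real.exp ∘ (Real.log ∘ lam) = lam from this]
    exact (spectral' hC').symm

lemma mexp_inj {A B : Mat} (hA : A.IsSymm) (hB : B.IsSymm) (h : mexp A = mexp B) : A = B := by
  refine eq_of_trace_nonpos hA hB ?_
  rw [h, sub_self, Matrix.mul_zero, Matrix.trace_zero]

lemma mlog_mexp {S : Mat} (hS : S.IsSymm) : mlog (mexp S) = S := by
  classical
  have hex : ∃ L : Mat, L.IsSymm ∧ mexp L = mexp S := ⟨S, hS, rfl⟩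
  rw [mlog, dif_pos hex]
  obtain ⟨h1, h2⟩ := hex.choose_spec
  exact mexp_inj h1 hS h2

lemma mlog_spec {C : Mat} (hC : C.PosDef) : (mlog C).IsSymm ∧ mexp (mlog C) = C := by
  classical
  obtain ⟨L, hL, hLC⟩ := exists_symm_log hC
  have hex : ∃ L : Mat, L.IsSymm ∧ mexp L = C := ⟨L, hL, hLC⟩
  rw [mlog, dif_pos hex]
  exact hex.choose_spec

end AH

namespace AH
variable {n : ℕ}
local notation "Mat" => Matrix (Fin n) (Fin n) ℝ

section Deriv

attribute [local instance] Matrix.linftyOpNormedAddCommGroup Matrix.linftyOpNormedRing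
  Matrix.linftyOpNormedAlgebra

noncomputable def traceCLM (n : ℕ) : Matrix (Fin n) (Fin n) ℝ →L[ℝ] ℝ :=
  LinearMap.toContinuousLinearMap (Matrix.traceLinearMap (Fin n) ℝ ℝ)

@[simp] lemma traceCLM_apply (X : Mat) : traceCLM n X = Matrix.trace X := rfl

lemma abs_trace_le (X : Mat) : |Matrix.trace X| ≤ n * ‖X‖ := by
  have hentry : ∀ i : Fin n, |X i i| ≤ ‖X‖ := by
    intro i
    rw [Matrix.linfty_opNorm_def]
    have h1 : ‖X i i‖₊ ≤ ∑ j, ‖X i j‖₊ :=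
      Finset.single_le_sum (f := fun j => ‖X i j‖₊) (fun _ _ => zero_le) (Finset.mem_univ i)
    have h2 : (∑ j, ‖X i j‖₊) ≤ Finset.univ.sup (fun i => ∑ j, ‖X i j‖₊) :=
      Finset.le_sup (f := fun i => ∑ j, ‖X i j‖₊) (Finset.mem_univ i)
    calc |X i i| = (‖X i i‖₊ : ℝ) := by rw [coe_nnnorm, Real.norm_eq_abs]
      _ ≤ _ := NNReal.coe_le_coe.mpr (h1.trans h2)
  calc |Matrix.trace X| = |∑ i, X i i| := rfl
    _ ≤ ∑ i : Fin n, |X i i| := Finset.abs_sum_le_sum_abs _ _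
    _ ≤ ∑ _i : Fin n, ‖X‖ := Finset.sum_le_sum fun i _ => hentry i
    _ = n * ‖X‖ := by rw [Finset.sum_const, Finset.card_univ, Fintype.card_fin, nsmul_eq_mul]

lemma hasDerivAt_matrix_pow (M Δ : Mat) (k : ℕ) (t : ℝ) :
    HasDerivAt (fun s : ℝ => (M + s • Δ)^k)
      (∑ j ∈ Finset.range k, (M + t • Δ)^j * Δ * (M + t • Δ)^(k - 1 - j)) t := by
  induction k with
  | zero =>
    simp only [pow_zero, Finset.range_zero, Finset.sum_empty]
    exact hasDerivAt_const t (1 : Mat)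
  | succ k ih =>
    have hbase : HasDerivAt (fun s : ℝ => M + s • Δ) Δ t := by
      have := ((hasDerivAt_id' t).smul_const Δ).const_add M
      rw [one_smul] at this
      exact this
    have hmul := hbase.mul ih
    have hfun : (fun s : ℝ => (M + s • Δ)^(k+1)) = fun s => (M + s • Δ) * (M + s • Δ)^k := by
      funext s; rw [pow_succ']
    have hval : Δ * (M + t • Δ)^k + (M + t • Δ) *
        (∑ j ∈ Finset.range k, (M + t • Δ)^j * Δ * (M + t • Δ)^(k - 1 - j))
        = ∑ j ∈ Finset.range (k+1), (M + t • Δ)^j * Δ * (M + t • Δ)^(k + 1 - 1 - j) := by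
      rw [Finset.sum_range_succ']
      simp only [pow_zero, one_mul, Nat.add_sub_cancel, Nat.succ_sub_one]
      rw [Finset.mul_sum]
      rw [add_comm]
      congr 1
      refine Finset.sum_congr rfl fun j hj => ?_
      have : (M + t • Δ)^(j+1) = (M + t • Δ) * (M + t • Δ)^j := pow_succ' _ _
      rw [this]
      have hexp : k - (j + 1) = k - 1 - j := by omega
      rw [hexp]
      noncomm_ring
    rw [hfun]
    exact hval ▸ hmul

noncomputable def Ftr (M Δ : Mat) (k : ℕ) (t : ℝ) : ℝ :=
  ((k.factorial : ℝ))⁻¹ * Matrix.trace ((M + t • Δ)^k)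

noncomputable def Ftr' (M Δ : Mat) (k : ℕ) (t : ℝ) : ℝ :=
  ((k.factorial : ℝ))⁻¹ * (k * Matrix.trace ((M + t • Δ)^(k-1) * Δ))

lemma hasDerivAt_Ftr (M Δ : Mat) (k : ℕ) (t : ℝ) :
    HasDerivAt (Ftr M Δ k) (Ftr' M Δ k t) t := by
  have h := hasDerivAt_matrix_pow M Δ k t
  have h2 := (traceCLM n).hasFDerivAt.comp_hasDerivAt t h
  have h3 : HasDerivAt (fun s : ℝ => Matrix.trace ((M + s • Δ)^k))
      (k * Matrix.trace ((M + t • Δ)^(k-1) * Δ)) t := by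
    have hval : traceCLM n (∑ j ∈ Finset.range k, (M + t • Δ)^j * Δ * (M + t • Δ)^(k - 1 - j))
        = k * Matrix.trace ((M + t • Δ)^(k-1) * Δ) := by
      rw [traceCLM_apply, Matrix.trace_sum]
      have : ∀ j ∈ Finset.range k,
          Matrix.trace ((M + t • Δ)^j * Δ * (M + t • Δ)^(k - 1 - j))
          = Matrix.trace ((M + t • Δ)^(k-1) * Δ) := by
        intro j hj
        rw [Matrix.trace_mul_cycle]
        congr 2
        rw [← pow_add]
        congr 1
        have := Finset.mem_range.mp hj
        omega
      rw [Finset.sum_congr rfl this, Finset.sum_const, Finset.card_range, nsmul_eq_mul]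
    rw [← hval]
    exact h2
  exact h3.const_mul _

end Deriv

end AH

namespace AH
variable {n : ℕ}
local notation "Mat" => Matrix (Fin n) (Fin n) ℝ

section Deriv2

attribute [local instance] Matrix.linftyOpNormedAddCommGroup Matrix.linftyOpNormedRing
  Matrix.linftyOpNormedAlgebra

noncomputable def ubnd (M Δ : Mat) : ℕ → ℝ := fun k =>
  if k = 0 then 0 else (n : ℝ) * ‖Δ‖ * ((‖M‖ + ‖Δ‖)^(k-1) / (k-1).factorial)

lemma ubnd_summable (M Δ : Mat) : Summable (ubnd M Δ) := by
  apply (summable_nat_add_iff 1).mp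
  have h : (fun k : ℕ => ubnd M Δ (k+1))
      = fun k : ℕ => (n : ℝ) * ‖Δ‖ * ((‖M‖ + ‖Δ‖)^k / k.factorial) := by
    funext k; simp [ubnd]
  rw [h]
  exact (Real.summable_pow_div_factorial (‖M‖ + ‖Δ‖)).mul_left _

lemma Ftr'_bound (M Δ : Mat) {t : ℝ} (ht : |t| ≤ 1) (k : ℕ) :
    ‖Ftr' M Δ k t‖ ≤ ubnd M Δ k := by
  cases k with
  | zero => simp [Ftr', ubnd]
  | succ k =>
    have hf : ‖M + t • Δ‖ ≤ ‖M‖ + ‖Δ‖ := by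
      refine (norm_add_le _ _).trans ?_
      have : ‖t • Δ‖ ≤ ‖Δ‖ := by
        rw [norm_smul, Real.norm_eq_abs]
        exact mul_le_of_le_one_left (norm_nonneg _) ht
      linarith
    have htr : |Matrix.trace ((M + t • Δ)^k * Δ)| ≤ n * ((‖M‖ + ‖Δ‖)^k * ‖Δ‖) := by
      refine (abs_trace_le _).trans ?_
      have hmul : ‖(M + t • Δ)^k * Δ‖ ≤ (‖M‖ + ‖Δ‖)^k * ‖Δ‖ := by
        cases Nat.eq_zero_or_pos k with
        | inl h0 =>
          subst h0
          simp
        | inr hpos =>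
          refine (norm_mul_le _ _).trans ?_
          have h1 : ‖(M + t • Δ)^k‖ ≤ ‖M + t • Δ‖^k := norm_pow_le' _ hpos
          have h2 : ‖M + t • Δ‖^k ≤ (‖M‖ + ‖Δ‖)^k :=
            pow_le_pow_left₀ (norm_nonneg _) hf k
          exact mul_le_mul_of_nonneg_right (h1.trans h2) (norm_nonneg _)
      exact mul_le_mul_of_nonneg_left hmul (Nat.cast_nonneg n)
    have hfact : (((k+1).factorial : ℝ))⁻¹ * ((k:ℝ)+1) = ((k.factorial : ℝ))⁻¹ := by
      rw [Nat.factorial_succ]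
      push_cast
      rw [mul_inv]
      have : ((k:ℝ)+1) ≠ 0 := by positivity
      field_simp
    simp only [Ftr', Real.norm_eq_abs, Nat.add_sub_cancel]
    rw [abs_mul, abs_mul]
    rw [abs_of_nonneg (by positivity : (0:ℝ) ≤ (((k+1).factorial : ℝ))⁻¹), Nat.abs_cast]
    calc (((k+1).factorial : ℝ))⁻¹ * (((k+1 : ℕ) : ℝ) * |Matrix.trace ((M + t • Δ)^k * Δ)|)
        = ((k.factorial : ℝ))⁻¹ * |Matrix.trace ((M + t • Δ)^k * Δ)| := by
          rw [← mul_assoc]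
          push_cast
          rw [hfact]
      _ ≤ ((k.factorial : ℝ))⁻¹ * ((n : ℝ) * ((‖M‖ + ‖Δ‖)^k * ‖Δ‖)) :=
          mul_le_mul_of_nonneg_left htr (by positivity)
      _ = ubnd M Δ (k+1) := by
          simp only [ubnd, Nat.add_sub_cancel, if_neg (Nat.succ_ne_zero k)]
          ring

lemma trace_mexp_eq_tsum (X : Mat) :
    Matrix.trace (mexp X) = ∑' k : ℕ, ((k.factorial : ℝ))⁻¹ * Matrix.trace (X^k) := by
  have hsum : Summable (fun k : ℕ => ((k.factorial : ℝ))⁻¹ • X^k) :=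
    NormedSpace.expSeries_summable' (𝕂 := ℝ) X
  rw [mexp, NormedSpace.exp_eq_tsum ℝ]
  calc Matrix.trace (∑' k : ℕ, ((k.factorial : ℝ))⁻¹ • X^k)
      = traceCLM n (∑' k : ℕ, ((k.factorial : ℝ))⁻¹ • X^k) := rfl
    _ = ∑' k : ℕ, traceCLM n (((k.factorial : ℝ))⁻¹ • X^k) := (traceCLM n).map_tsum hsum
    _ = ∑' k : ℕ, ((k.factorial : ℝ))⁻¹ * Matrix.trace (X^k) := by
        refine tsum_congr fun k => ?_
        rw [(traceCLM n).map_smul, smul_eq_mul, traceCLM_apply]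

noncomputable def trMulCLM (Δ : Mat) : Matrix (Fin n) (Fin n) ℝ →L[ℝ] ℝ :=
  LinearMap.toContinuousLinearMap
    { toFun := fun X => Matrix.trace (X * Δ)
      map_add' := fun X Y => by simp [Matrix.add_mul]
      map_smul' := fun c X => by simp [Matrix.smul_mul] }

@[simp] lemma trMulCLM_apply (Δ X : Mat) : trMulCLM Δ X = Matrix.trace (X * Δ) := rfl

lemma trace_mexp_mul_eq_tsum (M Δ : Mat) :
    Matrix.trace (mexp M * Δ) = ∑' k : ℕ, ((k.factorial : ℝ))⁻¹ * Matrix.trace (M^k * Δ) := by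
  have hsum : Summable (fun k : ℕ => ((k.factorial : ℝ))⁻¹ • M^k) :=
    NormedSpace.expSeries_summable' (𝕂 := ℝ) M
  rw [mexp, NormedSpace.exp_eq_tsum ℝ]
  calc Matrix.trace ((∑' k : ℕ, ((k.factorial : ℝ))⁻¹ • M^k) * Δ)
      = trMulCLM Δ (∑' k : ℕ, ((k.factorial : ℝ))⁻¹ • M^k) := rfl
    _ = ∑' k : ℕ, trMulCLM Δ (((k.factorial : ℝ))⁻¹ • M^k) := (trMulCLM Δ).map_tsum hsum
    _ = ∑' k : ℕ, ((k.factorial : ℝ))⁻¹ * Matrix.trace (M^k * Δ) := by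
        refine tsum_congr fun k => ?_
        rw [(trMulCLM Δ).map_smul, smul_eq_mul, trMulCLM_apply]

lemma hasDerivAt_trace_mexp_s10 (M Δ : Mat) :
    HasDerivAt (fun t : ℝ => Matrix.trace (mexp (M + t • Δ)))
      (Matrix.trace (mexp M * Δ)) 0 := by
  have hu := ubnd_summable M Δ
  have hsum0 : Summable fun k => Ftr M Δ k 0 := by
    have h1 : Summable (fun k : ℕ => ((k.factorial : ℝ))⁻¹ • M^k) :=
      NormedSpace.expSeries_summable' (𝕂 := ℝ) M
    have h2 := h1.map (traceCLM n).toLinearMap.toAddMonoidHom (traceCLM n).continuous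
    refine h2.congr fun k => ?_
    simp [Ftr, smul_eq_mul]
  have hder := hasDerivAt_tsum_of_isPreconnected hu Metric.isOpen_ball
    ((convex_ball (0:ℝ) 1).isPreconnected)
    (fun k y _ => hasDerivAt_Ftr M Δ k y)
    (fun k y hy => Ftr'_bound M Δ (le_of_lt (by simpa [Real.dist_eq] using hy)) k)
    (Metric.mem_ball_self one_pos) hsum0 (Metric.mem_ball_self one_pos)
  have hval : ∑' k, Ftr' M Δ k 0 = Matrix.trace (mexp M * Δ) := by
    have hs' : Summable fun k => Ftr' M Δ k 0 :=
      Summable.of_norm_bounded hu (fun k => Ftr'_bound M Δ (by norm_num) k)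
    rw [Summable.tsum_eq_zero_add hs']
    have h0 : Ftr' M Δ 0 0 = 0 := by simp [Ftr']
    have hterm : ∀ k : ℕ, Ftr' M Δ (k+1) 0
        = ((k.factorial : ℝ))⁻¹ * Matrix.trace (M^k * Δ) := by
      intro k
      simp only [Ftr', Nat.add_sub_cancel, zero_smul, add_zero]
      rw [Nat.factorial_succ]
      push_cast
      rw [mul_inv]
      have h1 : ((k:ℝ)+1) ≠ 0 := by positivity
      field_simp
    rw [h0, zero_add, tsum_congr hterm]
    exact (trace_mexp_mul_eq_tsum M Δ).symm
  have heq : ∀ t : ℝ, Matrix.trace (mexp (M + t • Δ)) = ∑' k, Ftr M Δ k t := by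
    intro t
    rw [trace_mexp_eq_tsum]
    rfl
  rw [← hval]
  exact hder.congr_of_eventuallyEq (Filter.Eventually.of_forall fun t => heq t)

lemma continuous_trace_mexp (S : Mat) :
    Continuous fun d : Fin n → ℝ => Matrix.trace (mexp (Matrix.diagonal d + S)) := by
  have h1 : Continuous fun d : Fin n → ℝ => Matrix.diagonal d + S :=
    (continuous_id.matrix_diagonal).add continuous_const
  have h2 : Continuous fun A : Mat => mexp A := by
    unfold mexp; exact NormedSpace.exp_continuous
  exact (h2.comp h1).matrix_trace

end Deriv2

end AH

namespace AH
variable {n : ℕ}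
local notation "Mat" => Matrix (Fin n) (Fin n) ℝ

lemma exp_ge_two_mul {x : ℝ} (hx : 0 ≤ x) : 2 * x ≤ Real.exp x := by
  have h := Real.add_one_le_exp (x/2)
  have hsq : Real.exp (x/2) * Real.exp (x/2) = Real.exp x := by
    rw [← Real.exp_add]; ring_nf
  have h2 : (x/2+1)*(x/2+1) ≤ Real.exp (x/2) * Real.exp (x/2) :=
    mul_le_mul h h (by linarith) (Real.exp_pos _).le
  nlinarith [h2, hsq, sq_nonneg (x/2 - 1)]

lemma exp_sub_ge (x : ℝ) : |x| ≤ Real.exp x - x := by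
  rcases le_or_gt 0 x with h | h
  · have := exp_ge_two_mul h
    rw [abs_of_nonneg h]
    linarith
  · rw [abs_of_neg h]
    nlinarith [Real.exp_pos x]

lemma one_le_exp_sub (x : ℝ) : 1 ≤ Real.exp x - x := by
  nlinarith [Real.add_one_le_exp x]

theorem exists_good_diag (S : Mat) (hS : IsHollow S) :
    ∃ d : Fin n → ℝ, IsCorr (mexp (Matrix.diagonal d + S)) := by
  classical
  obtain ⟨hSsym, hSdiag⟩ := hS
  set φ : (Fin n → ℝ) → ℝ :=
    fun d => Matrix.trace (mexp (Matrix.diagonal d + S)) - ∑ i, d i with hφ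
  have hsymm : ∀ d : Fin n → ℝ, (Matrix.diagonal d + S).IsSymm :=
    fun d => Matrix.IsSymm.add (Matrix.isDiag_diagonal d).isSymm hSsym
  have hdiagentry : ∀ (d : Fin n → ℝ) (i : Fin n), (Matrix.diagonal d + S) i i = d i := by
    intro d i
    rw [Matrix.add_apply, Matrix.diagonal_apply_eq, hSdiag i, add_zero]
  have hlower : ∀ d : Fin n → ℝ, ∑ i, (Real.exp (d i) - d i) ≤ φ d := by
    intro d
    have h2 : ∑ i, Real.exp (d i) ≤ ∑ i, (mexp (Matrix.diagonal d + S)) i i := by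
      refine Finset.sum_le_sum fun i _ => ?_
      have := exp_diag_le (hsymm d) i
      rwa [hdiagentry d i] at this
    have h3 : Matrix.trace (mexp (Matrix.diagonal d + S))
        = ∑ i, (mexp (Matrix.diagonal d + S)) i i := rfl
    rw [hφ, Finset.sum_sub_distrib]
    simp only []
    linarith
  have hcont : Continuous φ :=
    (continuous_trace_mexp S).sub (continuous_finset_sum _ fun i _ => continuous_apply i)
  set R : ℝ := max (φ 0) 0 + 1 with hR
  have hRpos : 0 < R := by
    have := le_max_right (φ 0) 0
    rw [hR]; linarith
  have hcomp : IsCompact (Metric.closedBall (0 : Fin n → ℝ) R) := isCompact_closedBall _ _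
  obtain ⟨dstar, hdmem, hdmin⟩ := hcomp.exists_isMinOn
    ⟨0, Metric.mem_closedBall_self hRpos.le⟩ hcont.continuousOn
  have hglobal : ∀ d, φ dstar ≤ φ d := by
    intro d
    by_cases hd : d ∈ Metric.closedBall (0 : Fin n → ℝ) R
    · exact hdmin hd
    · have hnorm : R < ‖d‖ := by
        rw [Metric.mem_closedBall, dist_zero_right] at hd
        exact lt_of_not_ge hd
      obtain ⟨i0, hi0⟩ : ∃ i, R < |d i| := by
        by_contra hcon
        push_neg at hcon
        have : ‖d‖ ≤ R := (pi_norm_le_iff_of_nonneg hRpos.le).mpr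
          (fun i => by rw [Real.norm_eq_abs]; exact hcon i)
        linarith
      have hterms : ∀ i ∈ (Finset.univ : Finset (Fin n)), (0:ℝ) ≤ Real.exp (d i) - d i :=
        fun i _ => by nlinarith [one_le_exp_sub (d i)]
      have h2 : Real.exp (d i0) - d i0 ≤ ∑ i, (Real.exp (d i) - d i) :=
        Finset.single_le_sum hterms (Finset.mem_univ i0)
      have h3 := exp_sub_ge (d i0)
      have h4 := hlower d
      have hφ0 : φ dstar ≤ φ 0 := hdmin (Metric.mem_closedBall_self hRpos.le)
      have h5 : φ 0 ≤ max (φ 0) 0 := le_max_left _ _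
      rw [hR] at hi0
      linarith
  have hcorr_diag : ∀ i, (mexp (Matrix.diagonal dstar + S)) i i = 1 := by
    intro i
    set e : Fin n → ℝ := Pi.single i (1:ℝ) with he
    set M : Mat := Matrix.diagonal dstar + S with hM
    set Δ : Mat := Matrix.diagonal e with hΔ
    have hstep : ∀ t : ℝ, Matrix.diagonal (dstar + t • e) + S = M + t • Δ := by
      intro t
      rw [hM, hΔ]
      ext a b
      by_cases hab : a = b
      · subst hab
        simp only [Matrix.add_apply, Matrix.diagonal_apply_eq, Matrix.smul_apply,
          Pi.add_apply, Pi.smul_apply, smul_eq_mul]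
        ring
      · simp only [Matrix.add_apply, Matrix.diagonal_apply_ne _ hab, Matrix.smul_apply,
          smul_eq_mul, mul_zero, zero_add, add_zero]
    have hsum : ∀ t : ℝ, ∑ j, (dstar + t • e) j = (∑ j, dstar j) + t := by
      intro t
      have hse : ∑ j, (t • e) j = t := by
        rw [he]
        simp [Pi.single_apply]
      simp only [Pi.add_apply]
      rw [Finset.sum_add_distrib, hse]
    have hψ : ∀ t : ℝ, φ (dstar + t • e)
        = Matrix.trace (mexp (M + t • Δ)) - ((∑ j, dstar j) + t) := by
      intro t
      rw [hφ]
      simp only []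
      rw [hstep, hsum]
    have hder : HasDerivAt (fun t : ℝ => φ (dstar + t • e))
        (Matrix.trace (mexp M * Δ) - 1) 0 := by
      have h1 := hasDerivAt_trace_mexp_s10 M Δ
      have h2 : HasDerivAt (fun t : ℝ => (∑ j, dstar j) + t) 1 0 := by
        simpa using (hasDerivAt_id (0:ℝ)).const_add (∑ j, dstar j)
      refine HasDerivAt.congr_of_eventuallyEq (h1.sub h2)
        (Filter.Eventually.of_forall fun t => ?_)
      exact hψ t
    have hmin : IsLocalMin (fun t : ℝ => φ (dstar + t • e)) 0 := by
      refine Filter.Eventually.of_forall fun t => ?_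
      simp only []
      have h0 : dstar + (0:ℝ) • e = dstar := by simp
      rw [h0]
      exact hglobal _
    have hzero := hmin.hasDerivAt_eq_zero hder
    have htr : Matrix.trace (mexp M * Δ) = (mexp M) i i := by
      rw [Matrix.trace_mul_comm, hΔ, trace_isDiag_mul (Matrix.isDiag_diagonal _)]
      rw [Finset.sum_eq_single i (fun j _ hji => by
        rw [Matrix.diagonal_apply_eq, he, Pi.single_eq_of_ne hji, zero_mul]) (by simp)]
      rw [Matrix.diagonal_apply_eq, he, Pi.single_eq_same, one_mul]
    rw [htr] at hzero
    rw [hM] at hzero ⊢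
    linarith
  exact ⟨dstar, mexp_posDef (hsymm dstar), hcorr_diag⟩

end AH

namespace AH
variable {n : ℕ}
local notation "Mat" => Matrix (Fin n) (Fin n) ℝ

lemma off_isHollow {L : Mat} (hL : L.IsSymm) : IsHollow (off L) := by
  constructor
  · ext i j
    have hsymm : L j i = L i j := by
      have := congrFun (congrFun hL i) j
      simpa [Matrix.transpose_apply] using this
    by_cases hij : i = j
    · subst hij; simp [off]
    · simp [off, Matrix.transpose_apply, hij, Ne.symm hij, hsymm]
  · intro i; simp [off]

lemma corr_unique_s10 {A B : Mat} (hA : A.IsSymm) (hB : B.IsSymm)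
    (hdiag : ∀ i j, i ≠ j → A i j = B i j)
    (hEA : ∀ i, (mexp A) i i = 1) (hEB : ∀ i, (mexp B) i i = 1) : A = B := by
  apply eq_of_trace_nonpos hA hB
  have hd : (A - B).IsDiag := fun i j hij => by
    show (A - B) i j = 0
    rw [Matrix.sub_apply, hdiag i j hij, sub_self]
  rw [trace_isDiag_mul hd]
  have hz : ∀ i : Fin n, (A - B) i i * (mexp A - mexp B) i i = 0 := fun i => by
    rw [Matrix.sub_apply (mexp A), hEA i, hEB i, sub_self, mul_zero]
  rw [Finset.sum_congr rfl fun i _ => hz i]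
  simp

end AH


/-- The off-log map `Log : Cor⁺(n) → Hol(n)`, `C ↦ Off(log C)`, is a bijection, whose
inverse sends `S` to `exp (D(S) + S)` where `D(S)` is the unique diagonal matrix making
`exp (D(S) + S)` a correlation matrix. -/
theorem stmt10 (n : ℕ) :
    Set.BijOn (fun C : Matrix (Fin n) (Fin n) ℝ => off (mlog C)) {C | IsCorr C} {S | IsHollow S} ∧
    (∀ S : Matrix (Fin n) (Fin n) ℝ, IsHollow S →
      ∀ D : Matrix (Fin n) (Fin n) ℝ, D.IsDiag → IsCorr (mexp (D + S)) →
        off (mlog (mexp (D + S))) = S) ∧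
    (∀ C : Matrix (Fin n) (Fin n) ℝ, IsCorr C →
      ∀ D : Matrix (Fin n) (Fin n) ℝ, D.IsDiag → IsCorr (mexp (D + off (mlog C))) →
        mexp (D + off (mlog C)) = C) := by
  classical
  have bullet2 : ∀ S : Matrix (Fin n) (Fin n) ℝ, IsHollow S →
      ∀ D : Matrix (Fin n) (Fin n) ℝ, D.IsDiag → IsCorr (mexp (D + S)) →
        off (mlog (mexp (D + S))) = S := by
    intro S hS D hD _
    have hsym : (D + S).IsSymm := hD.isSymm.add hS.1
    rw [AH.mlog_mexp hsym]
    ext i j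
    by_cases hij : i = j
    · subst hij; simp [off, hS.2 i]
    · simp [off, hij, Matrix.add_apply, hD hij]
  refine ⟨⟨?_, ?_, ?_⟩, bullet2, ?_⟩
  · -- MapsTo
    intro C hC
    obtain ⟨hL, _⟩ := AH.mlog_spec (n := n) hC.1
    exact AH.off_isHollow hL
  · -- InjOn
    intro C1 h1 C2 h2 heq
    obtain ⟨hL1, hE1⟩ := AH.mlog_spec (n := n) h1.1
    obtain ⟨hL2, hE2⟩ := AH.mlog_spec (n := n) h2.1
    have key : mlog C1 = mlog C2 := by
      refine AH.corr_unique_s10 hL1 hL2 (fun i j hij => ?_) (fun i => by rw [hE1]; exact h1.2 i)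
        (fun i => by rw [hE2]; exact h2.2 i)
      have := congrFun (congrFun heq i) j
      simpa [off, hij] using this
    rw [← hE1, key, hE2]
  · -- SurjOn
    intro S hS
    obtain ⟨d, hcorr⟩ := AH.exists_good_diag S hS
    have hsym : (Matrix.diagonal d + S).IsSymm := (Matrix.isDiag_diagonal d).isSymm.add hS.1
    refine ⟨mexp (Matrix.diagonal d + S), hcorr, ?_⟩
    show off (mlog (mexp (Matrix.diagonal d + S))) = S
    rw [AH.mlog_mexp hsym]
    ext i j
    by_cases hij : i = j
    · subst hij; simp [off, hS.2 i]
    · simp [off, hij, Matrix.add_apply, Matrix.diagonal_apply_ne _ hij]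
  · -- bullet 3
    intro C hC D hD hC2
    obtain ⟨hL, hE⟩ := AH.mlog_spec (n := n) hC.1
    have hoffsym : (off (mlog C)).IsSymm := (AH.off_isHollow hL).1
    have hsym1 : (D + off (mlog C)).IsSymm := hD.isSymm.add hoffsym
    have hkey : D + off (mlog C) = mlog C := by
      refine AH.corr_unique_s10 hsym1 hL (fun i j hij => ?_) (fun i => hC2.2 i)
        (fun i => by rw [hE]; exact hC.2 i)
      simp [off, hij, Matrix.add_apply, hD hij]
    rw [hkey, hE]
end

section
/- The scaling map of the log-scaling diffeomorphism is permutation-equivariant: if Δ = D*(Σ) is the unique positive diagonal matrix with log(ΔΣΔ) ∈ Row₀(n), then for any permutation matrix P, D*(PΣPᵀ) = PΔPᵀ, and hence Log*(PΣPᵀ) = P·Log*(Σ)·Pᵀ. -/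
open Matrix BigOperators

namespace Stmt12Aux

variable {n : ℕ}


lemma mexp_conj {U A : Matrix (Fin n) (Fin n) ℝ} (hU : U * star U = 1) :
    mexp (U * A * star U) = U * mexp A * star U := by
  have hUnit : IsUnit U := by
    apply Matrix.isUnit_iff_isUnit_det _ |>.2
    have := congrArg Matrix.det hU
    rw [Matrix.det_mul, Matrix.det_one] at this
    exact IsUnit.of_mul_eq_one _ this
  have hinv : U⁻¹ = star U := Matrix.inv_eq_right_inv hU
  rw [mexp, mexp, ← hinv, Matrix.exp_conj U A hUnit]

lemma mexp_diagonal (f : Fin n → ℝ) :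
    mexp (diagonal f) = diagonal (fun i => Real.exp (f i)) := by
  have h : NormedSpace.exp f = fun i => Real.exp (f i) :=
    funext fun i => by rw [Pi.coe_exp, Real.exp_eq_exp_ℝ]
  rw [mexp, Matrix.exp_diagonal, h]

lemma spectral {S : Matrix (Fin n) (Fin n) ℝ} (hS : S.IsHermitian) :
    S = (hS.eigenvectorUnitary : Matrix (Fin n) (Fin n) ℝ) * diagonal hS.eigenvalues *
      star (hS.eigenvectorUnitary : Matrix (Fin n) (Fin n) ℝ) := by
  have h : (RCLike.ofReal ∘ hS.eigenvalues : Fin n → ℝ) = hS.eigenvalues := by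
    funext i; simp [RCLike.ofReal_real_eq_id]
  conv_lhs => rw [hS.spectral_theorem]
  rw [h, Unitary.conjStarAlgAut_apply]

lemma mexp_spectral {S : Matrix (Fin n) (Fin n) ℝ} (hS : S.IsHermitian) :
    mexp S = (hS.eigenvectorUnitary : Matrix (Fin n) (Fin n) ℝ) *
      diagonal (fun i => Real.exp (hS.eigenvalues i)) *
      star (hS.eigenvectorUnitary : Matrix (Fin n) (Fin n) ℝ) := by
  have hU : (hS.eigenvectorUnitary : Matrix (Fin n) (Fin n) ℝ) *
      star (hS.eigenvectorUnitary : Matrix (Fin n) (Fin n) ℝ) = 1 :=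
    Matrix.mem_unitaryGroup_iff.mp hS.eigenvectorUnitary.2
  conv_lhs => rw [spectral hS]
  rw [mexp_conj hU, mexp_diagonal]



/-- If `S v = lam • v` for symmetric `S`, then `(exp S) v = (exp lam) • v`,
and conversely via `eig_of_exp_eig`. Common engine: -/
lemma diag_transfer {U D E : Matrix (Fin n) (Fin n) ℝ}
    (hU1 : U * star U = 1) (hU2 : star U * U = 1)
    {v : Fin n → ℝ} {c : ℝ} (h : (U * D * star U) *ᵥ v = c • v)
    (hDE : ∀ w : Fin n → ℝ, D *ᵥ w = c • w → E *ᵥ w = (fun d => d) c • w) : True := trivial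

lemma conj_mulVec_eigen {U D : Matrix (Fin n) (Fin n) ℝ}
    (hU2 : star U * U = 1)
    {v : Fin n → ℝ} {c : ℝ} (h : (U * D * star U) *ᵥ v = c • v) :
    D *ᵥ (star U *ᵥ v) = c • (star U *ᵥ v) := by
  have := congrArg (fun w => star U *ᵥ w) h
  simp only [mulVec_mulVec, mulVec_smul] at this ⊢
  rw [← Matrix.mul_assoc, ← Matrix.mul_assoc, hU2, Matrix.one_mul] at this
  exact this

lemma eigen_back {U D : Matrix (Fin n) (Fin n) ℝ}
    (hU1 : U * star U = 1)
    {v : Fin n → ℝ} {c : ℝ} (h : D *ᵥ (star U *ᵥ v) = c • (star U *ᵥ v)) :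
    (U * D * star U) *ᵥ v = c • v := by
  have := congrArg (fun w => U *ᵥ w) h
  simp only [mulVec_mulVec, mulVec_smul] at this
  rw [← Matrix.mul_assoc] at this
  have hv : (U * star U) *ᵥ v = v := by rw [hU1, Matrix.one_mulVec]
  calc (U * D * star U) *ᵥ v = c • ((U * star U) *ᵥ v) := by
        rw [← mulVec_mulVec, ← mulVec_mulVec, ← mulVec_mulVec] at this ⊢
        exact this
    _ = c • v := by rw [hv]

lemma diagonal_mulVec (f : Fin n → ℝ) (w : Fin n → ℝ) :
    diagonal f *ᵥ w = fun i => f i * w i := by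
  funext i; rw [mulVec_diagonal]

/-- eigen equation for exp from eigen equation for S -/
lemma mexp_eig {S : Matrix (Fin n) (Fin n) ℝ} (hS : S.IsHermitian)
    {v : Fin n → ℝ} {lam : ℝ} (h : S *ᵥ v = lam • v) :
    mexp S *ᵥ v = Real.exp lam • v := by
  have hU1 : (hS.eigenvectorUnitary : Matrix (Fin n) (Fin n) ℝ) *
      star (hS.eigenvectorUnitary : Matrix (Fin n) (Fin n) ℝ) = 1 :=
    Matrix.mem_unitaryGroup_iff.mp hS.eigenvectorUnitary.2
  have hU2 : star (hS.eigenvectorUnitary : Matrix (Fin n) (Fin n) ℝ) *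
      (hS.eigenvectorUnitary : Matrix (Fin n) (Fin n) ℝ) = 1 :=
    Matrix.mem_unitaryGroup_iff'.mp hS.eigenvectorUnitary.2
  set U : Matrix (Fin n) (Fin n) ℝ := (hS.eigenvectorUnitary : Matrix (Fin n) (Fin n) ℝ)
  rw [spectral hS] at h
  have hw := conj_mulVec_eigen hU2 h
  set w := star U *ᵥ v with hwdef
  -- componentwise
  have hcomp : ∀ i, hS.eigenvalues i * w i = lam * w i := by
    intro i
    have := congrFun hw i
    rwa [diagonal_mulVec] at this
  have hexpcomp : diagonal (fun i => Real.exp (hS.eigenvalues i)) *ᵥ w = Real.exp lam • w := by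
    funext i
    rw [diagonal_mulVec]
    show Real.exp (hS.eigenvalues i) * w i = Real.exp lam * w i
    rcases eq_or_ne (w i) 0 with h0 | h0
    · rw [h0, mul_zero, mul_zero]
    · have : hS.eigenvalues i = lam := by
        have := hcomp i
        exact mul_right_cancel₀ h0 this
      rw [this]
  rw [mexp_spectral hS]
  exact eigen_back hU1 hexpcomp

/-- eigen equation for S from eigen equation for exp S -/
lemma eig_of_mexp_eig {S : Matrix (Fin n) (Fin n) ℝ} (hS : S.IsHermitian)
    {v : Fin n → ℝ} {lam : ℝ} (h : mexp S *ᵥ v = Real.exp lam • v) :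
    S *ᵥ v = lam • v := by
  have hU1 : (hS.eigenvectorUnitary : Matrix (Fin n) (Fin n) ℝ) *
      star (hS.eigenvectorUnitary : Matrix (Fin n) (Fin n) ℝ) = 1 :=
    Matrix.mem_unitaryGroup_iff.mp hS.eigenvectorUnitary.2
  have hU2 : star (hS.eigenvectorUnitary : Matrix (Fin n) (Fin n) ℝ) *
      (hS.eigenvectorUnitary : Matrix (Fin n) (Fin n) ℝ) = 1 :=
    Matrix.mem_unitaryGroup_iff'.mp hS.eigenvectorUnitary.2
  set U : Matrix (Fin n) (Fin n) ℝ := (hS.eigenvectorUnitary : Matrix (Fin n) (Fin n) ℝ)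
  rw [mexp_spectral hS] at h
  have hw := conj_mulVec_eigen hU2 h
  set w := star U *ᵥ v with hwdef
  have hcomp : ∀ i, Real.exp (hS.eigenvalues i) * w i = Real.exp lam * w i := by
    intro i
    have := congrFun hw i
    rwa [diagonal_mulVec] at this
  have heig : diagonal hS.eigenvalues *ᵥ w = lam • w := by
    funext i
    rw [diagonal_mulVec]
    show hS.eigenvalues i * w i = lam * w i
    rcases eq_or_ne (w i) 0 with h0 | h0
    · rw [h0, mul_zero, mul_zero]
    · have : hS.eigenvalues i = lam := by
        have h2 := hcomp i
        have := mul_right_cancel₀ h0 h2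
        exact Real.exp_injective this
      rw [this]
  rw [spectral hS]
  exact eigen_back hU1 heig



lemma isHermitian_of_isSymm {S : Matrix (Fin n) (Fin n) ℝ} (h : S.IsSymm) : S.IsHermitian := by
  rwa [Matrix.IsHermitian, Matrix.conjTranspose_eq_transpose_of_trivial]

lemma isSymm_of_isHermitian {S : Matrix (Fin n) (Fin n) ℝ} (h : S.IsHermitian) : S.IsSymm := by
  rwa [Matrix.IsHermitian, Matrix.conjTranspose_eq_transpose_of_trivial] at h

lemma mexp_injective {S T : Matrix (Fin n) (Fin n) ℝ}
    (hS : S.IsHermitian) (hT : T.IsHermitian) (h : mexp S = mexp T) : S = T := by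
  have key : ∀ j, S *ᵥ ⇑(hT.eigenvectorBasis j) = T *ᵥ ⇑(hT.eigenvectorBasis j) := by
    intro j
    have h1 : T *ᵥ ⇑(hT.eigenvectorBasis j) = hT.eigenvalues j • ⇑(hT.eigenvectorBasis j) :=
      hT.mulVec_eigenvectorBasis j
    have h2 := mexp_eig hT h1
    rw [← h] at h2
    have h3 := eig_of_mexp_eig hS h2
    rw [h3, h1]
  apply Matrix.toEuclideanLin.injective
  apply Module.Basis.ext hT.eigenvectorBasis.toBasis
  intro j
  simp only [OrthonormalBasis.coe_toBasis]
  have : ((hT.eigenvectorBasis j : EuclideanSpace ℝ (Fin n)) : Fin n → ℝ) =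
      (WithLp.equiv 2 (Fin n → ℝ)) (hT.eigenvectorBasis j) := rfl
  rw [toEuclideanLin_apply, toEuclideanLin_apply]
  exact congrArg _ (key j)

lemma mlog_spec {A : Matrix (Fin n) (Fin n) ℝ}
    (h : ∃ S : Matrix (Fin n) (Fin n) ℝ, S.IsSymm ∧ mexp S = A) :
    (mlog A).IsSymm ∧ mexp (mlog A) = A := by
  rw [mlog, dif_pos h]
  exact h.choose_spec

lemma exists_log {A : Matrix (Fin n) (Fin n) ℝ} (hA : A.PosDef) :
    ∃ S : Matrix (Fin n) (Fin n) ℝ, S.IsSymm ∧ mexp S = A := by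
  have hH := hA.1
  set U : Matrix (Fin n) (Fin n) ℝ := (hH.eigenvectorUnitary : Matrix (Fin n) (Fin n) ℝ) with hUdef
  have hU1 : U * star U = 1 := Matrix.mem_unitaryGroup_iff.mp hH.eigenvectorUnitary.2
  refine ⟨U * diagonal (fun i => Real.log (hH.eigenvalues i)) * star U, ?_, ?_⟩
  · apply isSymm_of_isHermitian
    exact Matrix.isHermitian_mul_mul_conjTranspose U (Matrix.isHermitian_diagonal _)
  · rw [mexp_conj hU1, mexp_diagonal]
    have : (fun i => Real.exp (Real.log (hH.eigenvalues i))) = hH.eigenvalues := by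
      funext i
      exact Real.exp_log (hA.eigenvalues_pos i)
    rw [this, ← spectral hH]

lemma mlog_eq {A S : Matrix (Fin n) (Fin n) ℝ} (hS : S.IsSymm) (hE : mexp S = A) :
    mlog A = S := by
  have hex : ∃ S : Matrix (Fin n) (Fin n) ℝ, S.IsSymm ∧ mexp S = A := ⟨S, hS, hE⟩
  obtain ⟨h1, h2⟩ := mlog_spec hex
  exact mexp_injective (isHermitian_of_isSymm h1) (isHermitian_of_isSymm hS) (by rw [h2, hE])

lemma posdef_row0_iff {A : Matrix (Fin n) (Fin n) ℝ} (hA : A.PosDef) :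
    IsRow0 (mlog A) ↔ A *ᵥ (fun _ => 1) = (fun _ => 1) := by
  obtain ⟨hsymm, hexp⟩ := mlog_spec (exists_log hA)
  have hherm := isHermitian_of_isSymm hsymm
  constructor
  · rintro ⟨-, hsum⟩
    have h0 : mlog A *ᵥ (fun _ => (1:ℝ)) = (0:ℝ) • (fun _ => (1:ℝ)) := by
      funext i
      simp only [Pi.smul_apply, smul_eq_mul, zero_mul]
      show ∑ j, mlog A i j * 1 = 0
      simpa using hsum i
    have h1 := mexp_eig hherm h0
    rw [hexp, Real.exp_zero, one_smul] at h1
    exact h1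
  · intro h1
    have h2 : mexp (mlog A) *ᵥ (fun _ => (1:ℝ)) = Real.exp 0 • (fun _ => (1:ℝ)) := by
      rw [hexp, Real.exp_zero, one_smul, h1]
    have h3 := eig_of_mexp_eig hherm h2
    refine ⟨hsymm, fun i => ?_⟩
    have := congrFun h3 i
    simp only [Pi.smul_apply, smul_eq_mul, zero_mul, zero_smul] at this
    show ∑ j, mlog A i j = 0
    calc ∑ j, mlog A i j = ∑ j, mlog A i j * 1 := by simp
      _ = (mlog A *ᵥ fun _ => (1:ℝ)) i := rfl
      _ = 0 := by rw [h3]; simp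

lemma posdef_conj {A B : Matrix (Fin n) (Fin n) ℝ} (hA : A.PosDef) (hB : IsUnit B) :
    (B * A * Bᵀ).PosDef := by
  have hBt : Bᵀ = Bᴴ := (Matrix.conjTranspose_eq_transpose_of_trivial _).symm
  rw [hBt]
  refine Matrix.PosDef.of_dotProduct_mulVec_pos (Matrix.isHermitian_mul_mul_conjTranspose B hA.1) fun x hx => ?_
  have hBH : IsUnit Bᴴ := by
    rw [Matrix.isUnit_iff_isUnit_det] at hB ⊢
    rwa [Matrix.det_conjTranspose, star_trivial]
  have hinj : Function.Injective (Bᴴ.mulVec) := Matrix.mulVec_injective_iff_isUnit.mpr hBH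
  have hne : Bᴴ *ᵥ x ≠ 0 := by
    intro h0
    apply hx
    have : Bᴴ *ᵥ x = Bᴴ *ᵥ 0 := by rw [h0, Matrix.mulVec_zero]
    exact hinj this
  have hpos := hA.dotProduct_mulVec_pos hne
  have hrw : star x ⬝ᵥ ((B * A * Bᴴ) *ᵥ x) = star (Bᴴ *ᵥ x) ⬝ᵥ (A *ᵥ (Bᴴ *ᵥ x)) := by
    rw [star_trivial, star_trivial, ← Matrix.mulVec_mulVec, ← Matrix.mulVec_mulVec,
      Matrix.dotProduct_mulVec]
    congr 1
    rw [← Matrix.mulVec_transpose, hBt]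
  rw [hrw]
  exact hpos


lemma scale_unique {S : Matrix (Fin n) (Fin n) ℝ} (hS : S.PosDef) {d e : Fin n → ℝ}
    (hd : ∀ i, 0 < d i) (he : ∀ i, 0 < e i)
    (h1 : ∀ i, d i * (S *ᵥ d) i = 1) (h2 : ∀ i, e i * (S *ᵥ e) i = 1) : d = e := by
  by_contra hne
  have hu : d - e ≠ 0 := sub_ne_zero.mpr hne
  have hp := hS.dotProduct_mulVec_pos hu
  rw [star_trivial] at hp
  have hterm : ∀ i, (d i - e i) * ((S *ᵥ d) i - (S *ᵥ e) i) ≤ 0 := by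
    intro i
    have hdi := hd i
    have hei := he i
    have hSd : (S *ᵥ d) i = 1 / d i := by
      field_simp
      linarith [h1 i, mul_comm (d i) ((S *ᵥ d) i)]
    have hSe : (S *ᵥ e) i = 1 / e i := by
      field_simp
      linarith [h2 i, mul_comm (e i) ((S *ᵥ e) i)]
    rw [hSd, hSe, div_sub_div _ _ (ne_of_gt hdi) (ne_of_gt hei), one_mul, mul_one,
      mul_div_assoc']
    apply div_nonpos_of_nonpos_of_nonneg
    · nlinarith [sq_nonneg (d i - e i)]
    · positivity
  have hsum : (d - e) ⬝ᵥ (S *ᵥ (d - e)) ≤ 0 := by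
    rw [Matrix.mulVec_sub]
    have : (d - e) ⬝ᵥ (S *ᵥ d - S *ᵥ e) = ∑ i, (d i - e i) * ((S *ᵥ d) i - (S *ᵥ e) i) := by
      simp only [dotProduct, Pi.sub_apply]
    rw [this]
    exact Finset.sum_nonpos fun i _ => hterm i
  linarith

lemma perm_conj (σ : Equiv.Perm (Fin n)) (M : Matrix (Fin n) (Fin n) ℝ) :
    (σ.permMatrix ℝ) * M * (σ.permMatrix ℝ)ᵀ = M.submatrix σ σ := by
  have ht : (σ.permMatrix ℝ)ᵀ = (σ⁻¹).permMatrix ℝ := by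
    show (σ.toPEquiv.toMatrix : Matrix (Fin n) (Fin n) ℝ)ᵀ = (σ⁻¹).toPEquiv.toMatrix
    rw [← PEquiv.toMatrix_symm, ← Equiv.toPEquiv_symm]
    rfl
  rw [ht]
  show (σ.toPEquiv.toMatrix : Matrix (Fin n) (Fin n) ℝ) * M * (σ⁻¹).toPEquiv.toMatrix = _
  rw [PEquiv.toMatrix_toPEquiv_mul, PEquiv.mul_toMatrix_toPEquiv]
  rw [Matrix.submatrix_submatrix]
  ext i j
  show M (σ i) ((Equiv.symm σ⁻¹) j) = M (σ i) (σ j)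
  congr 1

lemma perm_transpose_mul (σ : Equiv.Perm (Fin n)) :
    (σ.permMatrix ℝ)ᵀ * (σ.permMatrix ℝ) = 1 := by
  ext i j
  simp only [Matrix.mul_apply, Matrix.transpose_apply, Equiv.Perm.permMatrix,
    PEquiv.toMatrix_apply, Equiv.toPEquiv_apply, Option.mem_def, Option.some.injEq]
  rw [Finset.sum_eq_single (σ.symm i)]
  · simp only [Equiv.apply_symm_apply, if_true]
    by_cases h : i = j
    · subst h; simp [Matrix.one_apply]
    · have : ¬ (σ (σ.symm i) = j) := by
        rw [Equiv.apply_symm_apply]; exact h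
      simp [Matrix.one_apply, h, this]
  · intro k _ hk
    have : ¬ (σ k = i) := fun h => hk (by rw [← h]; simp)
    simp [this]
  · intro h; exact absurd (Finset.mem_univ _) h

lemma perm_mul_transpose (σ : Equiv.Perm (Fin n)) :
    (σ.permMatrix ℝ) * (σ.permMatrix ℝ)ᵀ = 1 := by
  ext i j
  simp only [Matrix.mul_apply, Matrix.transpose_apply, Equiv.Perm.permMatrix,
    PEquiv.toMatrix_apply, Equiv.toPEquiv_apply, Option.mem_def, Option.some.injEq]
  rw [Finset.sum_eq_single (σ i)]
  · by_cases h : i = j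
    · subst h; simp [Matrix.one_apply]
    · have : ¬ (σ j = σ i) := fun hh => h (σ.injective hh).symm
      simp [Matrix.one_apply, h, this]
  · intro k _ hk
    simp [Ne.symm hk]
  · intro h; exact absurd (Finset.mem_univ _) h


lemma isUnit_diag {A : Matrix (Fin n) (Fin n) ℝ} (hA : A.IsDiag) (hp : ∀ i, 0 < A i i) :
    IsUnit A := by
  apply Matrix.isUnit_iff_isUnit_det _ |>.2
  rw [← hA.diagonal_diag, Matrix.det_diagonal]
  exact (Finset.prod_pos (fun i _ => hp i)).ne'.isUnit

lemma diag_scale_vec {A : Matrix (Fin n) (Fin n) ℝ} (hA : A.IsDiag)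
    (X : Matrix (Fin n) (Fin n) ℝ) :
    (A * X * A) *ᵥ (fun _ => (1:ℝ)) = fun i => A.diag i * (X *ᵥ A.diag) i := by
  conv_lhs => rw [← hA.diagonal_diag]
  rw [← Matrix.mulVec_mulVec, ← Matrix.mulVec_mulVec]
  have h1 : diagonal A.diag *ᵥ (fun _ => (1:ℝ)) = A.diag := by
    funext i
    rw [Matrix.mulVec_diagonal, mul_one]
  rw [h1]
  funext i
  rw [Matrix.mulVec_diagonal]

end Stmt12Aux

open Stmt12Aux

/-- The scaling map `D*` of the log-scaling diffeomorphism is permutation-equivariant: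
if `Δ = D*(Σ)`, then `D*(P Σ Pᵀ) = P Δ Pᵀ` (it is the unique positive diagonal scaler
of `P Σ Pᵀ`), and hence `Log*(P Σ Pᵀ) = P · Log*(Σ) · Pᵀ`. -/
theorem stmt12 (n : ℕ) (Sg : Matrix (Fin n) (Fin n) ℝ) (hSg : Sg.PosDef)
    (σ : Equiv.Perm (Fin n)) (Δ : Matrix (Fin n) (Fin n) ℝ)
    (hΔd : Δ.IsDiag) (hΔp : ∀ i, 0 < Δ i i)
    (hrow : IsRow0 (mlog (Δ * Sg * Δ))) :
    IsRow0 (mlog (((σ.permMatrix ℝ) * Δ * (σ.permMatrix ℝ)ᵀ) *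
        ((σ.permMatrix ℝ) * Sg * (σ.permMatrix ℝ)ᵀ) *
        ((σ.permMatrix ℝ) * Δ * (σ.permMatrix ℝ)ᵀ))) ∧
    (∀ Δ' : Matrix (Fin n) (Fin n) ℝ, Δ'.IsDiag → (∀ i, 0 < Δ' i i) →
      IsRow0 (mlog (Δ' * ((σ.permMatrix ℝ) * Sg * (σ.permMatrix ℝ)ᵀ) * Δ')) →
      Δ' = (σ.permMatrix ℝ) * Δ * (σ.permMatrix ℝ)ᵀ) ∧
    mlog (((σ.permMatrix ℝ) * Δ * (σ.permMatrix ℝ)ᵀ) *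
        ((σ.permMatrix ℝ) * Sg * (σ.permMatrix ℝ)ᵀ) *
        ((σ.permMatrix ℝ) * Δ * (σ.permMatrix ℝ)ᵀ)) =
      (σ.permMatrix ℝ) * mlog (Δ * Sg * Δ) * (σ.permMatrix ℝ)ᵀ := by
  classical
  set P : Matrix (Fin n) (Fin n) ℝ := σ.permMatrix ℝ with hPdef
  have hPPt : P * Pᵀ = 1 := perm_mul_transpose σ
  have hPtP : Pᵀ * P = 1 := perm_transpose_mul σ
  have hPunit : IsUnit P := by
    apply Matrix.isUnit_iff_isUnit_det _ |>.2
    have := congrArg Matrix.det hPPt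
    rw [Matrix.det_mul, Matrix.det_one] at this
    exact IsUnit.of_mul_eq_one _ this
  have hΔsymm : Δᵀ = Δ := hΔd.isSymm
  have hΔunit : IsUnit Δ := isUnit_diag hΔd hΔp
  have hM : (Δ * Sg * Δ).PosDef := by
    have := posdef_conj hSg hΔunit
    rwa [hΔsymm] at this
  have hMvec : (Δ * Sg * Δ) *ᵥ (fun _ => (1:ℝ)) = fun _ => (1:ℝ) :=
    (posdef_row0_iff hM).1 hrow
  have h2 : ∀ A B : Matrix (Fin n) (Fin n) ℝ,
      (P * A * Pᵀ) * (P * B * Pᵀ) = P * (A * B) * Pᵀ := by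
    intro A B
    have h3 : (P * A * Pᵀ) * (P * B * Pᵀ) = P * A * ((Pᵀ * P) * (B * Pᵀ)) := by
      simp only [Matrix.mul_assoc]
    rw [h3, hPtP, Matrix.one_mul]
    simp only [Matrix.mul_assoc]
  have hprod : (P * Δ * Pᵀ) * (P * Sg * Pᵀ) * (P * Δ * Pᵀ) = P * (Δ * Sg * Δ) * Pᵀ := by
    rw [h2 Δ Sg, h2 (Δ * Sg) Δ]
  have hPM : (P * (Δ * Sg * Δ) * Pᵀ).PosDef := posdef_conj hM hPunit
  have hPMvec : (P * (Δ * Sg * Δ) * Pᵀ) *ᵥ (fun _ => (1:ℝ)) = fun _ => (1:ℝ) := by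
    rw [perm_conj, Matrix.submatrix_mulVec_equiv]
    funext i
    show ((Δ * Sg * Δ) *ᵥ ((fun _ => (1:ℝ)) ∘ ⇑σ.symm)) (σ i) = 1
    have hcomp : ((fun _ => (1:ℝ)) ∘ ⇑σ.symm) = fun _ => (1:ℝ) := rfl
    rw [hcomp, hMvec]
  have hstP : star P = Pᵀ := by
    rw [Matrix.star_eq_conjTranspose, Matrix.conjTranspose_eq_transpose_of_trivial]
  refine ⟨?_, ?_, ?_⟩
  · rw [hprod]
    exact (posdef_row0_iff hPM).2 hPMvec
  · intro Δ' h'd h'p h'r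
    have hSg' : (P * Sg * Pᵀ).PosDef := posdef_conj hSg hPunit
    have hΔ'symm : Δ'ᵀ = Δ' := h'd.isSymm
    have hΔ'unit : IsUnit Δ' := isUnit_diag h'd h'p
    have hM' : (Δ' * (P * Sg * Pᵀ) * Δ').PosDef := by
      have := posdef_conj hSg' hΔ'unit
      rwa [hΔ'symm] at this
    have hvec' : (Δ' * (P * Sg * Pᵀ) * Δ') *ᵥ (fun _ => (1:ℝ)) = fun _ => (1:ℝ) :=
      (posdef_row0_iff hM').1 h'r
    rw [diag_scale_vec h'd] at hvec'
    have h1' : ∀ i, Δ'.diag i * ((P * Sg * Pᵀ) *ᵥ Δ'.diag) i = 1 := by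
      intro i
      have := congrFun hvec' i
      simpa [Matrix.diag] using this
    set Q : Matrix (Fin n) (Fin n) ℝ := P * Δ * Pᵀ with hQdef
    have hQsub : Q = Δ.submatrix σ σ := perm_conj σ Δ
    have hQd : Q.IsDiag := by
      intro i j hij
      rw [hQsub]
      exact hΔd (fun h => hij (σ.injective h))
    have hQp : ∀ i, 0 < Q i i := by
      intro i
      rw [hQsub]
      exact hΔp (σ i)
    have hQvec : (Q * (P * Sg * Pᵀ) * Q) *ᵥ (fun _ => (1:ℝ)) = fun _ => (1:ℝ) := by
      rw [hQdef, hprod]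
      exact hPMvec
    rw [diag_scale_vec hQd] at hQvec
    have h2' : ∀ i, Q.diag i * ((P * Sg * Pᵀ) *ᵥ Q.diag) i = 1 := by
      intro i
      have := congrFun hQvec i
      simpa [Matrix.diag] using this
    have hdiag : Δ'.diag = Q.diag :=
      scale_unique hSg' (fun i => h'p i) (fun i => hQp i) h1' h2'
    rw [← h'd.diagonal_diag, ← hQd.diagonal_diag, hdiag]
  · rw [hprod]
    obtain ⟨hls, hle⟩ := mlog_spec (exists_log hM)
    apply mlog_eq
    · show (P * mlog (Δ * Sg * Δ) * Pᵀ)ᵀ = P * mlog (Δ * Sg * Δ) * Pᵀ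
      rw [Matrix.transpose_mul, Matrix.transpose_mul, Matrix.transpose_transpose,
        hls.eq]
      simp only [Matrix.mul_assoc]
    · have hPPtStar : P * star P = 1 := by rw [hstP]; exact hPPt
      rw [← hstP, mexp_conj hPPtStar, hle, hstP]
end
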